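/- arXiv:2412.00585 — 12 statements merged into one kernel-verified Lean document; each statement's English description precedes it below -/
import Mathlib

section
/- Let f, h : ℝⁿ → ℝ ∪ {+∞} be proper lower semicontinuous convex with dom h ⊆ dom f, let f′ be a subgradient selection (f′(x) ∈ ∂f(x) for x ∈ dom h) with ‖f′(x)‖ ≤ M for all x ∈ dom h and some M > 0. Let x₀ ∈ dom h, λ > 0, τ_j = j/(j+2), h^λ(u) = h(u) + ‖u − x₀‖²/(2λ), φ^λ = f + h^λ. Suppose sequences of proper lower semicontinuous convex functions (Γ_j), (Γ̄_j) and points (x_j), (x̃_j) in dom h satisfy for every j ≥ 1: Γ_j ≤ f and Γ̄_j ≤ f; x_j minimizes Γ_j + h^λ and also minimizes Γ̄_j + h^λ, with Γ̄_j(x_j) = Γ_j(x_j); Γ_{j+1} ≥ τ_j Γ̄_j + (1 − τ_j) ℓ_f(·; x_j); x̃₁ = x₁ and φ^λ(x̃_{j+1}) ≤ τ_j φ^λ(x̃_j) + (1 − τ_j) φ^λ(x_{j+1}). Let m_j = min_u (Γ_j(u) + h^λ(u)) and t_j = φ^λ(x̃_j) − m_j. Then for every j ≥ 1, t_j ≤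 2t₁/(j(j+1)) + 16λM²/(j+1). -/
open RealInnerProductSpace

theorem rate_aux (t : ℕ → ℝ) (c : ℝ) (hc : 0 ≤ c)
    (hrec : ∀ j : ℕ, 1 ≤ j →
      t (j + 1) ≤ ((j : ℝ) / (j + 2)) * t j + 8 * c / ((j : ℝ) * ((j : ℝ) + 2))) :
    ∀ j : ℕ, 1 ≤ j → t j ≤ 2 * t 1 / ((j : ℝ) * ((j : ℝ) + 1)) + 16 * c / ((j : ℝ) + 1) := by
  have key : ∀ j : ℕ, 1 ≤ j →
      ((j : ℝ) * ((j : ℝ) + 1) / 2) * t j ≤ t 1 + 8 * c * ((j : ℝ) - 1) := by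
    intro j hj
    induction j with
    | zero => omega
    | succ k ih =>
      rcases Nat.lt_or_ge k 1 with hk | hk
      · interval_cases k
        norm_num
      · have hk1 : (1 : ℝ) ≤ (k : ℝ) := by exact_mod_cast hk
        have hkpos : (0 : ℝ) < (k : ℝ) := by linarith
        have e1 := mul_le_mul_of_nonneg_left (hrec k hk)
          (by positivity : (0 : ℝ) ≤ ((k : ℝ) + 1) * ((k : ℝ) + 2) / 2)
        have e2 : ((k : ℝ) + 1) * ((k : ℝ) + 2) / 2 * (((k : ℝ) / ((k : ℝ) + 2)) * t k)
            = (k : ℝ) * ((k : ℝ) + 1) / 2 * t k := by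
          field_simp
        have e3 : ((k : ℝ) + 1) * ((k : ℝ) + 2) / 2 * (8 * c / ((k : ℝ) * ((k : ℝ) + 2)))
            = 4 * c * ((k : ℝ) + 1) / (k : ℝ) := by
          field_simp; ring
        have e4 : 4 * c * ((k : ℝ) + 1) / (k : ℝ) ≤ 8 * c := by
          rw [div_le_iff₀ hkpos]; nlinarith
        have ihk := ih hk
        push_cast
        push_cast at e1
        nlinarith [e1, e2, e3, e4, ihk]
  intro j hj
  have hj1 : (1 : ℝ) ≤ (j : ℝ) := by exact_mod_cast hj
  have hjpos : (0 : ℝ) < (j : ℝ) := by linarith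
  have hA : (0 : ℝ) < (j : ℝ) * ((j : ℝ) + 1) / 2 := by positivity
  have h2 : t j ≤ (t 1 + 8 * c * ((j : ℝ) - 1)) / ((j : ℝ) * ((j : ℝ) + 1) / 2) := by
    rw [le_div_iff₀ hA]; nlinarith [key j hj]
  have h3 : (t 1 + 8 * c * ((j : ℝ) - 1)) / ((j : ℝ) * ((j : ℝ) + 1) / 2)
      = 2 * t 1 / ((j : ℝ) * ((j : ℝ) + 1)) + 16 * c * ((j : ℝ) - 1) / ((j : ℝ) * ((j : ℝ) + 1)) := by
    field_simp; ring
  have h4 : 16 * c * ((j : ℝ) - 1) / ((j : ℝ) * ((j : ℝ) + 1)) ≤ 16 * c / ((j : ℝ) + 1) := by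
    rw [div_le_div_iff₀ (by positivity) (by positivity)]
    nlinarith
  linarith

theorem strong_min {n : ℕ} (G h : EuclideanSpace ℝ (Fin n) → ℝ)
    (domh : Set (EuclideanSpace ℝ (Fin n)))
    (hGconv : ConvexOn ℝ Set.univ G) (hhconv : ConvexOn ℝ domh h)
    (x₀ w : EuclideanSpace ℝ (Fin n)) (lam : ℝ) (hw : w ∈ domh)
    (hmin : ∀ u ∈ domh, G w + (h w + ‖w - x₀‖ ^ 2 / (2 * lam))
      ≤ G u + (h u + ‖u - x₀‖ ^ 2 / (2 * lam))) :
    ∀ u ∈ domh, G w + (h w + ‖w - x₀‖ ^ 2 / (2 * lam)) + ‖u - w‖ ^ 2 / (2 * lam)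
      ≤ G u + (h u + ‖u - x₀‖ ^ 2 / (2 * lam)) := by
  intro u hu
  have key : ∀ k : ℕ, (1 - ((k : ℝ) + 2)⁻¹) * (‖u - w‖ ^ 2 / (2 * lam))
      ≤ (G u + (h u + ‖u - x₀‖ ^ 2 / (2 * lam)))
        - (G w + (h w + ‖w - x₀‖ ^ 2 / (2 * lam))) := by
    intro k
    set t : ℝ := ((k : ℝ) + 2)⁻¹ with htdef
    have ht0 : 0 < t := by positivity
    have ht1 : t ≤ 1 / 2 := by
      rw [htdef]
      rw [show (1 : ℝ) / 2 = (2 : ℝ)⁻¹ by norm_num]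
      apply inv_anti₀ (by norm_num)
      have : (0 : ℝ) ≤ (k : ℝ) := Nat.cast_nonneg k
      linarith
    have ht1' : t < 1 := lt_of_le_of_lt ht1 (by norm_num)
    set z := w + t • (u - w) with hzdef
    have hz : z = (1 - t) • w + t • u := by
      rw [hzdef, sub_smul, one_smul, smul_sub]; abel
    have hzmem : z ∈ domh := by
      rw [hz]; exact hhconv.1 hw hu (by linarith) ht0.le (by ring)
    have hGz : G z ≤ (1 - t) * G w + t * G u := by
      rw [hz]; exact hGconv.2 (Set.mem_univ w) (Set.mem_univ u) (by linarith) ht0.le (by ring)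
    have hhz : h z ≤ (1 - t) * h w + t * h u := by
      rw [hz]; exact hhconv.2 hw hu (by linarith) ht0.le (by ring)
    have hqz : ‖z - x₀‖ ^ 2 = (1 - t) * ‖w - x₀‖ ^ 2 + t * ‖u - x₀‖ ^ 2
        - t * (1 - t) * ‖u - w‖ ^ 2 := by
      have h1 : z - x₀ = (w - x₀) + t • (u - w) := by rw [hzdef]; abel
      have h2 : u - x₀ = (w - x₀) + (u - w) := by abel
      rw [h1, h2, norm_add_sq_real, norm_add_sq_real, real_inner_smul_right, norm_smul,
        Real.norm_eq_abs, abs_of_pos ht0]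
      ring
    have hqz2 : ‖z - x₀‖ ^ 2 / (2 * lam) = (1 - t) * (‖w - x₀‖ ^ 2 / (2 * lam))
        + t * (‖u - x₀‖ ^ 2 / (2 * lam)) - t * (1 - t) * (‖u - w‖ ^ 2 / (2 * lam)) := by
      rw [hqz]; ring
    have hmz := hmin z hzmem
    have hsum : 0 ≤ t * ((G u + (h u + ‖u - x₀‖ ^ 2 / (2 * lam)))
        - (G w + (h w + ‖w - x₀‖ ^ 2 / (2 * lam))) - (1 - t) * (‖u - w‖ ^ 2 / (2 * lam))) := by
      nlinarith [hGz, hhz, hqz2, hmz]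
    nlinarith [hsum, ht0]
  have htend : Filter.Tendsto
      (fun k : ℕ => (1 - ((k : ℝ) + 2)⁻¹) * (‖u - w‖ ^ 2 / (2 * lam)))
      Filter.atTop (nhds ((1 - 0) * (‖u - w‖ ^ 2 / (2 * lam)))) := by
    apply Filter.Tendsto.mul_const
    apply Filter.Tendsto.const_sub
    exact Filter.Tendsto.inv_tendsto_atTop
      (Filter.tendsto_atTop_add_const_right _ 2 tendsto_natCast_atTop_atTop)
  have := le_of_tendsto' htend key
  nlinarith [this]

/-- convergence rate `t_j ≤ 2 t₁/(j(j+1)) + 16 λ M²/(j+1)` for one cycle of the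
primal-dual cutting-plane scheme with generic bundle management and `τ_j = j/(j+2)`. -/
theorem stmt1 {n : ℕ} (f h : EuclideanSpace ℝ (Fin n) → ℝ)
    (domf domh : Set (EuclideanSpace ℝ (Fin n)))
    (hdomh : domh.Nonempty) (hdom : domh ⊆ domf)
    (hfconv : ConvexOn ℝ domf f) (hflsc : LowerSemicontinuousOn f domf)
    (hhconv : ConvexOn ℝ domh h) (hhlsc : LowerSemicontinuousOn h domh)
    (f' : EuclideanSpace ℝ (Fin n) → EuclideanSpace ℝ (Fin n)) (M : ℝ) (hM : 0 < M)
    (hsubgrad : ∀ x ∈ domh, ∀ y ∈ domf, f y ≥ f x + ⟪f' x, y - x⟫)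
    (hMbound : ∀ x ∈ domh, ‖f' x‖ ≤ M)
    (x₀ : EuclideanSpace ℝ (Fin n)) (hx₀ : x₀ ∈ domh)
    (lam : ℝ) (hlam : 0 < lam)
    (Γ Γb : ℕ → EuclideanSpace ℝ (Fin n) → ℝ)
    (x xt : ℕ → EuclideanSpace ℝ (Fin n))
    -- each model is convex and underestimates f
    (hΓconv : ∀ j, 1 ≤ j → ConvexOn ℝ Set.univ (Γ j))
    (hΓbconv : ∀ j, 1 ≤ j → ConvexOn ℝ Set.univ (Γb j))
    (hΓlef : ∀ j, 1 ≤ j → ∀ u ∈ domf, Γ j u ≤ f u)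
    (hΓblef : ∀ j, 1 ≤ j → ∀ u ∈ domf, Γb j u ≤ f u)
    -- x_j minimizes Γ_j + h^λ and Γ̄_j + h^λ, with matching values at x_j
    (hxmem : ∀ j, 1 ≤ j → x j ∈ domh)
    (hxmin : ∀ j, 1 ≤ j → ∀ u ∈ domh,
      Γ j (x j) + (h (x j) + ‖x j - x₀‖ ^ 2 / (2 * lam))
        ≤ Γ j u + (h u + ‖u - x₀‖ ^ 2 / (2 * lam)))
    (hxminb : ∀ j, 1 ≤ j → ∀ u ∈ domh,
      Γb j (x j) + (h (x j) + ‖x j - x₀‖ ^ 2 / (2 * lam))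
        ≤ Γb j u + (h u + ‖u - x₀‖ ^ 2 / (2 * lam)))
    (hΓbeq : ∀ j, 1 ≤ j → Γb j (x j) = Γ j (x j))
    -- bundle update: Γ_{j+1} ≥ τ_j Γ̄_j + (1 - τ_j) ℓ_f(·; x_j) with τ_j = j/(j+2)
    (hupdate : ∀ j, 1 ≤ j → ∀ u,
      Γ (j + 1) u ≥ ((j : ℝ) / (j + 2)) * Γb j u
        + (1 - (j : ℝ) / (j + 2)) * (f (x j) + ⟪f' (x j), u - x j⟫))
    -- auxiliary sequence x̃
    (hxtmem : ∀ j, 1 ≤ j → xt j ∈ domh)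
    (hxt1 : xt 1 = x 1)
    (hxtrec : ∀ j, 1 ≤ j →
      f (xt (j + 1)) + (h (xt (j + 1)) + ‖xt (j + 1) - x₀‖ ^ 2 / (2 * lam))
        ≤ ((j : ℝ) / (j + 2)) * (f (xt j) + (h (xt j) + ‖xt j - x₀‖ ^ 2 / (2 * lam)))
          + (1 - (j : ℝ) / (j + 2))
            * (f (x (j + 1)) + (h (x (j + 1)) + ‖x (j + 1) - x₀‖ ^ 2 / (2 * lam)))) :
    -- conclusion: t_j ≤ 2 t₁ / (j(j+1)) + 16 λ M² / (j+1), where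
    -- t_j = φ^λ(x̃_j) - m_j and m_j = Γ_j(x_j) + h^λ(x_j)
    ∀ j : ℕ, 1 ≤ j →
      (f (xt j) + (h (xt j) + ‖xt j - x₀‖ ^ 2 / (2 * lam)))
          - (Γ j (x j) + (h (x j) + ‖x j - x₀‖ ^ 2 / (2 * lam)))
        ≤ 2 * ((f (xt 1) + (h (xt 1) + ‖xt 1 - x₀‖ ^ 2 / (2 * lam)))
              - (Γ 1 (x 1) + (h (x 1) + ‖x 1 - x₀‖ ^ 2 / (2 * lam))))
            / ((j : ℝ) * ((j : ℝ) + 1))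
          + 16 * lam * M ^ 2 / ((j : ℝ) + 1) := by
  have hrec : ∀ j : ℕ, 1 ≤ j →
      (f (xt (j + 1)) + (h (xt (j + 1)) + ‖xt (j + 1) - x₀‖ ^ 2 / (2 * lam)))
          - (Γ (j + 1) (x (j + 1)) + (h (x (j + 1)) + ‖x (j + 1) - x₀‖ ^ 2 / (2 * lam)))
        ≤ ((j : ℝ) / (j + 2)) *
            ((f (xt j) + (h (xt j) + ‖xt j - x₀‖ ^ 2 / (2 * lam)))
              - (Γ j (x j) + (h (x j) + ‖x j - x₀‖ ^ 2 / (2 * lam))))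
          + 8 * (lam * M ^ 2) / ((j : ℝ) * ((j : ℝ) + 2)) := by
    intro j hj
    have hjsucc : 1 ≤ j + 1 := by omega
    have hjR : (1 : ℝ) ≤ (j : ℝ) := by exact_mod_cast hj
    have hj2 : (0 : ℝ) < (j : ℝ) + 2 := by linarith
    have hτ0 : (0 : ℝ) ≤ (j : ℝ) / ((j : ℝ) + 2) := by positivity
    have hτ1 : (j : ℝ) / ((j : ℝ) + 2) ≤ 1 := by
      rw [div_le_one hj2]; linarith
    have hsc := strong_min (Γb j) h domh (hΓbconv j hj) hhconv x₀ (x j) lam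
      (hxmem j hj) (hxminb j hj) (x (j + 1)) (hxmem (j + 1) hjsucc)
    rw [hΓbeq j hj] at hsc
    have hup := hupdate j hj (x (j + 1))
    have hxr := hxtrec j hj
    have hsub1 := hsubgrad (x (j + 1)) (hxmem (j + 1) hjsucc) (x j) (hdom (hxmem j hj))
    have cs1 : |⟪f' (x (j + 1)), x j - x (j + 1)⟫| ≤ M * ‖x (j + 1) - x j‖ := by
      refine le_trans (abs_real_inner_le_norm _ _) ?_
      rw [norm_sub_rev]
      exact mul_le_mul_of_nonneg_right (hMbound _ (hxmem (j + 1) hjsucc)) (norm_nonneg _)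
    have cs2 : |⟪f' (x j), x (j + 1) - x j⟫| ≤ M * ‖x (j + 1) - x j‖ := by
      refine le_trans (abs_real_inner_le_norm _ _) ?_
      exact mul_le_mul_of_nonneg_right (hMbound _ (hxmem j hj)) (norm_nonneg _)
    have hlip : f (x (j + 1)) - 2 * M * ‖x (j + 1) - x j‖
        ≤ f (x j) + ⟪f' (x j), x (j + 1) - x j⟫ := by
      have a1 := neg_abs_le ⟪f' (x (j + 1)), x j - x (j + 1)⟫
      have a2 := neg_abs_le ⟪f' (x j), x (j + 1) - x j⟫
      linarith [hsub1]
    have hquad : (1 - (j : ℝ) / ((j : ℝ) + 2)) * (2 * M * ‖x (j + 1) - x j‖)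
        - ((j : ℝ) / ((j : ℝ) + 2)) * (‖x (j + 1) - x j‖ ^ 2 / (2 * lam))
        ≤ 8 * (lam * M ^ 2) / ((j : ℝ) * ((j : ℝ) + 2)) := by
      have hexp : 8 * (lam * M ^ 2) / ((j : ℝ) * ((j : ℝ) + 2))
          - ((1 - (j : ℝ) / ((j : ℝ) + 2)) * (2 * M * ‖x (j + 1) - x j‖)
            - ((j : ℝ) / ((j : ℝ) + 2)) * (‖x (j + 1) - x j‖ ^ 2 / (2 * lam)))
          = ((j : ℝ) * ‖x (j + 1) - x j‖ - 4 * lam * M) ^ 2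
            / (2 * lam * (j : ℝ) * ((j : ℝ) + 2)) := by
        field_simp
        ring
      nlinarith [hexp, div_nonneg (sq_nonneg ((j : ℝ) * ‖x (j + 1) - x j‖ - 4 * lam * M))
        (by positivity : (0 : ℝ) ≤ 2 * lam * (j : ℝ) * ((j : ℝ) + 2))]
    have e3 := mul_le_mul_of_nonneg_left hsc hτ0
    have e4 := mul_le_mul_of_nonneg_left hlip
      (by linarith : (0 : ℝ) ≤ 1 - (j : ℝ) / ((j : ℝ) + 2))
    linarith [hup, hxr, e3, e4, hquad]
  intro j hj
  have H := rate_aux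
    (fun j => (f (xt j) + (h (xt j) + ‖xt j - x₀‖ ^ 2 / (2 * lam)))
      - (Γ j (x j) + (h (x j) + ‖x j - x₀‖ ^ 2 / (2 * lam))))
    (lam * M ^ 2) (by positivity) hrec j hj
  refine le_trans H (le_of_eq ?_)
  ring
end

section
/- Let f, h : ℝⁿ → ℝ ∪ {+∞} be proper lower semicontinuous convex with dom h ⊆ dom f, let λ > 0, ε̄ > 0, d₀ > 0, x̂₀ ∈ dom h, and set Q = {x : ‖x − x̂₀‖ ≤ 6d₀} and ĥ = h + I_Q (I_Q the indicator of Q). Suppose sequences (x̂_k)_{k≥0} with the given x̂₀, (x̃_k), (s_k), and proper lower semicontinuous convex (Γ_k) satisfy for every k ≥ 1: Γ_k ≤ f; x̂_k minimizes u ↦ Γ_k(u) + h(u) + ‖u − x̂_{k−1}‖²/(2λ); s_k ∈ ∂Γ_k(x̂_k) and g_k := −s_k + (x̂_{k−1} − x̂_k)/λ ∈ ∂h(x̂_k); and f(x̃_k) + h(x̃_k) + ‖x̃_k − x̂_{k−1}‖²/(2λ) ≤ ε̄ + Γ_k(x̂_k) + h(x̂_k) + ‖x̂_k − x̂_{k−1}‖²/(2λ).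 Let x̄_k = (1/k)∑_{i=1}^k x̃_i and s̄_k = (1/k)∑_{i=1}^k s_i. Then for every k ≥ 1, f(x̄_k) + h(x̄_k) + f*(s̄_k) + ĥ*(−s̄_k) ≤ ε̄ + 18d₀²/(λk). -/
open RealInnerProductSpace

set_option maxHeartbeats 1000000

lemma pdpb_three_point {n : ℕ} (a b c : EuclideanSpace ℝ (Fin n)) :
    ⟪a - b, c - b⟫ = (‖c - b‖ ^ 2 + ‖b - a‖ ^ 2 - ‖c - a‖ ^ 2) / 2 := by
  have h1 : ‖(c - b) - (a - b)‖ ^ 2 = ‖c - b‖ ^ 2 - 2 * ⟪c - b, a - b⟫ + ‖a - b‖ ^ 2 :=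
    norm_sub_sq_real _ _
  have h2 : (c - b) - (a - b) = c - a := by abel
  have h3 : ⟪c - b, a - b⟫ = ⟪a - b, c - b⟫ := real_inner_comm _ _
  have h4 : ‖b - a‖ = ‖a - b‖ := norm_sub_rev _ _
  rw [h2, h3] at h1
  rw [h4]
  linarith

lemma pdpb_tele (g : ℕ → ℝ) : ∀ k : ℕ,
    ∑ i ∈ Finset.Icc 1 k, (g i - g (i - 1)) = g k - g 0 := by
  intro k
  induction k with
  | zero => simp
  | succ m ih =>
    rw [Finset.sum_Icc_succ_top (Nat.succ_le_succ (Nat.zero_le m)), ih, Nat.succ_sub_one]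
    ring

lemma pdpb_div (kR lam A Bc P Qv E D : ℝ) (hk : 0 < kR) (hlam : 0 < lam)
    (hstep : kR * A + P - Qv ≤ kR * Bc + kR * E + D / lam) :
    kR⁻¹ * P - kR⁻¹ * Qv ≤ E + D / (lam * kR) - A + Bc := by
  have key_eq : (E + D / (lam * kR) - A + Bc) - (kR⁻¹ * P - kR⁻¹ * Qv)
      = ((kR * Bc + kR * E + D / lam) - (kR * A + P - Qv)) / kR := by
    field_simp
    ring
  have hnum : (0 : ℝ) ≤ ((kR * Bc + kR * E + D / lam) - (kR * A + P - Qv)) / kR :=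
    div_nonneg (by linarith) hk.le
  linarith [key_eq ▸ hnum]

/-- Fenchel conjugate of a function `g` with effective domain `dom`:
`g*(s) = sup_{u ∈ dom} (⟨s, u⟩ - g u)`, valued in the extended reals. -/
noncomputable def fconj {n : ℕ} (dom : Set (EuclideanSpace ℝ (Fin n)))
    (g : EuclideanSpace ℝ (Fin n) → ℝ) (s : EuclideanSpace ℝ (Fin n)) : EReal :=
  ⨆ u ∈ dom, ((⟪s, u⟫ - g u : ℝ) : EReal)

/-- primal-dual gap bound for the serious-step iterates of PDPB:
`φ(x̄_k) + f*(s̄_k) + ĥ*(-s̄_k) ≤ ε̄ + 18 d₀²/(λ k)`, where `ĥ = h + I_Q`, `Q = B(x̂₀, 6 d₀)`. -/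
theorem stmt2 {n : ℕ} (f h : EuclideanSpace ℝ (Fin n) → ℝ)
    (domf domh : Set (EuclideanSpace ℝ (Fin n)))
    (hdom : domh ⊆ domf)
    (hfconv : ConvexOn ℝ domf f) (hflsc : LowerSemicontinuousOn f domf)
    (hhconv : ConvexOn ℝ domh h) (hhlsc : LowerSemicontinuousOn h domh)
    (lam eps d₀ : ℝ) (hlam : 0 < lam) (heps : 0 < eps) (hd₀ : 0 < d₀)
    (xh0 : EuclideanSpace ℝ (Fin n)) (hxh0 : xh0 ∈ domh)
    (xh xt s : ℕ → EuclideanSpace ℝ (Fin n))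
    (Γ : ℕ → EuclideanSpace ℝ (Fin n) → ℝ)
    (hinit : xh 0 = xh0)
    (hΓconv : ∀ k, 1 ≤ k → ConvexOn ℝ Set.univ (Γ k))
    (hΓlef : ∀ k, 1 ≤ k → ∀ u ∈ domf, Γ k u ≤ f u)
    (hxhmem : ∀ k, 1 ≤ k → xh k ∈ domh)
    (hxhmin : ∀ k, 1 ≤ k → ∀ u ∈ domh,
      Γ k (xh k) + h (xh k) + ‖xh k - xh (k - 1)‖ ^ 2 / (2 * lam)
        ≤ Γ k u + h u + ‖u - xh (k - 1)‖ ^ 2 / (2 * lam))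
    -- s_k ∈ ∂Γ_k(x̂_k)
    (hsk : ∀ k, 1 ≤ k → ∀ y, Γ k y ≥ Γ k (xh k) + ⟪s k, y - xh k⟫)
    -- g_k := -s_k + (x̂_{k-1} - x̂_k)/λ ∈ ∂h(x̂_k)
    (hgk : ∀ k, 1 ≤ k → ∀ y ∈ domh,
      h y ≥ h (xh k) + ⟪-(s k) + lam⁻¹ • (xh (k - 1) - xh k), y - xh k⟫)
    -- the cycle terminates with gap at most ε̄
    (hxtmem : ∀ k, 1 ≤ k → xt k ∈ domh)
    (hgap : ∀ k, 1 ≤ k →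
      f (xt k) + h (xt k) + ‖xt k - xh (k - 1)‖ ^ 2 / (2 * lam)
        ≤ eps + Γ k (xh k) + h (xh k) + ‖xh k - xh (k - 1)‖ ^ 2 / (2 * lam)) :
    ∀ k : ℕ, 1 ≤ k →
      ((f ((k : ℝ)⁻¹ • ∑ i ∈ Finset.Icc 1 k, xt i)
          + h ((k : ℝ)⁻¹ • ∑ i ∈ Finset.Icc 1 k, xt i) : ℝ) : EReal)
          + fconj domf f ((k : ℝ)⁻¹ • ∑ i ∈ Finset.Icc 1 k, s i)
          + fconj (domh ∩ Metric.closedBall xh0 (6 * d₀)) h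
              (-((k : ℝ)⁻¹ • ∑ i ∈ Finset.Icc 1 k, s i))
        ≤ ((eps + 18 * d₀ ^ 2 / (lam * k) : ℝ) : EReal) := by
  intro k hk
  have hkR : (0 : ℝ) < (k : ℝ) := by exact_mod_cast hk
  set xb : EuclideanSpace ℝ (Fin n) := (k : ℝ)⁻¹ • ∑ i ∈ Finset.Icc 1 k, xt i with hxbdef
  set sb : EuclideanSpace ℝ (Fin n) := (k : ℝ)⁻¹ • ∑ i ∈ Finset.Icc 1 k, s i with hsbdef
  have hcard : (Finset.Icc 1 k).card = k := by rw [Nat.card_Icc]; omega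
  have hwsum : ∑ _i ∈ Finset.Icc 1 k, (k : ℝ)⁻¹ = 1 := by
    rw [Finset.sum_const, hcard, nsmul_eq_mul, mul_inv_cancel₀ hkR.ne']
  have hw0 : ∀ i ∈ Finset.Icc 1 k, (0 : ℝ) ≤ (k : ℝ)⁻¹ := fun i _ => by positivity
  have hxbsum : xb = ∑ i ∈ Finset.Icc 1 k, (k : ℝ)⁻¹ • xt i := by
    rw [hxbdef, Finset.smul_sum]
  have hmemh : ∀ i ∈ Finset.Icc 1 k, xt i ∈ domh := fun i hi =>
    hxtmem i (Finset.mem_Icc.mp hi).1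
  have hmemf : ∀ i ∈ Finset.Icc 1 k, xt i ∈ domf := fun i hi => hdom (hmemh i hi)
  have hxbmem : xb ∈ domh := by
    rw [hxbsum]; exact hhconv.1.sum_mem hw0 hwsum hmemh
  -- Jensen
  have hjf : f xb ≤ ∑ i ∈ Finset.Icc 1 k, (k : ℝ)⁻¹ * f (xt i) := by
    have := hfconv.map_sum_le hw0 hwsum hmemf
    simpa only [smul_eq_mul, ← hxbsum] using this
  have hjh : h xb ≤ ∑ i ∈ Finset.Icc 1 k, (k : ℝ)⁻¹ * h (xt i) := by
    have := hhconv.map_sum_le hw0 hwsum hmemh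
    simpa only [smul_eq_mul, ← hxbsum] using this
  have hjensen : (k : ℝ) * (f xb + h xb) ≤ ∑ i ∈ Finset.Icc 1 k, (f (xt i) + h (xt i)) := by
    have h1 : f xb + h xb ≤ (k : ℝ)⁻¹ * ∑ i ∈ Finset.Icc 1 k, (f (xt i) + h (xt i)) := by
      refine le_trans (add_le_add hjf hjh) (le_of_eq ?_)
      rw [← Finset.sum_add_distrib, Finset.mul_sum]
      exact Finset.sum_congr rfl fun i _ => by ring
    have h2 := mul_le_mul_of_nonneg_left h1 hkR.le
    rwa [← mul_assoc, mul_inv_cancel₀ hkR.ne', one_mul] at h2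
  -- the key real inequality
  have key : ∀ u ∈ domf, ∀ v ∈ domh ∩ Metric.closedBall xh0 (6 * d₀),
      (⟪sb, u⟫ - f u) + (⟪-sb, v⟫ - h v)
        ≤ (eps + 18 * d₀ ^ 2 / (lam * k)) - (f xb + h xb) := by
    rintro u hu v ⟨hv, hvball⟩
    have per : ∀ i ∈ Finset.Icc 1 k,
        f (xt i) + h (xt i) - eps + ⟪s i, u - v⟫
            + (‖v - xh i‖ ^ 2 - ‖v - xh (i - 1)‖ ^ 2) / (2 * lam)
          ≤ f u + h v := by
      intro i hi
      have hi1 : 1 ≤ i := (Finset.mem_Icc.mp hi).1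
      have hfu : Γ i (xh i) + ⟪s i, u - xh i⟫ ≤ f u :=
        le_trans (hsk i hi1 u) (hΓlef i hi1 u hu)
      have hhv := hgk i hi1 v hv
      have hinner : ⟪-(s i) + lam⁻¹ • (xh (i - 1) - xh i), v - xh i⟫
          = -⟪s i, v - xh i⟫
            + (‖v - xh i‖ ^ 2 + ‖xh i - xh (i - 1)‖ ^ 2
                - ‖v - xh (i - 1)‖ ^ 2) / (2 * lam) := by
        rw [inner_add_left, inner_neg_left, real_inner_smul_left, pdpb_three_point]
        field_simp
      rw [hinner] at hhv
      have hg := hgap i hi1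
      have hsplit : ⟪s i, u - v⟫ = ⟪s i, u - xh i⟫ - ⟪s i, v - xh i⟫ := by
        rw [inner_sub_right, inner_sub_right, inner_sub_right]; ring
      have hnn : (0 : ℝ) ≤ ‖xt i - xh (i - 1)‖ ^ 2 / (2 * lam) := by positivity
      have e2 : (‖v - xh i‖ ^ 2 - ‖v - xh (i - 1)‖ ^ 2) / (2 * lam)
          = (‖v - xh i‖ ^ 2 + ‖xh i - xh (i - 1)‖ ^ 2 - ‖v - xh (i - 1)‖ ^ 2) / (2 * lam)
            - ‖xh i - xh (i - 1)‖ ^ 2 / (2 * lam) := by ring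
      rw [e2]
      linarith
    have big := Finset.sum_le_sum per
    rw [Finset.sum_const, hcard, nsmul_eq_mul] at big
    have hsum_eq : ∑ i ∈ Finset.Icc 1 k,
        (f (xt i) + h (xt i) - eps + ⟪s i, u - v⟫
          + (‖v - xh i‖ ^ 2 - ‖v - xh (i - 1)‖ ^ 2) / (2 * lam))
        = (∑ i ∈ Finset.Icc 1 k, (f (xt i) + h (xt i))) - (k : ℝ) * eps
          + ⟪∑ i ∈ Finset.Icc 1 k, s i, u - v⟫
          + (∑ i ∈ Finset.Icc 1 k, (‖v - xh i‖ ^ 2 - ‖v - xh (i - 1)‖ ^ 2)) / (2 * lam) := by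
      simp only [Finset.sum_add_distrib, Finset.sum_sub_distrib, Finset.sum_div, sub_div,
        Finset.sum_const, hcard, nsmul_eq_mul, sum_inner]
    rw [hsum_eq] at big
    have t2 : ∑ i ∈ Finset.Icc 1 k, (‖v - xh i‖ ^ 2 - ‖v - xh (i - 1)‖ ^ 2)
        = ‖v - xh k‖ ^ 2 - ‖v - xh 0‖ ^ 2 := pdpb_tele (fun j => ‖v - xh j‖ ^ 2) k
    rw [t2, inner_sub_right] at big
    -- ball bound
    have hball : ‖v - xh 0‖ ^ 2 ≤ 36 * d₀ ^ 2 := by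
      have hd : ‖v - xh 0‖ ≤ 6 * d₀ := by
        rw [hinit, ← dist_eq_norm]; exact Metric.mem_closedBall.mp hvball
      nlinarith [norm_nonneg (v - xh 0)]
    have hnn2 : (0 : ℝ) ≤ ‖v - xh k‖ ^ 2 := by positivity
    -- combine
    have step : (k : ℝ) * (f xb + h xb) + ⟪∑ i ∈ Finset.Icc 1 k, s i, u⟫
        - ⟪∑ i ∈ Finset.Icc 1 k, s i, v⟫
        ≤ (k : ℝ) * (f u + h v) + (k : ℝ) * eps + 18 * d₀ ^ 2 / lam := by
      have hgb : (‖v - xh 0‖ ^ 2 - ‖v - xh k‖ ^ 2) / (2 * lam) ≤ 18 * d₀ ^ 2 / lam := by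
        rw [div_le_div_iff₀ (by linarith) hlam]
        nlinarith
      have e3 : (‖v - xh k‖ ^ 2 - ‖v - xh 0‖ ^ 2) / (2 * lam)
          = -((‖v - xh 0‖ ^ 2 - ‖v - xh k‖ ^ 2) / (2 * lam)) := by ring
      rw [e3] at big
      linarith
    -- divide by k
    have e_u : ⟪sb, u⟫ = (k : ℝ)⁻¹ * ⟪∑ i ∈ Finset.Icc 1 k, s i, u⟫ := by
      rw [hsbdef, real_inner_smul_left]
    have e_v : ⟪-sb, v⟫ = -((k : ℝ)⁻¹ * ⟪∑ i ∈ Finset.Icc 1 k, s i, v⟫) := by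
      rw [inner_neg_left, hsbdef, real_inner_smul_left]
    rw [e_u, e_v]
    have hdiv := pdpb_div (k : ℝ) lam (f xb + h xb) (f u + h v)
      ⟪∑ i ∈ Finset.Icc 1 k, s i, u⟫ ⟪∑ i ∈ Finset.Icc 1 k, s i, v⟫ eps (18 * d₀ ^ 2)
      hkR hlam step
    linarith
  -- wrap up in EReal
  have hxh0f : xh0 ∈ domf := hdom hxh0
  have hxh0D2 : xh0 ∈ domh ∩ Metric.closedBall xh0 (6 * d₀) :=
    ⟨hxh0, Metric.mem_closedBall_self (by positivity)⟩
  set D2 := domh ∩ Metric.closedBall xh0 (6 * d₀) with hD2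
  set p : EuclideanSpace ℝ (Fin n) → ℝ := fun u => ⟪sb, u⟫ - f u with hp
  set q : EuclideanSpace ℝ (Fin n) → ℝ := fun v => ⟪-sb, v⟫ - h v with hq
  set B : ℝ := (eps + 18 * d₀ ^ 2 / (lam * k)) - (f xb + h xb) with hB
  have key' : ∀ u ∈ domf, ∀ v ∈ D2, p u + q v ≤ B := key
  have ne1 : (p '' domf).Nonempty := ⟨p xh0, Set.mem_image_of_mem _ hxh0f⟩
  have ne2 : (q '' D2).Nonempty := ⟨q xh0, Set.mem_image_of_mem _ hxh0D2⟩
  have bdd1 : BddAbove (p '' domf) := by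
    refine ⟨B - q xh0, ?_⟩
    rintro _ ⟨u, hu, rfl⟩
    linarith [key' u hu xh0 hxh0D2]
  have bdd2 : BddAbove (q '' D2) := by
    refine ⟨B - p xh0, ?_⟩
    rintro _ ⟨v, hv, rfl⟩
    linarith [key' xh0 hxh0f v hv]
  set r1 := sSup (p '' domf) with hr1
  set r2 := sSup (q '' D2) with hr2
  have hr12 : r1 + r2 ≤ B := by
    have h2 : ∀ u ∈ domf, r2 ≤ B - p u := fun u hu => by
      refine csSup_le ne2 ?_
      rintro _ ⟨v, hv, rfl⟩
      linarith [key' u hu v hv]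
    have h1 : r1 ≤ B - r2 := by
      refine csSup_le ne1 ?_
      rintro _ ⟨u, hu, rfl⟩
      linarith [h2 u hu]
    linarith
  have hS1 : fconj domf f sb ≤ ((r1 : ℝ) : EReal) := by
    unfold fconj
    refine iSup₂_le fun u hu => ?_
    exact EReal.coe_le_coe_iff.mpr (le_csSup bdd1 (Set.mem_image_of_mem _ hu))
  have hS2 : fconj D2 h (-sb) ≤ ((r2 : ℝ) : EReal) := by
    unfold fconj
    refine iSup₂_le fun v hv => ?_
    exact EReal.coe_le_coe_iff.mpr (le_csSup bdd2 (Set.mem_image_of_mem _ hv))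
  calc ((f xb + h xb : ℝ) : EReal) + fconj domf f sb + fconj D2 h (-sb)
      ≤ ((f xb + h xb : ℝ) : EReal) + ((r1 : ℝ) : EReal) + ((r2 : ℝ) : EReal) :=
        add_le_add (add_le_add le_rfl hS1) hS2
    _ = (((f xb + h xb) + r1 + r2 : ℝ) : EReal) := by
        norm_cast
    _ ≤ ((eps + 18 * d₀ ^ 2 / (lam * k) : ℝ) : EReal) :=
        EReal.coe_le_coe_iff.mpr (by rw [hB] at hr12; linarith)
end

section
/- Let f, h : ℝⁿ → ℝ ∪ {+∞} be proper lower semicontinuous convex with dom h ⊆ dom f, φ = f + h with nonempty set of minimizers, x̂₀ ∈ dom h, x₀* a minimizer of φ nearest to x̂₀, and d₀ = ‖x₀* − x̂₀‖ > 0. Let ε̄ > 0 and λ > 0 with λ ≤ 2d₀²/ε̄. Suppose sequences (x̂_k)_{k≥0}, (x̃_k) and proper lower semicontinuous convex (Γ_k) satisfy for every k ≥ 1: Γ_k ≤ f; x̂_k minimizes u ↦ Γ_k(u) + h(u) + ‖u − x̂_{k−1}‖²/(2λ) with minimum value m_k; and φ(x̃_k) + ‖x̃_k − x̂_{k−1}‖²/(2λ)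 ≤ ε̄ + m_k. Then for every k with k ≤ 2d₀²/(λε̄), both ‖x̂_k − x̂₀‖ ≤ 6d₀ and ‖x̃_k − x̂₀‖ ≤ 6d₀ (in fact ‖x̂_k − x̂₀‖ ≤ 4d₀). -/
open RealInnerProductSpace

lemma pdpb_norm_id {E : Type*} [NormedAddCommGroup E] [InnerProductSpace ℝ E]
    (p q : E) (t : ℝ) :
    ‖(1 - t) • p + t • q‖ ^ 2
      = (1 - t) * ‖p‖ ^ 2 + t * ‖q‖ ^ 2 - t * (1 - t) * ‖q - p‖ ^ 2 := by
  have h1 : ∀ v : E, ‖v‖ ^ 2 = ⟪v, v⟫ := fun v => (real_inner_self_eq_norm_sq v).symm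
  rw [h1, h1, h1, h1]
  simp only [inner_add_left, inner_add_right, inner_sub_left, inner_sub_right,
    real_inner_smul_left, real_inner_smul_right, real_inner_comm p q]
  ring

lemma pdpb_three_point_s3 {E : Type*} [NormedAddCommGroup E] [InnerProductSpace ℝ E]
    {s : Set E} {G : E → ℝ} (hG : ConvexOn ℝ s G) {lam : ℝ} (hlam : 0 < lam)
    {c a : E} (ha : a ∈ s)
    (hmin : ∀ u ∈ s, G a + ‖a - c‖ ^ 2 / (2 * lam) ≤ G u + ‖u - c‖ ^ 2 / (2 * lam))
    {u : E} (hu : u ∈ s) :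
    G a + ‖a - c‖ ^ 2 / (2 * lam) + ‖u - a‖ ^ 2 / (2 * lam)
      ≤ G u + ‖u - c‖ ^ 2 / (2 * lam) := by
  have h2L : (0:ℝ) < 2 * lam := by linarith
  have hi : (0:ℝ) < (2 * lam)⁻¹ := inv_pos.mpr h2L
  set A := ‖a - c‖ ^ 2 with hA
  set B := ‖u - c‖ ^ 2 with hB
  set C := ‖u - a‖ ^ 2 with hC
  have hstep : ∀ t : ℝ, 0 < t → t ≤ 1 →
      G a + A / (2 * lam) + (1 - t) * (C / (2 * lam)) ≤ G u + B / (2 * lam) := by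
    intro t ht0 ht1
    have ht1' : (0:ℝ) ≤ 1 - t := by linarith
    have hmem : (1 - t) • a + t • u ∈ s := hG.1 ha hu ht1' ht0.le (by ring)
    have hGx : G ((1 - t) • a + t • u) ≤ (1 - t) * G a + t * G u := by
      have := hG.2 ha hu ht1' ht0.le (by ring)
      simpa [smul_eq_mul] using this
    have hmin' := hmin _ hmem
    have hid : ‖((1 - t) • a + t • u) - c‖ ^ 2
        = (1 - t) * A + t * B - t * (1 - t) * C := by
      have : ((1 - t) • a + t • u) - c = (1 - t) • (a - c) + t • (u - c) := by
        module
      rw [this, pdpb_norm_id]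
      have : (u - c) - (a - c) = u - a := by abel
      rw [this]
    rw [hid] at hmin'
    have H : G a + A / (2 * lam)
        ≤ (1 - t) * G a + t * G u + ((1 - t) * A + t * B - t * (1 - t) * C) / (2 * lam) :=
      le_trans hmin' (by linarith)
    have Hexp : G a + A * (2 * lam)⁻¹
        ≤ (1 - t) * G a + t * G u + ((1 - t) * A + t * B - t * (1 - t) * C) * (2 * lam)⁻¹ := by
      simpa [div_eq_mul_inv] using H
    have h2 : 0 ≤ t * (G u + B * (2 * lam)⁻¹ - G a - A * (2 * lam)⁻¹
        - (1 - t) * (C * (2 * lam)⁻¹)) := by nlinarith [Hexp]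
    have h3 : 0 ≤ G u + B * (2 * lam)⁻¹ - G a - A * (2 * lam)⁻¹
        - (1 - t) * (C * (2 * lam)⁻¹) := nonneg_of_mul_nonneg_right h2 ht0
    have e : ∀ x : ℝ, x / (2 * lam) = x * (2 * lam)⁻¹ := fun x => div_eq_mul_inv x _
    rw [e, e, e]
    linarith
  have hq : 0 ≤ C / (2 * lam) := by positivity
  have : ∀ ε > (0:ℝ), G a + A / (2 * lam) + C / (2 * lam) ≤ G u + B / (2 * lam) + ε := by
    intro ε hε
    set q := C / (2 * lam)
    set t := min 1 (ε / (q + 1)) with htdef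
    have ht0 : 0 < t := lt_min one_pos (div_pos hε (by linarith))
    have ht1 : t ≤ 1 := min_le_left _ _
    have htq : t * q ≤ ε := by
      have h1 : t ≤ ε / (q + 1) := min_le_right _ _
      have h2 : t * q ≤ (ε / (q + 1)) * q := mul_le_mul_of_nonneg_right h1 hq
      have h3 : (ε / (q + 1)) * q ≤ ε := by
        rw [div_mul_eq_mul_div, div_le_iff₀ (by linarith : (0:ℝ) < q + 1)]
        nlinarith
      linarith
    have := hstep t ht0 ht1
    have : G a + A / (2 * lam) + q - t * q ≤ G u + B / (2 * lam) := by
      have hexp : (1 - t) * q = q - t * q := by ring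
      linarith [hstep t ht0 ht1, hexp ▸ hstep t ht0 ht1]
    linarith
  linarith [le_of_forall_pos_le_add this]

/-- boundedness of the prox-center and auxiliary iterates of PDPB:
for `k ≤ 2 d₀²/(λ ε̄)`, both `‖x̂_k - x̂₀‖ ≤ 6 d₀` and `‖x̃_k - x̂₀‖ ≤ 6 d₀`
(in fact `‖x̂_k - x̂₀‖ ≤ 4 d₀`). -/
theorem stmt3 {n : ℕ} (f h : EuclideanSpace ℝ (Fin n) → ℝ)
    (domf domh : Set (EuclideanSpace ℝ (Fin n)))
    (hdom : domh ⊆ domf)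
    (hfconv : ConvexOn ℝ domf f) (hflsc : LowerSemicontinuousOn f domf)
    (hhconv : ConvexOn ℝ domh h) (hhlsc : LowerSemicontinuousOn h domh)
    (xstar : EuclideanSpace ℝ (Fin n)) (hxstarmem : xstar ∈ domh)
    -- x₀* is a minimizer of φ = f + h ...
    (hxstarmin : ∀ u ∈ domh, f xstar + h xstar ≤ f u + h u)
    (xh xt : ℕ → EuclideanSpace ℝ (Fin n))
    (hxh0 : xh 0 ∈ domh)
    -- ... nearest to x̂₀
    (hnearest : ∀ z ∈ domh, (∀ u ∈ domh, f z + h z ≤ f u + h u) →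
      ‖xstar - xh 0‖ ≤ ‖z - xh 0‖)
    (d₀ : ℝ) (hd₀def : d₀ = ‖xstar - xh 0‖) (hd₀ : 0 < d₀)
    (eps lam : ℝ) (heps : 0 < eps) (hlam : 0 < lam) (hlamle : lam ≤ 2 * d₀ ^ 2 / eps)
    (Γ : ℕ → EuclideanSpace ℝ (Fin n) → ℝ)
    (hΓconv : ∀ k, 1 ≤ k → ConvexOn ℝ Set.univ (Γ k))
    (hΓlef : ∀ k, 1 ≤ k → ∀ u ∈ domf, Γ k u ≤ f u)
    (hxhmem : ∀ k, 1 ≤ k → xh k ∈ domh)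
    (hxhmin : ∀ k, 1 ≤ k → ∀ u ∈ domh,
      Γ k (xh k) + h (xh k) + ‖xh k - xh (k - 1)‖ ^ 2 / (2 * lam)
        ≤ Γ k u + h u + ‖u - xh (k - 1)‖ ^ 2 / (2 * lam))
    (hxtmem : ∀ k, 1 ≤ k → xt k ∈ domh)
    (hgap : ∀ k, 1 ≤ k →
      f (xt k) + h (xt k) + ‖xt k - xh (k - 1)‖ ^ 2 / (2 * lam)
        ≤ eps + (Γ k (xh k) + h (xh k) + ‖xh k - xh (k - 1)‖ ^ 2 / (2 * lam))) :
    ∀ k : ℕ, 1 ≤ k → (k : ℝ) ≤ 2 * d₀ ^ 2 / (lam * eps) →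
      ‖xh k - xh 0‖ ≤ 6 * d₀ ∧ ‖xt k - xh 0‖ ≤ 6 * d₀ ∧ ‖xh k - xh 0‖ ≤ 4 * d₀ := by
  have h2L : (0:ℝ) < 2 * lam := by linarith
  have hxstarf : xstar ∈ domf := hdom hxstarmem
  -- one-step recursion for the distance to the minimizer, plus bound on ‖x̃ - x̂_{j-1}‖
  have hBrec : ∀ j : ℕ, 1 ≤ j →
      ‖xstar - xh j‖ ^ 2 ≤ ‖xstar - xh (j - 1)‖ ^ 2 + 2 * lam * eps ∧
      ‖xt j - xh (j - 1)‖ ^ 2 ≤ 2 * lam * eps + ‖xstar - xh (j - 1)‖ ^ 2 := by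
    intro j hj
    have hGconv : ConvexOn ℝ domh (fun u => Γ j u + h u) :=
      (((hΓconv j hj).subset (Set.subset_univ domh) hhconv.1)).add hhconv
    have tp := pdpb_three_point_s3 hGconv hlam (hxhmem j hj) (hxhmin j hj) hxstarmem
    have hΓle : Γ j xstar ≤ f xstar := hΓlef j hj xstar hxstarf
    have hφt : f xstar + h xstar ≤ f (xt j) + h (xt j) := hxstarmin (xt j) (hxtmem j hj)
    have hg := hgap j hj
    -- divide-by-(2λ) versions
    have key1 : ‖xstar - xh j‖ ^ 2 / (2 * lam)
        ≤ ‖xstar - xh (j - 1)‖ ^ 2 / (2 * lam) + eps := by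
      have hnn : 0 ≤ ‖xt j - xh (j - 1)‖ ^ 2 / (2 * lam) := by positivity
      linarith
    have key2 : ‖xt j - xh (j - 1)‖ ^ 2 / (2 * lam)
        ≤ eps + ‖xstar - xh (j - 1)‖ ^ 2 / (2 * lam) := by
      have hnn : 0 ≤ ‖xstar - xh j‖ ^ 2 / (2 * lam) := by positivity
      linarith
    constructor
    · have h1 : ‖xstar - xh j‖ ^ 2 / (2 * lam)
          ≤ (‖xstar - xh (j - 1)‖ ^ 2 + 2 * lam * eps) / (2 * lam) := by
        rw [add_div, mul_comm (2 * lam) eps, mul_div_assoc, div_self h2L.ne', mul_one]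
        linarith
      exact (div_le_div_iff_of_pos_right h2L).mp h1
    · have h1 : ‖xt j - xh (j - 1)‖ ^ 2 / (2 * lam)
          ≤ (2 * lam * eps + ‖xstar - xh (j - 1)‖ ^ 2) / (2 * lam) := by
        rw [add_div, mul_comm (2 * lam) eps, mul_div_assoc, div_self h2L.ne', mul_one]
        linarith
      exact (div_le_div_iff_of_pos_right h2L).mp h1
  -- cumulative bound
  have hBbound : ∀ j : ℕ, ‖xstar - xh j‖ ^ 2 ≤ d₀ ^ 2 + 2 * lam * eps * j := by
    intro j
    induction j with
    | zero =>
      simp [hd₀def]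
    | succ j ih =>
      have hrec := (hBrec (j + 1) (by omega)).1
      simp only [Nat.add_sub_cancel] at hrec
      push_cast
      linarith
  intro k hk hkle
  have hle : 0 < lam * eps := mul_pos hlam heps
  have hprod : 2 * lam * eps * (k : ℝ) ≤ 4 * d₀ ^ 2 := by
    have := (le_div_iff₀ hle).mp hkle
    nlinarith
  have hk1k : ((k - 1 : ℕ) : ℝ) = (k : ℝ) - 1 := by
    push_cast [Nat.cast_sub hk]; ring
  have hprod1 : 2 * lam * eps * ((k - 1 : ℕ) : ℝ) ≤ 4 * d₀ ^ 2 := by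
    rw [hk1k]
    nlinarith
  have hBk : ‖xstar - xh k‖ ^ 2 ≤ 5 * d₀ ^ 2 := by
    have := hBbound k; linarith
  have hBk1 : ‖xstar - xh (k - 1)‖ ^ 2 ≤ 5 * d₀ ^ 2 := by
    have := hBbound (k - 1); linarith
  have hTk : ‖xt k - xh (k - 1)‖ ^ 2 ≤ 5 * d₀ ^ 2 := by
    have h1 := (hBrec k hk).2
    have h2 := hBbound (k - 1)
    rw [hk1k] at h2
    nlinarith
  have n1 : ‖xstar - xh k‖ ≤ 5 / 2 * d₀ := by
    nlinarith [norm_nonneg (xstar - xh k)]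
  have n2 : ‖xstar - xh (k - 1)‖ ≤ 5 / 2 * d₀ := by
    nlinarith [norm_nonneg (xstar - xh (k - 1))]
  have n3 : ‖xt k - xh (k - 1)‖ ≤ 5 / 2 * d₀ := by
    nlinarith [norm_nonneg (xt k - xh (k - 1))]
  have t1 : ‖xh k - xh 0‖ ≤ ‖xh k - xstar‖ + ‖xstar - xh 0‖ :=
    norm_sub_le_norm_sub_add_norm_sub _ _ _
  rw [norm_sub_rev (xh k) xstar, ← hd₀def] at t1
  have t2 : ‖xh (k - 1) - xh 0‖ ≤ ‖xh (k - 1) - xstar‖ + ‖xstar - xh 0‖ :=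
    norm_sub_le_norm_sub_add_norm_sub _ _ _
  rw [norm_sub_rev (xh (k - 1)) xstar, ← hd₀def] at t2
  have t3 : ‖xt k - xh 0‖ ≤ ‖xt k - xh (k - 1)‖ + ‖xh (k - 1) - xh 0‖ :=
    norm_sub_le_norm_sub_add_norm_sub _ _ _
  refine ⟨by linarith, by linarith, by linarith⟩
end

section
/- Let f, h : ℝⁿ → ℝ ∪ {+∞} be proper lower semicontinuous convex with dom h ⊆ dom f, let f′ be a subgradient selection (f′(x) ∈ ∂f(x) for x ∈ dom h), let x₀ ∈ dom h, λ > 0, h^λ(u) = h(u) + ‖u − x₀‖²/(2λ), and (τ_j) ⊆ [0,1]. Define the one-cut PDCP iterates: Γ₁ = ℓ_f(·; x₀); for j ≥ 1, x_j = argmin_u (Γ_j(u) + h^λ(u)), s_j = ∇Γ_j (each Γ_j is affine), and Γ_{j+1} = τ_j Γ_j + (1 − τ_j) ℓ_f(·; x_j). Define the conditional-gradient iterates for ψ(z) = (h^λ)*(−z) + f*(z): z₁ = f′(x₀) and z_{j+1} = τ_j z_j + (1 − τ_j) z̄_j with z̄_j := f′(x_j). Then for every j ≥ 1: s_j = z_j;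 x_j = ∇(h^λ)*(−z_j), i.e., x_j is the unique maximizer of x ↦ ⟨−z_j, x⟩ − h^λ(x); and z̄_j = f′(x_j) attains the minimum of z ↦ ⟨−∇(h^λ)*(−z_j), z⟩ + f*(z), so the two methods generate the same primal-dual iterates. -/
open RealInnerProductSpace

/-- duality between the one-cut cutting-plane scheme and conditional gradient:
`s_j = z_j` (i.e. the affine model `Γ_j` has gradient `z_j`), `x_j = ∇(h^λ)*(-z_j)`
(i.e. `x_j` is the unique maximizer of `x ↦ ⟨-z_j, x⟩ - h^λ(x)`), and `z̄_j = f'(x_j)`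
minimizes `z ↦ ⟨-∇(h^λ)*(-z_j), z⟩ + f*(z)`. -/
theorem stmt5 {n : ℕ} (f h : EuclideanSpace ℝ (Fin n) → ℝ)
    (domf domh : Set (EuclideanSpace ℝ (Fin n)))
    (hdom : domh ⊆ domf)
    (hfconv : ConvexOn ℝ domf f) (hflsc : LowerSemicontinuousOn f domf)
    (hhconv : ConvexOn ℝ domh h) (hhlsc : LowerSemicontinuousOn h domh)
    (f' : EuclideanSpace ℝ (Fin n) → EuclideanSpace ℝ (Fin n))
    (hsubgrad : ∀ x ∈ domh, ∀ y ∈ domf, f y ≥ f x + ⟪f' x, y - x⟫)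
    (x₀ : EuclideanSpace ℝ (Fin n)) (hx₀ : x₀ ∈ domh)
    (lam : ℝ) (hlam : 0 < lam)
    (τ : ℕ → ℝ) (hτ : ∀ j, τ j ∈ Set.Icc (0 : ℝ) 1)
    (Γ : ℕ → EuclideanSpace ℝ (Fin n) → ℝ)
    (x z : ℕ → EuclideanSpace ℝ (Fin n))
    -- one-cut PDCP iterates
    (hΓ1 : ∀ u, Γ 1 u = f x₀ + ⟪f' x₀, u - x₀⟫)
    (hxmem : ∀ j, 1 ≤ j → x j ∈ domh)
    (hxmin : ∀ j, 1 ≤ j → ∀ u ∈ domh,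
      Γ j (x j) + (h (x j) + ‖x j - x₀‖ ^ 2 / (2 * lam))
        ≤ Γ j u + (h u + ‖u - x₀‖ ^ 2 / (2 * lam)))
    (hΓrec : ∀ j, 1 ≤ j → ∀ u,
      Γ (j + 1) u = τ j * Γ j u + (1 - τ j) * (f (x j) + ⟪f' (x j), u - x j⟫))
    -- conditional-gradient iterates
    (hz1 : z 1 = f' x₀)
    (hzrec : ∀ j, 1 ≤ j → z (j + 1) = τ j • z j + (1 - τ j) • f' (x j)) :
    ∀ j, 1 ≤ j →
      -- s_j = z_j : the affine model Γ_j has gradient z_j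
      (∀ u v, Γ j u - Γ j v = ⟪z j, u - v⟫) ∧
      -- x_j = ∇(h^λ)*(-z_j) : x_j is the unique maximizer of ⟨-z_j, ·⟩ - h^λ
      (∀ u ∈ domh,
        ⟪-(z j), u⟫ - (h u + ‖u - x₀‖ ^ 2 / (2 * lam))
          ≤ ⟪-(z j), x j⟫ - (h (x j) + ‖x j - x₀‖ ^ 2 / (2 * lam))) ∧
      (∀ u ∈ domh,
        ⟪-(z j), u⟫ - (h u + ‖u - x₀‖ ^ 2 / (2 * lam))
          = ⟪-(z j), x j⟫ - (h (x j) + ‖x j - x₀‖ ^ 2 / (2 * lam)) → u = x j) ∧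
      -- z̄_j = f'(x_j) attains the minimum of z ↦ ⟨-x_j, z⟩ + f*(z)
      (∀ w, ((⟪-(x j), f' (x j)⟫ : ℝ) : EReal) + fconj domf f (f' (x j))
          ≤ ((⟪-(x j), w⟫ : ℝ) : EReal) + fconj domf f w) := by

  -- gradient identity by induction
  have grad : ∀ j, 1 ≤ j → ∀ u v, Γ j u - Γ j v = ⟪z j, u - v⟫ := by
    intro j hj
    induction j, hj using Nat.le_induction with
    | base =>
      intro u v
      rw [hΓ1 u, hΓ1 v, hz1]
      simp [inner_sub_right]
    | succ j hj ih =>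
      intro u v
      have h1 := ih u v
      rw [hΓrec j hj u, hΓrec j hj v, hzrec j hj]
      simp only [inner_add_left, real_inner_smul_left, inner_sub_right] at *
      linear_combination (τ j) * h1
  intro j hj
  have hxj : x j ∈ domh := hxmem j hj
  -- part 2: x j maximizes
  have part2 : ∀ u ∈ domh,
      ⟪-(z j), u⟫ - (h u + ‖u - x₀‖ ^ 2 / (2 * lam))
        ≤ ⟪-(z j), x j⟫ - (h (x j) + ‖x j - x₀‖ ^ 2 / (2 * lam)) := by
    intro u hu
    have hmin := hxmin j hj u hu
    have hg := grad j hj u (x j)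
    simp only [inner_neg_left, inner_sub_right] at *
    linarith
  refine ⟨grad j hj, part2, ?_, ?_⟩
  · -- uniqueness
    intro u hu heq
    set m : EuclideanSpace ℝ (Fin n) := (1/2 : ℝ) • u + (1/2 : ℝ) • x j with hm
    have hmmem : m ∈ domh := hhconv.1 hu hxj (by norm_num) (by norm_num) (by norm_num)
    have hconvm : h m ≤ (1/2) * h u + (1/2) * h (x j) :=
      hhconv.2 hu hxj (by norm_num) (by norm_num) (by norm_num)
    have hmx : m - x₀ = (1/2 : ℝ) • ((u - x₀) + (x j - x₀)) := by
      rw [hm]; module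
    have hd : u - x j = (u - x₀) - (x j - x₀) := by module
    have hnorm : ‖m - x₀‖ ^ 2
        = (‖u - x₀‖ ^ 2 + ‖x j - x₀‖ ^ 2) / 2 - ‖u - x j‖ ^ 2 / 4 := by
      have h12 : ‖(1/2 : ℝ)‖ = 1/2 := by norm_num
      rw [hmx, hd, norm_smul, mul_pow, h12,
        norm_add_sq_real (u - x₀) (x j - x₀), norm_sub_sq_real (u - x₀) (x j - x₀)]
      ring
    have hinnm : ⟪-(z j), m⟫ = (1/2) * ⟪-(z j), u⟫ + (1/2) * ⟪-(z j), x j⟫ := by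
      rw [hm, inner_add_right, real_inner_smul_right, real_inner_smul_right]
    have hle := part2 m hmmem
    have hnn : (0:ℝ) ≤ ‖u - x j‖ ^ 2 := by positivity
    have h2l : (0:ℝ) < 2 * lam := by linarith
    have hzero : ‖u - x j‖ ^ 2 = 0 := by
      rw [hnorm, hinnm] at hle
      have e : ((‖u - x₀‖ ^ 2 + ‖x j - x₀‖ ^ 2) / 2 - ‖u - x j‖ ^ 2 / 4) / (2 * lam)
          = ‖u - x₀‖ ^ 2 / (2 * lam) / 2 + ‖x j - x₀‖ ^ 2 / (2 * lam) / 2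
            - ‖u - x j‖ ^ 2 / (2 * lam) / 4 := by ring
      rw [e] at hle
      have hdiv : ‖u - x j‖ ^ 2 / (2 * lam) ≤ 0 := by linarith
      by_contra hc
      have hpos : 0 < ‖u - x j‖ ^ 2 := lt_of_le_of_ne hnn (Ne.symm hc)
      have := div_pos hpos h2l
      linarith
    have : u - x j = 0 := by
      have := pow_eq_zero_iff (n := 2) (by norm_num) |>.mp hzero
      simpa using this
    exact sub_eq_zero.mp this
  · -- part 4
    intro w
    have hxf : x j ∈ domf := hdom hxj
    have h1 : fconj domf f (f' (x j)) ≤ ((⟪f' (x j), x j⟫ - f (x j) : ℝ) : EReal) := by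
      refine iSup₂_le fun u hu => ?_
      have := hsubgrad (x j) hxj u hu
      rw [inner_sub_right] at this
      exact_mod_cast (by linarith : ⟪f' (x j), u⟫ - f u ≤ ⟪f' (x j), x j⟫ - f (x j))
    have h2 : ((⟪w, x j⟫ - f (x j) : ℝ) : EReal) ≤ fconj domf f w :=
      le_iSup₂_of_le (x j) hxf le_rfl
    have e1 : ⟪-(x j), f' (x j)⟫ + (⟪f' (x j), x j⟫ - f (x j)) = - f (x j) := by
      rw [inner_neg_left, real_inner_comm]; ring
    have e2 : ⟪-(x j), w⟫ + (⟪w, x j⟫ - f (x j)) = - f (x j) := by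
      rw [inner_neg_left, real_inner_comm]; ring
    calc ((⟪-(x j), f' (x j)⟫ : ℝ) : EReal) + fconj domf f (f' (x j))
        ≤ ((⟪-(x j), f' (x j)⟫ : ℝ) : EReal) + ((⟪f' (x j), x j⟫ - f (x j) : ℝ) : EReal) :=
          add_le_add le_rfl h1
      _ = ((⟪-(x j), w⟫ : ℝ) : EReal) + ((⟪w, x j⟫ - f (x j) : ℝ) : EReal) := by
          rw [← EReal.coe_add, ← EReal.coe_add, e1, e2]
      _ ≤ ((⟪-(x j), w⟫ : ℝ) : EReal) + fconj domf f w := add_le_add le_rfl h2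
end

section
/- Let f, h : ℝⁿ → ℝ ∪ {+∞} be proper lower semicontinuous convex with dom h ⊆ dom f, let x₀ ∈ dom h, λ > 0, h^λ(u) = h(u) + ‖u − x₀‖²/(2λ), φ^λ = f + h^λ, and ψ(z) = (h^λ)*(−z) + f*(z). Let z ∈ dom f* and let x = ∇(h^λ)*(−z), i.e., x is the unique maximizer of u ↦ ⟨−z, u⟩ − h^λ(u). Define the Wolfe gap S(z) = sup_{w ∈ ℝⁿ} ( −⟨x, z − w⟩ + f*(z) − f*(w) ). Then S(z) = φ^λ(x) + ψ(z); that is, the Wolfe gap equals the primal-dual gap at (x, z). -/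
open RealInnerProductSpace

lemma fconj_le {n : ℕ} {dom : Set (EuclideanSpace ℝ (Fin n))}
    {g : EuclideanSpace ℝ (Fin n) → ℝ} {s : EuclideanSpace ℝ (Fin n)} {M : ℝ}
    (hM : ∀ u ∈ dom, ⟪s, u⟫ - g u ≤ M) : fconj dom g s ≤ (M : EReal) :=
  iSup₂_le fun u hu => EReal.coe_le_coe_iff.mpr (hM u hu)

lemma le_fconj {n : ℕ} {dom : Set (EuclideanSpace ℝ (Fin n))}
    {g : EuclideanSpace ℝ (Fin n) → ℝ} {s : EuclideanSpace ℝ (Fin n)}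
    {u : EuclideanSpace ℝ (Fin n)} (hu : u ∈ dom) :
    ((⟪s, u⟫ - g u : ℝ) : EReal) ≤ fconj dom g s := by
  unfold fconj
  exact le_biSup (fun u => ((⟪s, u⟫ - g u : ℝ) : EReal)) hu

/-- Pointwise Fenchel–Moreau lower bound via separation: for `x ∈ domf`, the
biconjugate offers values arbitrarily close to `f x`. -/
lemma exists_affine_minorant {n : ℕ} (f : EuclideanSpace ℝ (Fin n) → ℝ)
    (domf : Set (EuclideanSpace ℝ (Fin n)))
    (hfconv : ConvexOn ℝ domf f) (hflsc : LowerSemicontinuousOn f domf)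
    (x : EuclideanSpace ℝ (Fin n)) (hx : x ∈ domf) (ε : ℝ) (hε : 0 < ε) :
    ∃ (w : EuclideanSpace ℝ (Fin n)) (Fw : ℝ),
      (∀ u ∈ domf, ⟪w, u⟫ - f u ≤ Fw) ∧ f x - ε < ⟪x, w⟫ - Fw := by
  classical
  set W := (EuclideanSpace ℝ (Fin n)) × ℝ
  set Epi : Set W := {p | p.1 ∈ domf ∧ f p.1 ≤ p.2} with hEpi
  have hEpiCvx : Convex ℝ Epi := by
    intro p hp q hq a b ha hb hab
    refine ⟨hfconv.1 hp.1 hq.1 ha hb hab, ?_⟩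
    have := hfconv.2 hp.1 hq.1 ha hb hab
    have h2 : (a • p + b • q).2 = a * p.2 + b * q.2 := rfl
    have h1 : (a • p + b • q).1 = a • p.1 + b • q.1 := rfl
    rw [h1, h2]
    calc f (a • p.1 + b • q.1) ≤ a * f p.1 + b * f q.1 := by simpa using this
      _ ≤ a * p.2 + b * q.2 := by
          have := hp.2; have := hq.2; nlinarith [hp.2, hq.2]
  have hpt : ((x, f x - ε) : W) ∉ closure Epi := by
    intro hmem
    rw [mem_closure_iff_seq_limit] at hmem
    obtain ⟨p, hpE, hplim⟩ := hmem
    have h1 : Filter.Tendsto (fun k => (p k).1) Filter.atTop (nhds x) :=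
      (continuous_fst.tendsto _).comp hplim
    have h2 : Filter.Tendsto (fun k => (p k).2) Filter.atTop (nhds (f x - ε)) :=
      (continuous_snd.tendsto _).comp hplim
    have h1' : Filter.Tendsto (fun k => (p k).1) Filter.atTop (nhdsWithin x domf) := by
      rw [tendsto_nhdsWithin_iff]
      exact ⟨h1, Filter.Eventually.of_forall fun k => (hpE k).1⟩
    have hlsc := hflsc x hx (f x - ε / 2) (by linarith)
    have hev : ∀ᶠ k in Filter.atTop, f x - ε / 2 < f (p k).1 := h1'.eventually hlsc
    have hev2 : ∀ᶠ k in Filter.atTop, f x - ε / 2 ≤ (p k).2 :=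
      hev.mono fun k hk => le_trans hk.le (hpE k).2
    have := ge_of_tendsto h2 hev2
    linarith
  obtain ⟨g, s, hgs, hsep⟩ :=
    geometric_hahn_banach_point_closed (hEpiCvx.closure) isClosed_closure hpt
  have hsepE : ∀ q ∈ Epi, s < g q := fun q hq => hsep q (subset_closure hq)
  -- decompose g
  set b : ℝ := g (0, 1) with hb
  have hgsplit : ∀ (u : EuclideanSpace ℝ (Fin n)) (t : ℝ), g (u, t) = g (u, 0) + t * b := by
    intro u t
    have : ((u, t) : W) = (u, 0) + t • ((0 : EuclideanSpace ℝ (Fin n)), (1 : ℝ)) := by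
      ext <;> simp
    rw [this, map_add, map_smul]; ring_nf; rw [hb]; ring
  have hbne : b ≠ 0 := by
    intro h0
    have h1 : s < g (x, f x) := hsepE (x, f x) ⟨hx, le_refl _⟩
    rw [hgsplit x (f x), h0] at h1
    rw [hgsplit x (f x - ε), h0] at hgs
    linarith
  have hbpos : 0 < b := by
    rcases lt_or_gt_of_ne hbne with hneg | hpos
    · exfalso
      set t : ℝ := max (f x) ((s - g (x, 0)) / b) with ht
      have h1 : s < g (x, t) := hsepE (x, t) ⟨hx, le_max_left _ _⟩
      rw [hgsplit x t] at h1
      have h2 : (s - g (x, 0)) / b ≤ t := le_max_right _ _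
      have : t * b ≤ s - g (x, 0) := by
        rw [div_le_iff_of_neg hneg] at h2
        linarith [h2]
      linarith
    · exact hpos
  clear_value b
  -- Riesz representation of u ↦ g (u, 0)
  set L : EuclideanSpace ℝ (Fin n) →L[ℝ] ℝ :=
    g.comp (ContinuousLinearMap.inl ℝ (EuclideanSpace ℝ (Fin n)) ℝ) with hL
  set c : EuclideanSpace ℝ (Fin n) :=
    (InnerProductSpace.toDual ℝ (EuclideanSpace ℝ (Fin n))).symm L with hc
  have hcval : ∀ u, ⟪c, u⟫ = g (u, 0) := by
    intro u
    rw [hc, InnerProductSpace.toDual_symm_apply]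
    rfl
  refine ⟨(-(1 / b)) • c, -s / b, ?_, ?_⟩
  · intro u hu
    have h1 : s < g (u, f u) := hsepE (u, f u) ⟨hu, le_refl _⟩
    rw [hgsplit u (f u), ← hcval u] at h1
    have : ⟪(-(1 / b)) • c, u⟫ = -(1 / b) * ⟪c, u⟫ := real_inner_smul_left _ _ _
    rw [this, le_div_iff₀ hbpos]
    have hbb : b * (1 / b) = 1 := mul_one_div_cancel hbne
    have hexp : (-(1 / b) * ⟪c, u⟫ - f u) * b = -(b * (1 / b)) * ⟪c, u⟫ - f u * b := by
      ring
    rw [hexp, hbb]; linarith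
  · rw [hgsplit x (f x - ε), ← hcval x] at hgs
    have h1 : ⟪x, (-(1 / b)) • c⟫ = -(1 / b) * ⟪c, x⟫ := by
      rw [real_inner_comm]; exact real_inner_smul_left _ _ _
    rw [h1]
    have key : f x - ε < (s - ⟪c, x⟫) / b := by
      rw [lt_div_iff₀ hbpos]; nlinarith
    have hq : -(1 / b) * ⟪c, x⟫ - -s / b = (s - ⟪c, x⟫) / b := by
      field_simp; ring
    linarith


lemma coe_arith (a r b : ℝ) :
    ((a : EReal) + (r : EReal) - (b : EReal)) = ((a + r - b : ℝ) : EReal) := by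
  rw [← EReal.coe_add, ← EReal.coe_sub]

/-- the Wolfe gap equals the primal-dual gap:
`S(z) = φ^λ(x) + ψ(z)` where `x = ∇(h^λ)*(-z)`,
`S(z) = sup_w (-⟨x, z - w⟩ + f*(z) - f*(w))` and `ψ(z) = (h^λ)*(-z) + f*(z)`. -/
theorem stmt6 {n : ℕ} (f h : EuclideanSpace ℝ (Fin n) → ℝ)
    (domf domh : Set (EuclideanSpace ℝ (Fin n)))
    (hdom : domh ⊆ domf)
    (hfconv : ConvexOn ℝ domf f) (hflsc : LowerSemicontinuousOn f domf)
    (hhconv : ConvexOn ℝ domh h) (hhlsc : LowerSemicontinuousOn h domh)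
    (x₀ : EuclideanSpace ℝ (Fin n)) (hx₀ : x₀ ∈ domh)
    (lam : ℝ) (hlam : 0 < lam)
    (z : EuclideanSpace ℝ (Fin n))
    -- z ∈ dom f*
    (hz : fconj domf f z ≠ ⊤)
    (x : EuclideanSpace ℝ (Fin n)) (hx : x ∈ domh)
    -- x = ∇(h^λ)*(-z): x is the unique maximizer of u ↦ ⟨-z, u⟩ - h^λ(u)
    (hxmax : ∀ u ∈ domh,
      ⟪-z, u⟫ - (h u + ‖u - x₀‖ ^ 2 / (2 * lam))
        ≤ ⟪-z, x⟫ - (h x + ‖x - x₀‖ ^ 2 / (2 * lam)))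
    (hxuniq : ∀ u ∈ domh,
      ⟪-z, u⟫ - (h u + ‖u - x₀‖ ^ 2 / (2 * lam))
        = ⟪-z, x⟫ - (h x + ‖x - x₀‖ ^ 2 / (2 * lam)) → u = x) :
    (⨆ w : EuclideanSpace ℝ (Fin n),
        (((-⟪x, z - w⟫ : ℝ) : EReal) + fconj domf f z - fconj domf f w))
      = ((f x + (h x + ‖x - x₀‖ ^ 2 / (2 * lam)) : ℝ) : EReal)
        + (fconj domh (fun u => h u + ‖u - x₀‖ ^ 2 / (2 * lam)) (-z) + fconj domf f z) := by
  classical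
  have hxf : x ∈ domf := hdom hx
  -- f* z is a real number r
  have hne_bot : fconj domf f z ≠ ⊥ := by
    intro hb
    have := le_fconj (dom := domf) (g := f) (s := z) hxf
    rw [hb, le_bot_iff] at this
    exact EReal.coe_ne_bot _ this
  set r : ℝ := (fconj domf f z).toReal with hr
  have hfcz : fconj domf f z = (r : EReal) := (EReal.coe_toReal hz hne_bot).symm
  -- (h^λ)*(-z) = ⟪-z,x⟫ - h^λ x
  set hl : EuclideanSpace ℝ (Fin n) → ℝ := fun u => h u + ‖u - x₀‖ ^ 2 / (2 * lam) with hhl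
  have hconjh : fconj domh hl (-z) = ((⟪-z, x⟫ - hl x : ℝ) : EReal) := by
    apply le_antisymm
    · exact fconj_le fun u hu => hxmax u hu
    · exact le_fconj hx
  set c₀ : ℝ := f x + r - ⟪x, z⟫ with hc₀
  have hRHS : ((f x + (h x + ‖x - x₀‖ ^ 2 / (2 * lam)) : ℝ) : EReal)
      + (fconj domh hl (-z) + fconj domf f z) = (c₀ : EReal) := by
    rw [hconjh, hfcz, ← EReal.coe_add, ← EReal.coe_add, EReal.coe_eq_coe_iff]
    have : ⟪-z, x⟫ = -⟪x, z⟫ := by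
      rw [inner_neg_left, real_inner_comm]
    rw [hc₀, this, hhl]
    ring
  rw [hRHS]
  apply le_antisymm
  · -- upper bound: weak duality at x ∈ domf
    apply iSup_le
    intro w
    have hfw : ((⟪w, x⟫ - f x : ℝ) : EReal) ≤ fconj domf f w := le_fconj hxf
    calc ((-⟪x, z - w⟫ : ℝ) : EReal) + fconj domf f z - fconj domf f w
        ≤ ((-⟪x, z - w⟫ : ℝ) : EReal) + (r : EReal) - ((⟪w, x⟫ - f x : ℝ) : EReal) := by
          rw [hfcz]; exact EReal.sub_le_sub le_rfl hfw
      _ = ((-⟪x, z - w⟫ + r - (⟪w, x⟫ - f x) : ℝ) : EReal) := coe_arith _ _ _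
      _ = (c₀ : EReal) := by
          rw [EReal.coe_eq_coe_iff, hc₀, inner_sub_right, real_inner_comm w x]
          ring
  · -- lower bound: separation
    by_contra hcon
    push_neg at hcon
    obtain ⟨a, ha1, ha2⟩ := EReal.exists_between_coe_real hcon
    have hεpos : 0 < c₀ - a := by
      have := EReal.coe_lt_coe_iff.mp ha2
      linarith
    obtain ⟨w, Fw, hFw1, hFw2⟩ :=
      exists_affine_minorant f domf hfconv hflsc x hxf (c₀ - a) hεpos
    have hfwle : fconj domf f w ≤ (Fw : EReal) := fconj_le hFw1
    have hTge : ((a : ℝ) : EReal)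
        < ((-⟪x, z - w⟫ : ℝ) : EReal) + fconj domf f z - fconj domf f w := by
      calc ((a : ℝ) : EReal) < ((-⟪x, z - w⟫ + r - Fw : ℝ) : EReal) := by
            rw [EReal.coe_lt_coe_iff, inner_sub_right]
            rw [hc₀] at hFw2
            linarith
        _ = ((-⟪x, z - w⟫ : ℝ) : EReal) + (r : EReal) - (Fw : EReal) :=
            (coe_arith _ _ _).symm
        _ ≤ ((-⟪x, z - w⟫ : ℝ) : EReal) + fconj domf f z - fconj domf f w := by
            rw [hfcz]; exact EReal.sub_le_sub le_rfl hfwle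
    have hle : ((-⟪x, z - w⟫ : ℝ) : EReal) + fconj domf f z - fconj domf f w
        ≤ ⨆ w : EuclideanSpace ℝ (Fin n),
            (((-⟪x, z - w⟫ : ℝ) : EReal) + fconj domf f z - fconj domf f w) :=
      le_iSup (fun w => ((-⟪x, z - w⟫ : ℝ) : EReal)
        + fconj domf f z - fconj domf f w) w
    exact absurd (lt_of_lt_of_le hTge hle) (not_lt.mpr ha1.le)
end

section
/- In the setting of the duality between one-cut PDCP and conditional gradient (Γ₁ = ℓ_f(·; x₀); x_j = argmin (Γ_j + h^λ); Γ_{j+1} = τ_j Γ_j + (1 − τ_j) ℓ_f(·; x_j); z₁ = f′(x₀); z̄_j = f′(x_j); z_{j+1} = τ_j z_j + (1 − τ_j) z̄_j) with τ_j = j/(j+2), assume ‖f′(x)‖ ≤ M for all x ∈ dom h, that every z ∈ dom f* satisfies ‖z‖ ≤ M, and that the initial gap satisfies φ^λ(x₁) + ψ(z₁) ≤ 4M(3d₀ + λM) for some d₀ > 0. Define u₁ = x₁ and u_{j+1} = τ_j u_j + (1 − τ_j) x_j for j ≥ 1. Then for every j ≥ 1, φ^λ(u_j) + ψ(z_j)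 ≤ 8M(3d₀ + λM)/(j(j+1)) + 8λM²/(j+1). -/
open RealInnerProductSpace

private lemma aux_quad (lam M nu a d ip : ℝ) (hlam : 0 < lam) (ha0 : 0 ≤ a) (hd0 : 0 ≤ d)
    (hnu : 0 ≤ nu) (haM : a ≤ 2*M) (hip : -(a*d) ≤ ip) :
    -(2*lam*M^2*nu^2) ≤ nu*ip + d^2/(2*lam) := by
  have h1 := mul_le_mul_of_nonneg_left hip hnu
  have h4 : a^2 ≤ 4*M^2 := by nlinarith
  have h5 : lam^2*nu^2*a^2 ≤ lam^2*nu^2*(4*M^2) :=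
    mul_le_mul_of_nonneg_left h4 (by positivity)
  have key : (nu*(a*d) - 2*lam*M^2*nu^2) * (2*lam) ≤ d^2 := by
    nlinarith [sq_nonneg (d - lam*nu*a)]
  have h6 := (le_div_iff₀ (show (0:ℝ) < 2*lam by linarith)).mpr key
  linarith

set_option maxHeartbeats 3200000 in
/-- primal-dual convergence of conditional gradient in the one-cut PDCP duality
setting with `τ_j = j/(j+2)`:
`φ^λ(u_j) + ψ(z_j) ≤ 8M(3d₀ + λM)/(j(j+1)) + 8λM²/(j+1)`. -/
theorem stmt8 {n : ℕ} (f h : EuclideanSpace ℝ (Fin n) → ℝ)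
    (domf domh : Set (EuclideanSpace ℝ (Fin n)))
    (hdom : domh ⊆ domf)
    (hfconv : ConvexOn ℝ domf f) (hflsc : LowerSemicontinuousOn f domf)
    (hhconv : ConvexOn ℝ domh h) (hhlsc : LowerSemicontinuousOn h domh)
    (f' : EuclideanSpace ℝ (Fin n) → EuclideanSpace ℝ (Fin n))
    (hsubgrad : ∀ x ∈ domh, ∀ y ∈ domf, f y ≥ f x + ⟪f' x, y - x⟫)
    (M d₀ : ℝ) (hM : 0 < M) (hd₀ : 0 < d₀)
    (hMbound : ∀ x ∈ domh, ‖f' x‖ ≤ M)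
    -- every z ∈ dom f* satisfies ‖z‖ ≤ M
    (hdomconj : ∀ z : EuclideanSpace ℝ (Fin n), fconj domf f z ≠ ⊤ → ‖z‖ ≤ M)
    (x₀ : EuclideanSpace ℝ (Fin n)) (hx₀ : x₀ ∈ domh)
    (lam : ℝ) (hlam : 0 < lam)
    (Γ : ℕ → EuclideanSpace ℝ (Fin n) → ℝ)
    (x z u : ℕ → EuclideanSpace ℝ (Fin n))
    -- one-cut PDCP iterates with τ_j = j/(j+2)
    (hΓ1 : ∀ v, Γ 1 v = f x₀ + ⟪f' x₀, v - x₀⟫)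
    (hxmem : ∀ j, 1 ≤ j → x j ∈ domh)
    (hxmin : ∀ j, 1 ≤ j → ∀ v ∈ domh,
      Γ j (x j) + (h (x j) + ‖x j - x₀‖ ^ 2 / (2 * lam))
        ≤ Γ j v + (h v + ‖v - x₀‖ ^ 2 / (2 * lam)))
    (hΓrec : ∀ j, 1 ≤ j → ∀ v,
      Γ (j + 1) v = ((j : ℝ) / (j + 2)) * Γ j v
        + (1 - (j : ℝ) / (j + 2)) * (f (x j) + ⟪f' (x j), v - x j⟫))
    -- conditional-gradient iterates
    (hz1 : z 1 = f' x₀)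
    (hzrec : ∀ j, 1 ≤ j →
      z (j + 1) = ((j : ℝ) / (j + 2)) • z j + (1 - (j : ℝ) / (j + 2)) • f' (x j))
    -- averaged primal iterates u_j
    (hu1 : u 1 = x 1)
    (hurec : ∀ j, 1 ≤ j →
      u (j + 1) = ((j : ℝ) / (j + 2)) • u j + (1 - (j : ℝ) / (j + 2)) • x j)
    -- initial gap bound
    (hinit : ((f (x 1) + (h (x 1) + ‖x 1 - x₀‖ ^ 2 / (2 * lam)) : ℝ) : EReal)
        + (fconj domh (fun v => h v + ‖v - x₀‖ ^ 2 / (2 * lam)) (-(z 1))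
            + fconj domf f (z 1))
      ≤ ((4 * M * (3 * d₀ + lam * M) : ℝ) : EReal)) :
    ∀ j : ℕ, 1 ≤ j →
      ((f (u j) + (h (u j) + ‖u j - x₀‖ ^ 2 / (2 * lam)) : ℝ) : EReal)
          + (fconj domh (fun v => h v + ‖v - x₀‖ ^ 2 / (2 * lam)) (-(z j))
              + fconj domf f (z j))
        ≤ ((8 * M * (3 * d₀ + lam * M) / ((j : ℝ) * ((j : ℝ) + 1))
            + 8 * lam * M ^ 2 / ((j : ℝ) + 1) : ℝ) : EReal) := by
  have hdomhc : Convex ℝ domh := hhconv.1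
  have hxf : ∀ j, 1 ≤ j → x j ∈ domf := fun j hj => hdom (hxmem j hj)
  set hl : EuclideanSpace ℝ (Fin n) → ℝ := fun v => h v + ‖v - x₀‖ ^ 2 / (2 * lam) with hhl
  have hlx : ∀ w, hl w = h w + ‖w - x₀‖ ^ 2 / (2 * lam) := by intro w; rw [hhl]
  clear_value hl
  have combo : ∀ (a b : EuclideanSpace ℝ (Fin n)) (t : ℝ),
      ‖(1-t)•a + t•b‖^2 = (1-t)*‖a‖^2 + t*‖b‖^2 - t*(1-t)*‖a-b‖^2 := by
    intro a b t
    have h1 : ∀ y : EuclideanSpace ℝ (Fin n), ‖y‖^2 = ⟪y,y⟫ :=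
      fun y => (real_inner_self_eq_norm_sq y).symm
    rw [h1, h1, h1, h1]
    simp only [inner_add_left, inner_add_right, inner_sub_left, inner_sub_right,
      real_inner_smul_left, real_inner_smul_right, real_inner_comm a b]
    ring
  have hlcombo : ∀ v ∈ domh, ∀ w ∈ domh, ∀ t : ℝ, 0 ≤ t → t ≤ 1 →
      hl ((1-t)•v + t•w) ≤ (1-t) * hl v + t * hl w - t*(1-t)*(‖v-w‖^2/(2*lam)) := by
    intro v hv w hw t ht0 ht1
    have hh := hhconv.2 hv hw (show (0:ℝ) ≤ 1 - t by linarith) ht0 (by ring)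
    simp only [smul_eq_mul] at hh
    have hq : ((1-t)•v + t•w) - x₀ = (1-t)•(v-x₀) + t•(w-x₀) := by module
    have hq3 : (v-x₀)-(w-x₀) = v - w := by module
    have hq2 : ‖((1-t)•v + t•w) - x₀‖^2
        = (1-t)*‖v-x₀‖^2 + t*‖w-x₀‖^2 - t*(1-t)*‖v-w‖^2 := by
      rw [hq, combo, hq3]
    simp only [hlx]
    rw [hq2]
    have e1 : ((1-t)*‖v-x₀‖^2 + t*‖w-x₀‖^2 - t*(1-t)*‖v-w‖^2)/(2*lam)
        = (1-t)*(‖v-x₀‖^2/(2*lam)) + t*(‖w-x₀‖^2/(2*lam)) - t*(1-t)*(‖v-w‖^2/(2*lam)) := by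
      ring
    rw [e1]
    linarith
  have hτmem : ∀ j : ℕ, 0 ≤ (j:ℝ)/(j+2) ∧ (j:ℝ)/(j+2) ≤ 1 := by
    intro j
    have h0 : (0:ℝ) < (j:ℝ) + 2 := by positivity
    refine ⟨by positivity, ?_⟩
    rw [div_le_one h0]; linarith
  have haff : ∀ j, 1 ≤ j → ∀ v w, Γ j v = Γ j w + ⟪z j, v - w⟫ := by
    intro j hj
    induction j, hj using Nat.le_induction with
    | base =>
      intro v w
      rw [hΓ1, hΓ1, hz1]
      simp only [inner_sub_right]
      ring
    | succ j hj ih =>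
      intro v w
      rw [hΓrec j hj, hΓrec j hj, hzrec j hj, ih v w]
      simp only [inner_add_left, inner_sub_right, real_inner_smul_left]
      ring
  have hznorm : ∀ j, 1 ≤ j → ‖z j‖ ≤ M := by
    intro j hj
    induction j, hj using Nat.le_induction with
    | base => rw [hz1]; exact hMbound x₀ hx₀
    | succ j hj ih =>
      rw [hzrec j hj]
      obtain ⟨h0, h1⟩ := hτmem j
      have hb := hMbound (x j) (hxmem j hj)
      calc ‖((j:ℝ)/(j+2)) • z j + (1 - (j:ℝ)/(j+2)) • f' (x j)‖
          ≤ ‖((j:ℝ)/(j+2)) • z j‖ + ‖(1 - (j:ℝ)/(j+2)) • f' (x j)‖ := norm_add_le _ _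
        _ ≤ (j:ℝ)/(j+2) * M + (1 - (j:ℝ)/(j+2)) * M := by
            rw [norm_smul, norm_smul, Real.norm_eq_abs, Real.norm_eq_abs,
              abs_of_nonneg h0, abs_of_nonneg (by linarith : (0:ℝ) ≤ 1 - (j:ℝ)/(j+2))]
            have t1 := mul_le_mul_of_nonneg_left ih h0
            have t2 := mul_le_mul_of_nonneg_left hb
              (by linarith : (0:ℝ) ≤ 1 - (j:ℝ)/(j+2))
            linarith
        _ = M := by ring
  have hΓle : ∀ j, 1 ≤ j → ∀ v ∈ domf, Γ j v ≤ f v := by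
    intro j hj
    induction j, hj using Nat.le_induction with
    | base => intro v hv; rw [hΓ1]; exact hsubgrad x₀ hx₀ v hv
    | succ j hj ih =>
      intro v hv
      rw [hΓrec j hj]
      obtain ⟨h0, h1⟩ := hτmem j
      have t1 := mul_le_mul_of_nonneg_left (ih v hv) h0
      have t2 := mul_le_mul_of_nonneg_left (hsubgrad (x j) (hxmem j hj) v hv)
        (by linarith : (0:ℝ) ≤ 1 - (j:ℝ)/(j+2))
      linarith
  -- strong convexity of the prox subproblem
  have hstr : ∀ j, 1 ≤ j → ∀ v ∈ domh,
      Γ j (x j) + hl (x j) + ‖v - x j‖^2/(2*lam) ≤ Γ j v + hl v := by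
    intro j hj v hv
    have hxm' : ∀ w ∈ domh, Γ j (x j) + hl (x j) ≤ Γ j w + hl w := by
      intro w hw
      have := hxmin j hj w hw
      rw [hlx, hlx]
      linarith
    have hc : (0:ℝ) ≤ ‖v - x j‖^2/(2*lam) := by positivity
    have key : ∀ t : ℝ, 0 < t → t ≤ 1 →
        Γ j (x j) + hl (x j) + (1-t)*(‖v - x j‖^2/(2*lam)) ≤ Γ j v + hl v := by
      intro t ht0 ht1
      have hmem : (1-t)•(x j) + t•v ∈ domh :=
        hdomhc (hxmem j hj) hv (by linarith) (le_of_lt ht0) (by ring)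
      have hmin := hxm' _ hmem
      have hΓt : Γ j ((1-t)•(x j) + t•v) = (1-t)*Γ j (x j) + t * Γ j v := by
        rw [haff j hj ((1-t)•(x j) + t•v) (x j), haff j hj v (x j)]
        rw [show ((1-t)•(x j) + t•v) - x j = t • (v - x j) from by module,
          real_inner_smul_right]
        ring
      have hhlc := hlcombo (x j) (hxmem j hj) v hv t (le_of_lt ht0) ht1
      rw [hΓt] at hmin
      have hstep : t * (Γ j (x j) + hl (x j) + (1-t)*(‖x j - v‖^2/(2*lam)))
          ≤ t * (Γ j v + hl v) := by linarith
      have h2 := le_of_mul_le_mul_left hstep ht0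
      rw [norm_sub_rev] at h2
      linarith
    refine le_of_forall_pos_le_add ?_
    intro ε hε
    have hc1 : (0:ℝ) < ‖v - x j‖^2/(2*lam) + 1 := by linarith
    set t : ℝ := min (1/2) (ε/(‖v - x j‖^2/(2*lam)+1)) with htdef
    have ht0 : 0 < t := lt_min (by norm_num) (by positivity)
    have ht1 : t ≤ 1 := le_trans (min_le_left _ _) (by norm_num)
    have htc : t * (‖v - x j‖^2/(2*lam)) ≤ ε := by
      have h1 : t ≤ ε/(‖v - x j‖^2/(2*lam)+1) := min_le_right _ _
      have h2 := mul_le_mul_of_nonneg_right h1 hc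
      have h3 : (ε/(‖v - x j‖^2/(2*lam)+1)) * (‖v - x j‖^2/(2*lam)) ≤ ε := by
        rw [div_mul_eq_mul_div, div_le_iff₀ hc1]
        nlinarith
      linarith
    have := key t ht0 ht1
    linarith
  have humem : ∀ j, 1 ≤ j → u j ∈ domh := by
    intro j hj
    induction j, hj using Nat.le_induction with
    | base => rw [hu1]; exact hxmem 1 le_rfl
    | succ j hj ih =>
      rw [hurec j hj]
      obtain ⟨h0, h1⟩ := hτmem j
      exact hdomhc ih (hxmem j hj) h0 (by linarith) (by ring)
  -- dual bound: ψ(z j) ≤ -Λ j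
  have hψle : ∀ j, 1 ≤ j →
      fconj domh hl (-(z j)) + fconj domf f (z j)
        ≤ ((-(Γ j (x j) + hl (x j)) : ℝ) : EReal) := by
    intro j hj
    have Hh : fconj domh hl (-(z j)) ≤ ((-⟪z j, x j⟫ - hl (x j) : ℝ) : EReal) := by
      refine iSup₂_le ?_
      intro v hv
      apply EReal.coe_le_coe_iff.mpr
      have h1 := hxmin j hj v hv
      have h2 := haff j hj v (x j)
      rw [inner_sub_right] at h2
      simp only [inner_neg_left, hlx]
      linarith
    have Hf : fconj domf f (z j) ≤ ((⟪z j, x j⟫ - Γ j (x j) : ℝ) : EReal) := by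
      refine iSup₂_le ?_
      intro v hv
      apply EReal.coe_le_coe_iff.mpr
      have h1 := hΓle j hj v hv
      have h2 := haff j hj v (x j)
      rw [inner_sub_right] at h2
      linarith
    calc fconj domh hl (-(z j)) + fconj domf f (z j)
        ≤ ((-⟪z j, x j⟫ - hl (x j) : ℝ) : EReal) + ((⟪z j, x j⟫ - Γ j (x j) : ℝ) : EReal) :=
          add_le_add Hh Hf
      _ = ((-(Γ j (x j) + hl (x j)) : ℝ) : EReal) := by
          rw [← EReal.coe_add]
          exact congrArg _ (by ring)
  -- base gap
  have hbase : f (u 1) + hl (u 1) - (Γ 1 (x 1) + hl (x 1)) ≤ 4*M*(3*d₀+lam*M) := by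
    have Hh : ((-⟪z 1, x 1⟫ - hl (x 1) : ℝ) : EReal) ≤ fconj domh hl (-(z 1)) := by
      refine le_iSup₂_of_le (x 1) (hxmem 1 le_rfl) ?_
      apply EReal.coe_le_coe_iff.mpr
      rw [inner_neg_left]
    have Hf : ((⟪z 1, x₀⟫ - f x₀ : ℝ) : EReal) ≤ fconj domf f (z 1) :=
      le_iSup₂_of_le x₀ (hdom hx₀) le_rfl
    have hsum : ((-(Γ 1 (x 1) + hl (x 1)) : ℝ) : EReal)
        ≤ fconj domh hl (-(z 1)) + fconj domf f (z 1) := by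
      calc ((-(Γ 1 (x 1) + hl (x 1)) : ℝ) : EReal)
          = ((-⟪z 1, x 1⟫ - hl (x 1) : ℝ) : EReal) + ((⟪z 1, x₀⟫ - f x₀ : ℝ) : EReal) := by
            rw [← EReal.coe_add]
            refine congrArg _ ?_
            rw [hΓ1, hz1, inner_sub_right]
            ring
        _ ≤ _ := add_le_add Hh Hf
    have hchain : ((f (x 1) + (h (x 1) + ‖x 1 - x₀‖ ^ 2 / (2 * lam)) : ℝ) : EReal)
          + ((-(Γ 1 (x 1) + hl (x 1)) : ℝ) : EReal)
        ≤ ((4*M*(3*d₀+lam*M) : ℝ) : EReal) :=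
      le_trans (add_le_add le_rfl hsum) hinit
    rw [← EReal.coe_add] at hchain
    have h2 := EReal.coe_le_coe_iff.mp hchain
    rw [hu1]
    have e1 := hlx (x 1)
    linarith
  -- main gap induction
  have main : ∀ j, 1 ≤ j →
      f (u j) + hl (u j) - (Γ j (x j) + hl (x j))
        ≤ 8*M*(3*d₀+lam*M)/((j:ℝ)*((j:ℝ)+1)) + 8*lam*M^2/((j:ℝ)+1) := by
    intro j hj
    induction j, hj using Nat.le_induction with
    | base =>
      have hK : (0:ℝ) ≤ lam*M^2 := by positivity
      norm_num
      linarith [hbase]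
    | succ j hj ih =>
      have hjR : (1:ℝ) ≤ (j:ℝ) := by exact_mod_cast hj
      obtain ⟨hτ0, hτ1⟩ := hτmem j
      have hτ1' : (0:ℝ) ≤ 1 - (j:ℝ)/(j+2) := by linarith
      -- primal convexity bound
      have hφ : f (u (j+1)) + hl (u (j+1))
          ≤ ((j:ℝ)/(j+2))*(f (u j) + hl (u j))
            + (1 - (j:ℝ)/(j+2))*(f (x j) + hl (x j)) := by
        rw [hurec j hj]
        have hhu := hlcombo (u j) (humem j hj) (x j) (hxmem j hj)
          (1 - (j:ℝ)/(j+2)) hτ1' (by linarith)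
        rw [show (1-(1 - (j:ℝ)/(j+2))) = (j:ℝ)/(j+2) from by ring] at hhu
        have hfu := hfconv.2 (hdom (humem j hj)) (hxf j hj) hτ0 hτ1' (by ring)
        simp only [smul_eq_mul] at hfu
        have hpos : (0:ℝ) ≤ (1 - (j:ℝ)/(j+2))*((j:ℝ)/(j+2))*(‖u j - x j‖^2/(2*lam)) := by
          positivity
        linarith
      -- dual lower bound
      have hv1 : x (j+1) ∈ domh := hxmem (j+1) (by omega)
      have hstr1 := hstr j hj (x (j+1)) hv1
      have haf := haff j hj (x (j+1)) (x j)
      have hw : ‖f' (x j) - z j‖ ≤ 2*M := by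
        calc ‖f' (x j) - z j‖ ≤ ‖f' (x j)‖ + ‖z j‖ := norm_sub_le _ _
          _ ≤ 2*M := by linarith [hMbound (x j) (hxmem j hj), hznorm j hj]
      have hip : -(‖f' (x j) - z j‖ * ‖x (j+1) - x j‖)
          ≤ ⟪f' (x j), x (j+1) - x j⟫ - ⟪z j, x (j+1) - x j⟫ := by
        have h1 := abs_real_inner_le_norm (f' (x j) - z j) (x (j+1) - x j)
        have h2 := neg_abs_le ⟪f' (x j) - z j, x (j+1) - x j⟫
        rw [inner_sub_left] at h1 h2
        linarith
      have hquad : -(2*lam*M^2*(1 - (j:ℝ)/(j+2))^2)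
          ≤ (1 - (j:ℝ)/(j+2)) * (⟪f' (x j), x (j+1) - x j⟫ - ⟪z j, x (j+1) - x j⟫)
            + ‖x (j+1) - x j‖^2/(2*lam) :=
        aux_quad lam M (1 - (j:ℝ)/(j+2)) (‖f' (x j) - z j‖) (‖x (j+1) - x j‖)
          (⟪f' (x j), x (j+1) - x j⟫ - ⟪z j, x (j+1) - x j⟫)
          hlam (norm_nonneg _) (norm_nonneg _) hτ1' hw hip
      have hΛ : ((j:ℝ)/(j+2))*(Γ j (x j) + hl (x j))
            + (1 - (j:ℝ)/(j+2))*(f (x j) + hl (x j))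
            - 2*lam*M^2*(1 - (j:ℝ)/(j+2))^2
          ≤ Γ (j+1) (x (j+1)) + hl (x (j+1)) := by
        rw [hΓrec j hj]
        have t1 := mul_le_mul_of_nonneg_left hstr1 hτ0
        have hlv : hl (x j) + ‖x (j+1) - x j‖^2/(2*lam) - ⟪z j, x (j+1) - x j⟫
            ≤ hl (x (j+1)) := by linarith [hstr1, haf]
        have t2 := mul_le_mul_of_nonneg_left hlv hτ1'
        linarith [t1, t2, hquad]
      -- recursion for the gap
      have hrec : f (u (j+1)) + hl (u (j+1)) - (Γ (j+1) (x (j+1)) + hl (x (j+1)))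
          ≤ ((j:ℝ)/(j+2))*(f (u j) + hl (u j) - (Γ j (x j) + hl (x j)))
            + 2*lam*M^2*(1 - (j:ℝ)/(j+2))^2 := by
        linarith [hφ, hΛ]
      have hih := mul_le_mul_of_nonneg_left ih hτ0
      -- arithmetic
      have harith : ((j:ℝ)/(j+2))*(8*M*(3*d₀+lam*M)/((j:ℝ)*((j:ℝ)+1)) + 8*lam*M^2/((j:ℝ)+1))
            + 2*lam*M^2*(1 - (j:ℝ)/(j+2))^2
          ≤ 8*M*(3*d₀+lam*M)/(((j:ℝ)+1)*((j:ℝ)+1+1)) + 8*lam*M^2/((j:ℝ)+1+1) := by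
        have hj0 : (0:ℝ) < (j:ℝ) := by linarith
        have h1 : (0:ℝ) < (j:ℝ)+1 := by linarith
        have h2 : (0:ℝ) < (j:ℝ)+2 := by linarith
        rw [← sub_nonneg]
        have hexp : 8*M*(3*d₀+lam*M)/(((j:ℝ)+1)*((j:ℝ)+1+1)) + 8*lam*M^2/((j:ℝ)+1+1)
            - (((j:ℝ)/(j+2))*(8*M*(3*d₀+lam*M)/((j:ℝ)*((j:ℝ)+1)) + 8*lam*M^2/((j:ℝ)+1))
              + 2*lam*M^2*(1 - (j:ℝ)/(j+2))^2)
            = 8*(lam*M^2)/(((j:ℝ)+1)*((j:ℝ)+2)^2) := by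
          field_simp
          ring
        rw [hexp]
        positivity
      have hcast : ((j+1 : ℕ) : ℝ) = (j:ℝ)+1 := by push_cast; ring
      rw [hcast]
      linarith [hrec, hih, harith]
  -- final assembly
  intro j hj
  have hψ := hψle j hj
  have hG := main j hj
  have hG' : f (u j) + (h (u j) + ‖u j - x₀‖ ^ 2 / (2 * lam)) + -(Γ j (x j) + hl (x j))
      ≤ 8*M*(3*d₀+lam*M)/((j:ℝ)*((j:ℝ)+1)) + 8*lam*M^2/((j:ℝ)+1) := by
    have e1 := hlx (u j)
    linarith
  calc ((f (u j) + (h (u j) + ‖u j - x₀‖ ^ 2 / (2 * lam)) : ℝ) : EReal)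
        + (fconj domh hl (-(z j)) + fconj domf f (z j))
      ≤ ((f (u j) + (h (u j) + ‖u j - x₀‖ ^ 2 / (2 * lam)) : ℝ) : EReal)
        + ((-(Γ j (x j) + hl (x j)) : ℝ) : EReal) := add_le_add le_rfl hψ
    _ ≤ ((8 * M * (3 * d₀ + lam * M) / ((j : ℝ) * ((j : ℝ) + 1))
            + 8 * lam * M ^ 2 / ((j : ℝ) + 1) : ℝ) : EReal) := by
        rw [← EReal.coe_add]
        exact EReal.coe_le_coe_iff.mpr hG'
end

section
/- Let F₁, F₂ : ℝⁿ → ℝ be μ-strongly convex functions (μ > 0) with respective minimizers x₁* and x₂*. Assume the difference F₁ − F₂ is L-Lipschitz continuous for some L > 0. Then ‖x₁* − x₂*‖ ≤ L/μ. -/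
lemma min_gap {n : ℕ} (F : EuclideanSpace ℝ (Fin n) → ℝ) (μ : ℝ)
    (hF : StrongConvexOn Set.univ μ F) (x : EuclideanSpace ℝ (Fin n))
    (hx : ∀ y, F x ≤ F y) (y : EuclideanSpace ℝ (Fin n)) :
    F x + μ / 2 * ‖y - x‖ ^ 2 ≤ F y := by
  set c : ℝ := μ / 2 * ‖y - x‖ ^ 2 with hc
  have key : ∀ t : ℝ, 0 < t → t ≤ 1 → F x ≤ F y - (1 - t) * c := by
    intro t ht ht1
    have h := hF.2 (Set.mem_univ y) (Set.mem_univ x) (le_of_lt ht)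
      (by linarith : (0:ℝ) ≤ 1 - t) (by ring)
    have h2 := hx (t • y + (1 - t) • x)
    have := h2.trans h
    simp only [smul_eq_mul] at this
    have h3 : t * F x ≤ t * (F y - (1 - t) * c) := by rw [hc]; nlinarith
    exact (mul_le_mul_iff_right₀ ht).mp h3
  by_contra hcon
  push_neg at hcon
  set a : ℝ := F y - F x with ha
  have hac : a < c := by linarith
  have ha0 : 0 ≤ a := by have := hx y; linarith
  have hc0 : 0 < c := lt_of_le_of_lt ha0 hac
  have ht := key ((c - a) / (2 * c)) (div_pos (by linarith) (by linarith))
    (by rw [div_le_one (by linarith)]; linarith)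
  have : (1 - (c - a) / (2 * c)) * c = (c + a) / 2 := by
    field_simp; ring
  rw [this] at ht
  linarith

/-- if `F₁, F₂` are `μ`-strongly convex with minimizers `x₁*, x₂*` and
`F₁ - F₂` is `L`-Lipschitz, then `‖x₁* - x₂*‖ ≤ L/μ`. -/
theorem stmt9 {n : ℕ} (F₁ F₂ : EuclideanSpace ℝ (Fin n) → ℝ)
    (μ L : ℝ) (hμ : 0 < μ) (hL : 0 < L)
    (hF₁ : StrongConvexOn Set.univ μ F₁)
    (hF₂ : StrongConvexOn Set.univ μ F₂)
    (x₁ x₂ : EuclideanSpace ℝ (Fin n))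
    (hx₁ : ∀ y, F₁ x₁ ≤ F₁ y)
    (hx₂ : ∀ y, F₂ x₂ ≤ F₂ y)
    (hLip : ∀ x y, |(F₁ x - F₂ x) - (F₁ y - F₂ y)| ≤ L * ‖x - y‖) :
    ‖x₁ - x₂‖ ≤ L / μ := by
  have h1 := min_gap F₁ μ hF₁ x₁ hx₁ x₂
  have h2 := min_gap F₂ μ hF₂ x₂ hx₂ x₁
  have hL' := hLip x₂ x₁
  have hnorm : ‖x₂ - x₁‖ = ‖x₁ - x₂‖ := by rw [norm_sub_rev]
  rw [hnorm] at h1 hL'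
  have habs : (F₁ x₂ - F₂ x₂) - (F₁ x₁ - F₂ x₁) ≤ L * ‖x₁ - x₂‖ :=
    (le_abs_self _).trans hL'
  have hkey : μ * ‖x₁ - x₂‖ ^ 2 ≤ L * ‖x₁ - x₂‖ := by nlinarith
  rcases eq_or_lt_of_le (norm_nonneg (x₁ - x₂)) with h | h
  · rw [← h]; positivity
  · rw [le_div_iff₀ hμ]
    nlinarith
end

section
/- Let h : ℝⁿ → ℝ ∪ {+∞} be proper lower semicontinuous convex, x₀ ∈ ℝⁿ, λ > 0, M > 0, and let Γ, Γ′ : ℝⁿ → ℝ be convex and M-Lipschitz continuous. Let x be the minimizer of u ↦ Γ(u) + h(u) + ‖u − x₀‖²/(2λ) and x′ the minimizer of u ↦ Γ′(u) + h(u) + ‖u − x₀‖²/(2λ). Then ‖x − x′‖ ≤ 2λM. -/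
lemma stmt10_combo {n : ℕ} (a b : EuclideanSpace ℝ (Fin n)) (t : ℝ) :
    ‖(1-t)•a + t•b‖^2 = (1-t)*‖a‖^2 + t*‖b‖^2 - t*(1-t)*‖a-b‖^2 := by
  have h1 := norm_add_sq_real ((1-t)•a) (t•b)
  have h2 := norm_sub_sq_real a b
  rw [real_inner_smul_left, real_inner_smul_right] at h1
  rw [norm_smul, norm_smul] at h1
  rw [h1, h2]
  rw [mul_pow, mul_pow, Real.norm_eq_abs, Real.norm_eq_abs, sq_abs, sq_abs]
  ring

/-- stability of proximal cutting-plane iterates: if `Γ, Γ'` are convex and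
`M`-Lipschitz and `x, x'` minimize `Γ + h + ‖· - x₀‖²/(2λ)` and `Γ' + h + ‖· - x₀‖²/(2λ)`
respectively, then `‖x - x'‖ ≤ 2λM`. -/
theorem stmt10 {n : ℕ} (h : EuclideanSpace ℝ (Fin n) → ℝ)
    (domh : Set (EuclideanSpace ℝ (Fin n))) (hdomh : domh.Nonempty)
    (hhconv : ConvexOn ℝ domh h) (hhlsc : LowerSemicontinuousOn h domh)
    (x₀ : EuclideanSpace ℝ (Fin n))
    (lam M : ℝ) (hlam : 0 < lam) (hM : 0 < M)
    (Γ Γ' : EuclideanSpace ℝ (Fin n) → ℝ)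
    (hΓconv : ConvexOn ℝ Set.univ Γ) (hΓ'conv : ConvexOn ℝ Set.univ Γ')
    (hΓlip : ∀ u v, |Γ u - Γ v| ≤ M * ‖u - v‖)
    (hΓ'lip : ∀ u v, |Γ' u - Γ' v| ≤ M * ‖u - v‖)
    (x x' : EuclideanSpace ℝ (Fin n)) (hx : x ∈ domh) (hx' : x' ∈ domh)
    (hxmin : ∀ u ∈ domh,
      Γ x + h x + ‖x - x₀‖ ^ 2 / (2 * lam) ≤ Γ u + h u + ‖u - x₀‖ ^ 2 / (2 * lam))
    (hx'min : ∀ u ∈ domh,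
      Γ' x' + h x' + ‖x' - x₀‖ ^ 2 / (2 * lam) ≤ Γ' u + h u + ‖u - x₀‖ ^ 2 / (2 * lam)) :
    ‖x - x'‖ ≤ 2 * lam * M := by
  set d : ℝ := ‖x - x'‖ with hd
  have hd0 : 0 ≤ d := norm_nonneg _
  have hlam2 : (0:ℝ) < 2 * lam := by linarith
  -- strong minimality principle
  have strong : ∀ (G : EuclideanSpace ℝ (Fin n) → ℝ), ConvexOn ℝ Set.univ G →
      ∀ (z z' : EuclideanSpace ℝ (Fin n)), z ∈ domh → z' ∈ domh →
      (∀ u ∈ domh, G z + h z + ‖z - x₀‖ ^ 2 / (2 * lam) ≤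
        G u + h u + ‖u - x₀‖ ^ 2 / (2 * lam)) →
      ∀ t : ℝ, 0 < t → t < 1 →
      G z + h z + ‖z - x₀‖ ^ 2 / (2 * lam) + (1 - t) * (‖z - z'‖ ^ 2 / (2 * lam)) ≤
        G z' + h z' + ‖z' - x₀‖ ^ 2 / (2 * lam) := by
    intro G hG z z' hz hz' hmin t ht0 ht1
    have ht0' : (0:ℝ) ≤ 1 - t := by linarith
    have hsum : (1 - t) + t = 1 := by ring
    set y : EuclideanSpace ℝ (Fin n) := (1 - t) • z + t • z' with hy
    have hymem : y ∈ domh := hhconv.1 hz hz' ht0' ht0.le hsum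
    have hGy : G y ≤ (1 - t) * G z + t * G z' :=
      hG.2 (Set.mem_univ z) (Set.mem_univ z') ht0' ht0.le hsum
    have hhy : h y ≤ (1 - t) * h z + t * h z' :=
      hhconv.2 hz hz' ht0' ht0.le hsum
    have hqy : ‖y - x₀‖ ^ 2 = (1 - t) * ‖z - x₀‖ ^ 2 + t * ‖z' - x₀‖ ^ 2
        - t * (1 - t) * ‖z - z'‖ ^ 2 := by
      have hyx : y - x₀ = (1 - t) • (z - x₀) + t • (z' - x₀) := by
        rw [hy]; module
      have harg : z - x₀ - (z' - x₀) = z - z' := by abel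
      rw [hyx, stmt10_combo, harg]
    have h1 := hmin y hymem
    set A : ℝ := G z + h z + ‖z - x₀‖ ^ 2 / (2 * lam) with hA
    set B : ℝ := G z' + h z' + ‖z' - x₀‖ ^ 2 / (2 * lam) with hB
    set C : ℝ := ‖z - z'‖ ^ 2 / (2 * lam) with hC
    have key : A ≤ (1 - t) * A + t * B - t * (1 - t) * C := by
      calc A ≤ G y + h y + ‖y - x₀‖ ^ 2 / (2 * lam) := h1
        _ ≤ ((1 - t) * G z + t * G z') + ((1 - t) * h z + t * h z') +
            ((1 - t) * ‖z - x₀‖ ^ 2 + t * ‖z' - x₀‖ ^ 2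
              - t * (1 - t) * ‖z - z'‖ ^ 2) / (2 * lam) := by
            rw [hqy]; gcongr
        _ = (1 - t) * A + t * B - t * (1 - t) * C := by
            rw [hA, hB, hC]; field_simp; ring
    have h3 : t * (A + (1 - t) * C) ≤ t * B := by nlinarith [key]
    have h4 : A + (1 - t) * C ≤ B := le_of_mul_le_mul_left h3 ht0
    exact h4
  -- main inequality for all t ∈ (0,1)
  have hmain : ∀ t : ℝ, 0 < t → t < 1 → (1 - t) * d ^ 2 ≤ 2 * lam * M * d := by
    intro t ht0 ht1
    have hA := strong Γ hΓconv x x' hx hx' hxmin t ht0 ht1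
    have hB := strong Γ' hΓ'conv x' x hx' hx hx'min t ht0 ht1
    have hrev : ‖x' - x‖ = d := by rw [hd, norm_sub_rev]
    rw [hrev] at hB
    have e1 : Γ x' - Γ x ≤ M * d := by
      have l := hΓlip x' x
      rw [norm_sub_rev] at l
      have := le_abs_self (Γ x' - Γ x)
      linarith
    have e2 : Γ' x - Γ' x' ≤ M * d := by
      have l := hΓ'lip x x'
      have := le_abs_self (Γ' x - Γ' x')
      linarith
    have h2 : (1 - t) * (d ^ 2 / (2 * lam)) ≤ M * d := by linarith
    have h3 : (1 - t) * d ^ 2 / (2 * lam) ≤ M * d := by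
      rw [mul_div_assoc]; exact h2
    have h4 : (1 - t) * d ^ 2 ≤ M * d * (2 * lam) := (div_le_iff₀ hlam2).mp h3
    linarith
  -- pass to the limit t → 0
  have hsq : d ^ 2 ≤ 2 * lam * M * d := by
    by_contra hc
    push_neg at hc
    have hnn : 0 ≤ 2 * lam * M * d := by positivity
    have hdd : 0 < d ^ 2 := by linarith
    set t : ℝ := (d ^ 2 - 2 * lam * M * d) / (2 * d ^ 2) with ht
    have ht0 : 0 < t := div_pos (by linarith) (by positivity)
    have ht1 : t < 1 := by
      rw [ht, div_lt_one (by positivity)]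
      nlinarith [mul_nonneg (mul_nonneg (by linarith : (0:ℝ) ≤ 2 * lam) hM.le) hd0]
    have heq : (1 - t) * d ^ 2 = (d ^ 2 + 2 * lam * M * d) / 2 := by
      have hdne : d ≠ 0 := by rintro h0; rw [h0] at hdd; norm_num at hdd
      rw [ht]; field_simp; ring
    have := hmain t ht0 ht1
    rw [heq] at this
    linarith
  -- conclude
  rcases hd0.lt_or_eq with hdpos | hdz
  · nlinarith
  · rw [← hdz]; positivity
end

section
/- Let f, h : ℝⁿ → ℝ ∪ {+∞} be proper lower semicontinuous convex with dom h ⊆ dom f, let f′ be a subgradient selection with ‖f′(x)‖ ≤ M on dom h, x₀ ∈ dom h, λ > 0, h^λ(u) = h(u) + ‖u − x₀‖²/(2λ), φ^λ = f + h^λ. Suppose sequences (Γ_j), (Γ̄_j) of convex functions and points (x_j) satisfy: Γ₁ = ℓ_f(·; x₀); each Γ_j is M-Lipschitz continuous; for every j ≥ 1, x_j minimizes Γ_j + h^λ and also minimizes Γ̄_j + h^λ with Γ̄_j(x_j) = Γ_j(x_j) and Γ̄_j ≤ f; and Γ_{j+1} ≥ max{Γ̄_j, ℓ_f(·; x_j)}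 with Γ_{j+1} ≤ f. Let m_j = min (Γ_j + h^λ), A_j = j(j+1)/2, x̂₂ = x₂ and x̂_j = (3x₂ + ∑_{i=3}^j i·x_i)/A_j for j ≥ 3, and t̂_j = φ^λ(x̂_j) − m_j. Then for every j ≥ 2, t̂_j ≤ 16λM²/(j+1). -/
open RealInnerProductSpace

lemma qconv_aux {n : ℕ} (x₀ : EuclideanSpace ℝ (Fin n)) (lam : ℝ) (hlam : 0 < lam) :
    ConvexOn ℝ Set.univ fun u : EuclideanSpace ℝ (Fin n) => ‖u - x₀‖ ^ 2 / (2 * lam) := by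
  constructor
  · exact convex_univ
  · intro u _ v _ a b ha hb hab
    simp only [smul_eq_mul]
    have h1 : a • u + b • v - x₀ = a • (u - x₀) + b • (v - x₀) := by
      have h2 : a • u + b • v - x₀ = a • (u - x₀) + b • (v - x₀) + ((a + b) - 1) • x₀ := by
        module
      rw [h2, hab]; simp
    have hb' : b = 1 - a := by linarith
    have key : ‖a • (u - x₀) + b • (v - x₀)‖ ^ 2 ≤ a * ‖u - x₀‖ ^ 2 + b * ‖v - x₀‖ ^ 2 := by
      rw [norm_add_sq_real, real_inner_smul_left, real_inner_smul_right, norm_smul, norm_smul,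
        Real.norm_eq_abs, Real.norm_eq_abs, abs_of_nonneg ha, abs_of_nonneg hb]
      have hin := real_inner_le_norm (u - x₀) (v - x₀)
      have hin2 := mul_le_mul_of_nonneg_left hin (mul_nonneg ha hb)
      subst hb'
      nlinarith [mul_nonneg (mul_nonneg ha hb) (sq_nonneg (‖u - x₀‖ - ‖v - x₀‖)),
        norm_nonneg (u - x₀), norm_nonneg (v - x₀)]
    rw [h1, div_le_iff₀ (by linarith : (0:ℝ) < 2 * lam)]
    have e : (a * (‖u - x₀‖ ^ 2 / (2 * lam)) + b * (‖v - x₀‖ ^ 2 / (2 * lam))) * (2 * lam)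
        = a * ‖u - x₀‖ ^ 2 + b * ‖v - x₀‖ ^ 2 := by
      field_simp
    rw [e]; exact key

lemma sc_aux {n : ℕ} {domh : Set (EuclideanSpace ℝ (Fin n))}
    (g₁ g₂ : EuclideanSpace ℝ (Fin n) → ℝ)
    (hdomh : Convex ℝ domh)
    (hg₁ : ConvexOn ℝ domh g₁) (hg₂ : ConvexOn ℝ domh g₂)
    (x₀ z : EuclideanSpace ℝ (Fin n)) (lam : ℝ) (hlam : 0 < lam) (hz : z ∈ domh)
    (hmin : ∀ u ∈ domh, g₁ z + (g₂ z + ‖z - x₀‖ ^ 2 / (2 * lam))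
      ≤ g₁ u + (g₂ u + ‖u - x₀‖ ^ 2 / (2 * lam)))
    (u : EuclideanSpace ℝ (Fin n)) (hu : u ∈ domh) :
    g₁ z + (g₂ z + ‖z - x₀‖ ^ 2 / (2 * lam)) + ‖u - z‖ ^ 2 / (2 * lam)
      ≤ g₁ u + (g₂ u + ‖u - x₀‖ ^ 2 / (2 * lam)) := by
  have hlam' : lam ≠ 0 := hlam.ne'
  obtain ⟨E, hE⟩ : ∃ E : ℝ, E = (g₁ u - g₁ z) + (g₂ u - g₂ z) + ⟪z - x₀, u - z⟫ / lam := ⟨_, rfl⟩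
  obtain ⟨K, hK⟩ : ∃ K : ℝ, K = ‖u - z‖ ^ 2 / (2 * lam) := ⟨_, rfl⟩
  have hK0 : 0 ≤ K := by rw [hK]; positivity
  have key : ∀ t : ℝ, 0 < t → t ≤ 1 → 0 ≤ E + t * K := by
    intro t ht0 ht1
    have ha : (0:ℝ) ≤ 1 - t := by linarith
    have hzt : (1 - t) • z + t • u ∈ domh := hdomh hz hu ha ht0.le (by ring)
    have hgz := hg₁.2 hz hu ha ht0.le (by ring)
    have hhz := hg₂.2 hz hu ha ht0.le (by ring)
    simp only [smul_eq_mul] at hgz hhz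
    have hmin' := hmin _ hzt
    have hpt : (1 - t) • z + t • u - x₀ = (z - x₀) + t • (u - z) := by module
    have hnorm : ‖(1 - t) • z + t • u - x₀‖ ^ 2
        = ‖z - x₀‖ ^ 2 + 2 * t * ⟪z - x₀, u - z⟫ + t ^ 2 * ‖u - z‖ ^ 2 := by
      rw [hpt, norm_add_sq_real, real_inner_smul_right, norm_smul, Real.norm_eq_abs,
        abs_of_pos ht0]
      ring
    have step : 0 ≤ t * (E + t * K) := by
      have e1 : t * (E + t * K)
          = ((1 - t) * g₁ z + t * g₁ u
            + ((1 - t) * g₂ z + t * g₂ u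
              + (‖z - x₀‖ ^ 2 + 2 * t * ⟪z - x₀, u - z⟫ + t ^ 2 * ‖u - z‖ ^ 2) / (2 * lam)))
            - (g₁ z + (g₂ z + ‖z - x₀‖ ^ 2 / (2 * lam))) := by
        rw [hE, hK]; field_simp; ring
      rw [e1, ← hnorm]
      linarith [hgz, hhz, hmin']
    nlinarith [step, ht0]
  have hE0 : 0 ≤ E := by
    by_contra hneg
    push_neg at hneg
    obtain ⟨c, hc⟩ : ∃ c : ℝ, c = -E := ⟨_, rfl⟩
    have hc0 : 0 < c := by rw [hc]; linarith
    obtain ⟨t₀, ht₀⟩ : ∃ t₀ : ℝ, t₀ = min 1 (c / (2 * (K + 1))) := ⟨_, rfl⟩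
    have ht₀0 : 0 < t₀ := by rw [ht₀]; exact lt_min one_pos (by positivity)
    have ht₀1 : t₀ ≤ 1 := by rw [ht₀]; exact min_le_left _ _
    have h1 := key t₀ ht₀0 ht₀1
    have h2 : t₀ * K ≤ (c / (2 * (K + 1))) * K := by
      apply mul_le_mul_of_nonneg_right _ hK0
      rw [ht₀]; exact min_le_right _ _
    have h3 : (c / (2 * (K + 1))) * K ≤ c / 2 := by
      rw [div_mul_eq_mul_div, div_le_div_iff₀ (by positivity) (by norm_num : (0:ℝ) < 2)]
      nlinarith
    linarith
  have hnu : ‖u - x₀‖ ^ 2 = ‖z - x₀‖ ^ 2 + 2 * ⟪z - x₀, u - z⟫ + ‖u - z‖ ^ 2 := by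
    have h4 : u - x₀ = (z - x₀) + (u - z) := by abel
    rw [h4, norm_add_sq_real]
  have h5 : ‖u - x₀‖ ^ 2 / (2 * lam)
      = ‖z - x₀‖ ^ 2 / (2 * lam) + ⟪z - x₀, u - z⟫ / lam + ‖u - z‖ ^ 2 / (2 * lam) := by
    rw [hnu]; field_simp
  rw [h5]
  rw [hE] at hE0
  linarith

lemma quad_aux (kr d lam M : ℝ) (hk : 2 ≤ kr) (hd : 0 ≤ d) (hlam : 0 < lam) (hM : 0 < M) :
    2 * M * (kr + 1) * d ≤ kr * (kr + 1) / 2 * (d ^ 2 / (2 * lam)) + 6 * lam * M ^ 2 := by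
  have hlam4 : (0:ℝ) < 4 * lam := by linarith
  have hkpos : (0:ℝ) < kr := by linarith
  have key2 : 0 ≤ (kr * (kr + 1) * d ^ 2 + 24 * lam ^ 2 * M ^ 2
      - 8 * lam * M * (kr + 1) * d) * kr := by
    nlinarith [mul_nonneg (by linarith : (0:ℝ) ≤ kr + 1) (sq_nonneg (kr * d - 4 * lam * M)),
      mul_nonneg (by linarith : (0:ℝ) ≤ kr - 2) (mul_nonneg (sq_nonneg lam) (sq_nonneg M))]
  have key1 : 0 ≤ kr * (kr + 1) * d ^ 2 + 24 * lam ^ 2 * M ^ 2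
      - 8 * lam * M * (kr + 1) * d := by
    nlinarith [key2, hkpos]
  have e : kr * (kr + 1) / 2 * (d ^ 2 / (2 * lam)) = (kr * (kr + 1) * d ^ 2) / (4 * lam) := by
    rw [div_mul_div_comm]
    congr 1
    ring
  rw [e, ← sub_le_iff_le_add, le_div_iff₀ hlam4]
  nlinarith [key1]

set_option maxHeartbeats 1000000 in

/-- improved rate `t̂_j ≤ 16 λ M²/(j+1)` for the cutting-plane scheme under
the stronger bundle condition `Γ_{j+1} ≥ max{Γ̄_j, ℓ_f(·; x_j)}` with `M`-Lipschitz models,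
where `x̂₂ = x₂`, `x̂_j = (3x₂ + ∑_{i=3}^j i·x_i)/A_j`, `A_j = j(j+1)/2`,
and `t̂_j = φ^λ(x̂_j) - m_j`. -/
theorem stmt11 {n : ℕ} (f h : EuclideanSpace ℝ (Fin n) → ℝ)
    (domf domh : Set (EuclideanSpace ℝ (Fin n)))
    (hdom : domh ⊆ domf)
    (hfconv : ConvexOn ℝ domf f) (hflsc : LowerSemicontinuousOn f domf)
    (hhconv : ConvexOn ℝ domh h) (hhlsc : LowerSemicontinuousOn h domh)
    (f' : EuclideanSpace ℝ (Fin n) → EuclideanSpace ℝ (Fin n)) (M : ℝ) (hM : 0 < M)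
    (hsubgrad : ∀ x ∈ domh, ∀ y ∈ domf, f y ≥ f x + ⟪f' x, y - x⟫)
    (hMbound : ∀ x ∈ domh, ‖f' x‖ ≤ M)
    (x₀ : EuclideanSpace ℝ (Fin n)) (hx₀ : x₀ ∈ domh)
    (lam : ℝ) (hlam : 0 < lam)
    (Γ Γb : ℕ → EuclideanSpace ℝ (Fin n) → ℝ)
    (x : ℕ → EuclideanSpace ℝ (Fin n))
    -- Γ₁ = ℓ_f(·; x₀)
    (hΓ1 : ∀ u, Γ 1 u = f x₀ + ⟪f' x₀, u - x₀⟫)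
    -- each Γ_j is convex and M-Lipschitz continuous
    (hΓconv : ∀ j, 1 ≤ j → ConvexOn ℝ Set.univ (Γ j))
    (hΓbconv : ∀ j, 1 ≤ j → ConvexOn ℝ Set.univ (Γb j))
    (hΓlip : ∀ j, 1 ≤ j → ∀ u v, |Γ j u - Γ j v| ≤ M * ‖u - v‖)
    -- x_j minimizes Γ_j + h^λ and Γ̄_j + h^λ, with matching values at x_j, Γ̄_j ≤ f
    (hxmem : ∀ j, 1 ≤ j → x j ∈ domh)
    (hxmin : ∀ j, 1 ≤ j → ∀ u ∈ domh,
      Γ j (x j) + (h (x j) + ‖x j - x₀‖ ^ 2 / (2 * lam))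
        ≤ Γ j u + (h u + ‖u - x₀‖ ^ 2 / (2 * lam)))
    (hxminb : ∀ j, 1 ≤ j → ∀ u ∈ domh,
      Γb j (x j) + (h (x j) + ‖x j - x₀‖ ^ 2 / (2 * lam))
        ≤ Γb j u + (h u + ‖u - x₀‖ ^ 2 / (2 * lam)))
    (hΓbeq : ∀ j, 1 ≤ j → Γb j (x j) = Γ j (x j))
    (hΓblef : ∀ j, 1 ≤ j → ∀ u ∈ domf, Γb j u ≤ f u)
    -- stronger bundle condition: Γ_{j+1} ≥ max{Γ̄_j, ℓ_f(·; x_j)} and Γ_{j+1} ≤ f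
    (hupdate : ∀ j, 1 ≤ j → ∀ u,
      Γ (j + 1) u ≥ max (Γb j u) (f (x j) + ⟪f' (x j), u - x j⟫))
    (hΓlef : ∀ j, 1 ≤ j → ∀ u ∈ domf, Γ (j + 1) u ≤ f u) :
    ∀ j : ℕ, 2 ≤ j →
      (f (((j : ℝ) * ((j : ℝ) + 1) / 2)⁻¹ •
            ((3 : ℝ) • x 2 + ∑ i ∈ Finset.Icc 3 j, (i : ℝ) • x i))
        + (h (((j : ℝ) * ((j : ℝ) + 1) / 2)⁻¹ •
            ((3 : ℝ) • x 2 + ∑ i ∈ Finset.Icc 3 j, (i : ℝ) • x i))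
          + ‖(((j : ℝ) * ((j : ℝ) + 1) / 2)⁻¹ •
            ((3 : ℝ) • x 2 + ∑ i ∈ Finset.Icc 3 j, (i : ℝ) • x i)) - x₀‖ ^ 2 / (2 * lam)))
        - (Γ j (x j) + (h (x j) + ‖x j - x₀‖ ^ 2 / (2 * lam)))
      ≤ 16 * lam * M ^ 2 / ((j : ℝ) + 1) := by
  classical
  have hDconv : Convex ℝ domh := hhconv.1
  -- strong convexity at the minimizers
  have hscΓ : ∀ k, 1 ≤ k → ∀ u ∈ domh,
      Γ k (x k) + (h (x k) + ‖x k - x₀‖ ^ 2 / (2 * lam)) + ‖u - x k‖ ^ 2 / (2 * lam)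
        ≤ Γ k u + (h u + ‖u - x₀‖ ^ 2 / (2 * lam)) := fun k hk u hu =>
    sc_aux (Γ k) h hDconv ((hΓconv k hk).subset (Set.subset_univ _) hDconv) hhconv
      x₀ (x k) lam hlam (hxmem k hk) (hxmin k hk) u hu
  have hscΓb : ∀ k, 1 ≤ k → ∀ u ∈ domh,
      Γb k (x k) + (h (x k) + ‖x k - x₀‖ ^ 2 / (2 * lam)) + ‖u - x k‖ ^ 2 / (2 * lam)
        ≤ Γb k u + (h u + ‖u - x₀‖ ^ 2 / (2 * lam)) := fun k hk u hu =>
    sc_aux (Γb k) h hDconv ((hΓbconv k hk).subset (Set.subset_univ _) hDconv) hhconv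
      x₀ (x k) lam hlam (hxmem k hk) (hxminb k hk) u hu
  -- Γ_{k+1} (x k) = f (x k)
  have hcut : ∀ k, 1 ≤ k → f (x k) ≤ Γ (k + 1) (x k) := by
    intro k hk
    have := hupdate k hk (x k)
    have h0 : f (x k) + ⟪f' (x k), x k - x k⟫ = f (x k) := by
      simp
    calc f (x k) = f (x k) + ⟪f' (x k), x k - x k⟫ := h0.symm
      _ ≤ max (Γb k (x k)) (f (x k) + ⟪f' (x k), x k - x k⟫) := le_max_right _ _
      _ ≤ Γ (k + 1) (x k) := this
  -- t bound: f(x_{k+1}) ≤ Γ_{k+1}(x_{k+1}) + 2 M d_k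
  have htb : ∀ k, 1 ≤ k →
      f (x (k + 1)) ≤ Γ (k + 1) (x (k + 1)) + 2 * M * ‖x (k + 1) - x k‖ := by
    intro k hk
    have hk1 : 1 ≤ k + 1 := by omega
    have hsub := hsubgrad (x (k + 1)) (hxmem (k + 1) hk1) (x k) (hdom (hxmem k hk))
    have hineq : |⟪f' (x (k + 1)), x k - x (k + 1)⟫| ≤ M * ‖x (k + 1) - x k‖ := by
      calc |⟪f' (x (k + 1)), x k - x (k + 1)⟫| ≤ ‖f' (x (k + 1))‖ * ‖x k - x (k + 1)‖ :=
            abs_real_inner_le_norm _ _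
        _ ≤ M * ‖x k - x (k + 1)‖ := by
            apply mul_le_mul_of_nonneg_right (hMbound _ (hxmem (k + 1) hk1)) (norm_nonneg _)
        _ = M * ‖x (k + 1) - x k‖ := by rw [norm_sub_rev]
    have h1 : f (x (k + 1)) ≤ f (x k) + M * ‖x (k + 1) - x k‖ := by
      have := abs_le.mp hineq
      linarith [hsub]
    have h2 := hcut k hk
    have hlip := hΓlip (k + 1) hk1 (x (k + 1)) (x k)
    have h3 := abs_le.mp hlip
    linarith [h3.1]
  -- monotonicity with strong-convexity gain
  have hmrec : ∀ k, 1 ≤ k →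
      Γ k (x k) + (h (x k) + ‖x k - x₀‖ ^ 2 / (2 * lam)) + ‖x (k + 1) - x k‖ ^ 2 / (2 * lam)
        ≤ Γ (k + 1) (x (k + 1)) + (h (x (k + 1)) + ‖x (k + 1) - x₀‖ ^ 2 / (2 * lam)) := by
    intro k hk
    have hk1 : 1 ≤ k + 1 := by omega
    have hsc := hscΓb k hk (x (k + 1)) (hxmem (k + 1) hk1)
    have hup : Γb k (x (k + 1)) ≤ Γ (k + 1) (x (k + 1)) :=
      le_trans (le_max_left _ _) (hupdate k hk (x (k + 1)))
    have heq := hΓbeq k hk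
    linarith
  -- d_k ≤ 2 λ M
  have hd : ∀ k, 1 ≤ k → ‖x (k + 1) - x k‖ ≤ 2 * lam * M := by
    intro k hk
    have hk1 : 1 ≤ k + 1 := by omega
    have s1 := hscΓ k hk (x (k + 1)) (hxmem (k + 1) hk1)
    have s2 := hscΓ (k + 1) hk1 (x k) (hxmem k hk)
    rw [show ‖x k - x (k + 1)‖ = ‖x (k + 1) - x k‖ from norm_sub_rev _ _] at s2
    have l1 := abs_le.mp (hΓlip k hk (x (k + 1)) (x k))
    have l2 := abs_le.mp (hΓlip (k + 1) hk1 (x k) (x (k + 1)))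
    rw [show ‖x k - x (k + 1)‖ = ‖x (k + 1) - x k‖ from norm_sub_rev _ _] at l2
    have hdd : ‖x (k + 1) - x k‖ ^ 2 / (2 * lam) + ‖x (k + 1) - x k‖ ^ 2 / (2 * lam)
        ≤ 2 * M * ‖x (k + 1) - x k‖ := by linarith [l1.2, l2.2]
    have hsq : ‖x (k + 1) - x k‖ ^ 2 ≤ 2 * lam * M * ‖x (k + 1) - x k‖ := by
      rw [← add_div] at hdd
      have := (div_le_iff₀ (by linarith : (0:ℝ) < 2 * lam)).mp hdd
      nlinarith [this]
    nlinarith [hsq, norm_nonneg (x (k + 1) - x k), mul_pos hlam hM]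
  -- main induction: weighted sum bound
  have main : ∀ k : ℕ, 2 ≤ k →
      3 * (f (x 2) + (h (x 2) + ‖x 2 - x₀‖ ^ 2 / (2 * lam)))
        + ∑ i ∈ Finset.Icc 3 k, (i : ℝ) * (f (x i) + (h (x i) + ‖x i - x₀‖ ^ 2 / (2 * lam)))
      ≤ (k : ℝ) * ((k : ℝ) + 1) / 2
          * (Γ k (x k) + (h (x k) + ‖x k - x₀‖ ^ 2 / (2 * lam)))
        + 6 * lam * M ^ 2 * (k : ℝ) := by
    intro k hk
    induction k, hk using Nat.le_induction with
    | base =>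
      rw [show Finset.Icc 3 2 = ∅ from Finset.Icc_eq_empty (by norm_num)]
      simp only [Finset.sum_empty, add_zero]
      have h1 := htb 1 le_rfl
      have h2 := hd 1 le_rfl
      have h3 : 2 * M * ‖x (1 + 1) - x 1‖ ≤ 2 * M * (2 * lam * M) :=
        mul_le_mul_of_nonneg_left h2 (by linarith)
      norm_num at h1 h3 ⊢
      nlinarith [h1, h3]
    | succ k hk2 ih =>
      have hk1 : 1 ≤ k := by omega
      rw [Finset.sum_Icc_succ_top (by omega : 3 ≤ k + 1)]
      have hkr : (2:ℝ) ≤ (k:ℝ) := by exact_mod_cast hk2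
      obtain ⟨d, hdd⟩ : ∃ d : ℝ, d = ‖x (k + 1) - x k‖ := ⟨_, rfl⟩
      have hd0 : 0 ≤ d := hdd ▸ norm_nonneg _
      obtain ⟨mk, hmk⟩ : ∃ m : ℝ, m = Γ k (x k) + (h (x k) + ‖x k - x₀‖ ^ 2 / (2 * lam)) :=
        ⟨_, rfl⟩
      obtain ⟨mk1, hmk1⟩ : ∃ m : ℝ,
          m = Γ (k + 1) (x (k + 1)) + (h (x (k + 1)) + ‖x (k + 1) - x₀‖ ^ 2 / (2 * lam)) :=
        ⟨_, rfl⟩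
      have hrec : mk + d ^ 2 / (2 * lam) ≤ mk1 := by
        rw [hmk, hmk1, hdd]; exact hmrec k hk1
      have hfb : f (x (k + 1)) + (h (x (k + 1)) + ‖x (k + 1) - x₀‖ ^ 2 / (2 * lam))
          ≤ mk1 + 2 * M * d := by
        rw [hmk1, hdd]; linarith [htb k hk1]
      have hkpos : (0:ℝ) < (k:ℝ) := by linarith
      have quad : 2 * M * ((k:ℝ) + 1) * d
          ≤ (k:ℝ) * ((k:ℝ) + 1) / 2 * (d ^ 2 / (2 * lam)) + 6 * lam * M ^ 2 :=
        quad_aux _ _ _ _ hkr hd0 hlam hM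
      -- combine
      have hAk : (0:ℝ) ≤ (k:ℝ) * ((k:ℝ) + 1) / 2 := by positivity
      have hmono : (k:ℝ) * ((k:ℝ) + 1) / 2 * (mk + d ^ 2 / (2 * lam))
          ≤ (k:ℝ) * ((k:ℝ) + 1) / 2 * mk1 :=
        mul_le_mul_of_nonneg_left hrec hAk
      have hterm : ((k:ℝ) + 1) * (f (x (k + 1)) + (h (x (k + 1)) + ‖x (k + 1) - x₀‖ ^ 2 / (2 * lam)))
          ≤ ((k:ℝ) + 1) * (mk1 + 2 * M * d) :=
        mul_le_mul_of_nonneg_left hfb (by linarith)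
      rw [← hmk] at ih
      push_cast
      rw [← hmk1]
      linarith [ih, hmono, hterm, quad]
  -- Jensen and conclusion
  intro j hj
  have hjr : (2:ℝ) ≤ (j:ℝ) := by exact_mod_cast hj
  have hA : (0:ℝ) < (j:ℝ) * ((j:ℝ) + 1) / 2 := by nlinarith
  have hIcc : Finset.Icc 2 j = insert 2 (Finset.Icc 3 j) := by
    ext a
    simp only [Finset.mem_Icc, Finset.mem_insert]
    omega
  have h2notin : (2:ℕ) ∉ Finset.Icc 3 j := by simp
  have hconvφ : ConvexOn ℝ domh
      (fun u => f u + (h u + ‖u - x₀‖ ^ 2 / (2 * lam))) :=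
    (hfconv.subset hdom hDconv).add
      (hhconv.add ((qconv_aux x₀ lam hlam).subset (Set.subset_univ _) hDconv))
  have hw0 : ∀ i ∈ Finset.Icc 2 j,
      0 ≤ (if i = 2 then (3:ℝ) else (i:ℝ)) / ((j:ℝ) * ((j:ℝ) + 1) / 2) := by
    intro i _
    apply div_nonneg _ hA.le
    split <;> positivity
  have hcsum : ∀ k : ℕ, 2 ≤ k → ∑ i ∈ Finset.Icc 2 k, (if i = 2 then (3:ℝ) else (i:ℝ))
      = (k:ℝ) * ((k:ℝ) + 1) / 2 := by
    intro k hk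
    induction k, hk using Nat.le_induction with
    | base => norm_num
    | succ k hk2 ih =>
      rw [Finset.sum_Icc_succ_top (by omega : 2 ≤ k + 1), ih,
        if_neg (by omega : ¬ (k + 1 = 2))]
      push_cast
      ring
  have hwsum : ∑ i ∈ Finset.Icc 2 j,
      (if i = 2 then (3:ℝ) else (i:ℝ)) / ((j:ℝ) * ((j:ℝ) + 1) / 2) = 1 := by
    rw [← Finset.sum_div, hcsum j hj, div_self hA.ne']
  have hmem : ∀ i ∈ Finset.Icc 2 j, x i ∈ domh := by
    intro i hi
    rw [Finset.mem_Icc] at hi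
    exact hxmem i (by omega)
  have hJ := hconvφ.map_sum_le hw0 hwsum hmem
  simp only [smul_eq_mul] at hJ
  have hxrep : ∑ i ∈ Finset.Icc 2 j,
      ((if i = 2 then (3:ℝ) else (i:ℝ)) / ((j:ℝ) * ((j:ℝ) + 1) / 2)) • x i
      = ((j:ℝ) * ((j:ℝ) + 1) / 2)⁻¹ • ((3:ℝ) • x 2 + ∑ i ∈ Finset.Icc 3 j, (i:ℝ) • x i) := by
    rw [hIcc, Finset.sum_insert h2notin, smul_add, Finset.smul_sum]
    congr 1
    · rw [if_pos rfl, div_eq_inv_mul, mul_smul]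
    · apply Finset.sum_congr rfl
      intro i hi
      have hi2 : ¬ (i = 2) := by
        rw [Finset.mem_Icc] at hi; omega
      rw [if_neg hi2, div_eq_inv_mul, mul_smul]
  rw [hxrep] at hJ
  obtain ⟨T, hT⟩ : ∃ T : ℝ,
      T = 3 * (f (x 2) + (h (x 2) + ‖x 2 - x₀‖ ^ 2 / (2 * lam)))
        + ∑ i ∈ Finset.Icc 3 j, (i:ℝ) * (f (x i) + (h (x i) + ‖x i - x₀‖ ^ 2 / (2 * lam))) :=
    ⟨_, rfl⟩
  have hvrep : ∑ i ∈ Finset.Icc 2 j,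
      ((if i = 2 then (3:ℝ) else (i:ℝ)) / ((j:ℝ) * ((j:ℝ) + 1) / 2))
        * (f (x i) + (h (x i) + ‖x i - x₀‖ ^ 2 / (2 * lam)))
      = ((j:ℝ) * ((j:ℝ) + 1) / 2)⁻¹ * T := by
    rw [hT, hIcc, Finset.sum_insert h2notin]
    conv_rhs => rw [mul_add, Finset.mul_sum]
    congr 1
    · rw [if_pos rfl, div_eq_inv_mul, mul_assoc]
    · refine Finset.sum_congr rfl fun i hi => ?_
      have hi2 : ¬ (i = 2) := by
        rw [Finset.mem_Icc] at hi; omega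
      rw [if_neg hi2, div_eq_inv_mul, mul_assoc]
  rw [hvrep] at hJ
  obtain ⟨P, hP⟩ : ∃ P : ℝ,
      P = f (((j : ℝ) * ((j : ℝ) + 1) / 2)⁻¹ •
            ((3 : ℝ) • x 2 + ∑ i ∈ Finset.Icc 3 j, (i : ℝ) • x i))
        + (h (((j : ℝ) * ((j : ℝ) + 1) / 2)⁻¹ •
            ((3 : ℝ) • x 2 + ∑ i ∈ Finset.Icc 3 j, (i : ℝ) • x i))
          + ‖(((j : ℝ) * ((j : ℝ) + 1) / 2)⁻¹ •
            ((3 : ℝ) • x 2 + ∑ i ∈ Finset.Icc 3 j, (i : ℝ) • x i)) - x₀‖ ^ 2 / (2 * lam)) :=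
    ⟨_, rfl⟩
  rw [← hP] at hJ ⊢
  obtain ⟨mj, hmj⟩ : ∃ m : ℝ, m = Γ j (x j) + (h (x j) + ‖x j - x₀‖ ^ 2 / (2 * lam)) := ⟨_, rfl⟩
  rw [← hmj]
  have hmain := main j hj
  rw [← hmj, ← hT] at hmain
  have hscale := mul_le_mul_of_nonneg_left hmain (inv_nonneg.mpr hA.le)
  have hfin : ((j:ℝ) * ((j:ℝ) + 1) / 2)⁻¹
        * ((j:ℝ) * ((j:ℝ) + 1) / 2 * mj + 6 * lam * M ^ 2 * (j:ℝ))
      = mj + 12 * lam * M ^ 2 / ((j:ℝ) + 1) := by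
    have hj0 : (j:ℝ) ≠ 0 := by linarith
    have hj1 : (j:ℝ) + 1 ≠ 0 := by linarith
    field_simp
    ring
  rw [hfin] at hscale
  have hlast : 12 * lam * M ^ 2 / ((j:ℝ) + 1) ≤ 16 * lam * M ^ 2 / ((j:ℝ) + 1) := by
    have hj1 : (0:ℝ) < (j:ℝ) + 1 := by linarith
    gcongr
    nlinarith [mul_pos hlam (pow_pos hM 2)]
  linarith only [hJ, hscale, hlast]
end

section
/- Let f, h : ℝⁿ → ℝ ∪ {+∞} be proper lower semicontinuous convex with dom h ⊆ dom f, let f′ be a subgradient selection with ‖f′(x)‖ ≤ M for all x ∈ dom h and some M > 0, and let λ > 0. Given x_prev ∈ dom h, let x⁺ be the minimizer of u ↦ ℓ_f(u; x_prev) + h(u) + ‖u − x_prev‖²/(2λ). Then for every u ∈ dom h, f(x⁺) + h(x⁺) − ℓ_f(u; x_prev) − h(u) ≤ 2λM² + (1/(2λ))‖u − x_prev‖² − (1/(2λ))‖u − x⁺‖². -/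
open RealInnerProductSpace

/-- norm identity for convex combinations in a real inner product space -/
lemma comb_norm_sq {n : ℕ} (a b : EuclideanSpace ℝ (Fin n)) (t : ℝ) :
    ‖(1 - t) • a + t • b‖ ^ 2
      = (1 - t) * ‖a‖ ^ 2 + t * ‖b‖ ^ 2 - t * (1 - t) * ‖a - b‖ ^ 2 := by
  have e : ∀ v : EuclideanSpace ℝ (Fin n), ‖v‖ ^ 2 = ⟪v, v⟫ := fun v => by
    rw [real_inner_self_eq_norm_sq]
  rw [e, e, e, e]
  simp only [inner_add_left, inner_add_right, inner_sub_left, inner_sub_right,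
    real_inner_smul_left, real_inner_smul_right]
  ring_nf

/-- purely scalar step: divide the strong-convexity inequality by `t`. -/
lemma aux_div (D t F p hp q hu R1 R2 c hw : ℝ) (hD : 0 < D) (ht : 0 < t)
    (h1 : F + p + hp + R1 / D
      ≤ F + ((1 - t) * p + t * q) + hw + ((1 - t) * R1 + t * R2 - t * (1 - t) * c) / D)
    (h2 : hw ≤ (1 - t) * hp + t * hu) :
    F + p + hp + R1 / D ≤ F + q + hu + R2 / D - (1 - t) * c / D := by
  simp only [div_eq_mul_inv] at h1 ⊢
  have key : t * (F + p + hp + R1 * D⁻¹)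
      ≤ t * (F + q + hu + R2 * D⁻¹ - (1 - t) * c * D⁻¹) := by
    nlinarith [h1, h2]
  exact le_of_mul_le_mul_left key ht

/-- one-step estimate for the primal-dual (proximal) subgradient method:
if `x⁺` minimizes `ℓ_f(·; x_prev) + h + ‖· - x_prev‖²/(2λ)`, then for every `u ∈ dom h`,
`φ(x⁺) - ℓ_f(u; x_prev) - h(u) ≤ 2λM² + ‖u - x_prev‖²/(2λ) - ‖u - x⁺‖²/(2λ)`. -/
theorem stmt14 {n : ℕ} (f h : EuclideanSpace ℝ (Fin n) → ℝ)
    (domf domh : Set (EuclideanSpace ℝ (Fin n)))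
    (hdom : domh ⊆ domf)
    (hfconv : ConvexOn ℝ domf f) (hflsc : LowerSemicontinuousOn f domf)
    (hhconv : ConvexOn ℝ domh h) (hhlsc : LowerSemicontinuousOn h domh)
    (f' : EuclideanSpace ℝ (Fin n) → EuclideanSpace ℝ (Fin n)) (M : ℝ) (hM : 0 < M)
    (hsubgrad : ∀ x ∈ domh, ∀ y ∈ domf, f y ≥ f x + ⟪f' x, y - x⟫)
    (hMbound : ∀ x ∈ domh, ‖f' x‖ ≤ M)
    (lam : ℝ) (hlam : 0 < lam)
    (xprev : EuclideanSpace ℝ (Fin n)) (hxprev : xprev ∈ domh)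
    (xplus : EuclideanSpace ℝ (Fin n)) (hxplus : xplus ∈ domh)
    (hmin : ∀ u ∈ domh,
      (f xprev + ⟪f' xprev, xplus - xprev⟫) + h xplus + ‖xplus - xprev‖ ^ 2 / (2 * lam)
        ≤ (f xprev + ⟪f' xprev, u - xprev⟫) + h u + ‖u - xprev‖ ^ 2 / (2 * lam)) :
    ∀ u ∈ domh,
      f xplus + h xplus - (f xprev + ⟪f' xprev, u - xprev⟫) - h u
        ≤ 2 * lam * M ^ 2 + (1 / (2 * lam)) * ‖u - xprev‖ ^ 2
          - (1 / (2 * lam)) * ‖u - xplus‖ ^ 2 := by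
  intro u hu
  have h2lam : (0:ℝ) < 2 * lam := by linarith
  set r : ℝ := ‖xplus - xprev‖ with hr
  have hr0 : 0 ≤ r := norm_nonneg _
  -- Step 2: f xplus ≤ ℓ(xplus) + 2 M r
  have h1 : f xprev ≥ f xplus + ⟪f' xplus, xprev - xplus⟫ :=
    hsubgrad xplus hxplus xprev (hdom hxprev)
  have cs1 : |⟪f' xplus, xprev - xplus⟫| ≤ M * r := by
    calc |⟪f' xplus, xprev - xplus⟫| ≤ ‖f' xplus‖ * ‖xprev - xplus‖ :=
          abs_real_inner_le_norm _ _
      _ ≤ M * r := by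
          rw [hr, show ‖xprev - xplus‖ = ‖xplus - xprev‖ from norm_sub_rev _ _]
          exact mul_le_mul_of_nonneg_right (hMbound xplus hxplus) (norm_nonneg _)
  have cs2 : |⟪f' xprev, xplus - xprev⟫| ≤ M * r := by
    calc |⟪f' xprev, xplus - xprev⟫| ≤ ‖f' xprev‖ * ‖xplus - xprev‖ :=
          abs_real_inner_le_norm _ _
      _ ≤ M * r := mul_le_mul_of_nonneg_right (hMbound xprev hxprev) (norm_nonneg _)
  have step2 : f xplus ≤ (f xprev + ⟪f' xprev, xplus - xprev⟫) + 2 * M * r := by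
    have := abs_le.mp cs1
    have := abs_le.mp cs2
    linarith
  -- Step 1: three-point inequality
  set c : ℝ := ‖u - xplus‖ ^ 2 with hc
  have hc0 : 0 ≤ c := sq_nonneg _
  have three : ∀ t : ℝ, 0 < t → t ≤ 1 →
      f xprev + ⟪f' xprev, xplus - xprev⟫ + h xplus + ‖xplus - xprev‖ ^ 2 / (2 * lam)
        ≤ f xprev + ⟪f' xprev, u - xprev⟫ + h u + ‖u - xprev‖ ^ 2 / (2 * lam)
          - (1 - t) * c / (2 * lam) := by
    intro t ht0 ht1
    set w := (1 - t) • xplus + t • u with hw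
    have hwmem : w ∈ domh := hhconv.1 hxplus hu (by linarith) (le_of_lt ht0) (by ring)
    have hmw := hmin w hwmem
    have hdecomp : w - xprev = (1 - t) • (xplus - xprev) + t • (u - xprev) := by
      rw [hw]; module
    have hlin : ⟪f' xprev, w - xprev⟫
        = (1 - t) * ⟪f' xprev, xplus - xprev⟫ + t * ⟪f' xprev, u - xprev⟫ := by
      rw [hdecomp, inner_add_right, real_inner_smul_right, real_inner_smul_right]
    have hhw : h w ≤ (1 - t) * h xplus + t * h u :=
      hhconv.2 hxplus hu (by linarith) (le_of_lt ht0) (by ring)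
    have hnorm : ‖w - xprev‖ ^ 2
        = (1 - t) * ‖xplus - xprev‖ ^ 2 + t * ‖u - xprev‖ ^ 2
          - t * (1 - t) * c := by
      rw [hdecomp, comb_norm_sq]
      congr 2
      rw [hc]
      congr 1
      rw [show (xplus - xprev) - (u - xprev) = xplus - u by abel, norm_sub_rev]
    rw [hlin, hnorm] at hmw
    exact aux_div (2 * lam) t (f xprev) ⟪f' xprev, xplus - xprev⟫ (h xplus)
      ⟪f' xprev, u - xprev⟫ (h u) (‖xplus - xprev‖ ^ 2) (‖u - xprev‖ ^ 2) c (h w)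
      h2lam ht0 hmw hhw
  -- take t → 0 via epsilon argument
  have step1 :
      f xprev + ⟪f' xprev, xplus - xprev⟫ + h xplus + ‖xplus - xprev‖ ^ 2 / (2 * lam)
        ≤ f xprev + ⟪f' xprev, u - xprev⟫ + h u + ‖u - xprev‖ ^ 2 / (2 * lam)
          - c / (2 * lam) := by
    refine le_of_forall_pos_le_add fun ε hε => ?_
    set t : ℝ := min 1 (lam * ε / (c + 1)) with htdef
    have ht0 : 0 < t := lt_min one_pos (by positivity)
    have ht1 : t ≤ 1 := min_le_left _ _
    have h3 := three t ht0 ht1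
    have htc : t * c / (2 * lam) ≤ ε := by
      have ht2 : t ≤ lam * ε / (c + 1) := min_le_right _ _
      have hpos : (0:ℝ) < c + 1 := by linarith
      rw [div_le_iff₀ h2lam]
      have h4 : t * c ≤ (lam * ε / (c + 1)) * c :=
        mul_le_mul_of_nonneg_right ht2 hc0
      calc t * c ≤ (lam * ε / (c + 1)) * c := h4
        _ ≤ ε * (2 * lam) := by
            rw [div_mul_eq_mul_div, div_le_iff₀ hpos]
            nlinarith [mul_nonneg (mul_nonneg hlam.le hε.le) hc0, mul_pos hlam hε]
    have hsplit : (1 - t) * c / (2 * lam) = c / (2 * lam) - t * c / (2 * lam) := by ring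
    linarith [h3, htc, hsplit.symm.le]
  -- Step 3: 2Mr - r²/(2λ) ≤ 2λM²
  have step3 : 2 * M * r - r ^ 2 / (2 * lam) ≤ 2 * lam * M ^ 2 := by
    have hnn : (r - 2 * lam * M) ^ 2 / (2 * lam) ≥ 0 := by positivity
    have hexp : (r - 2 * lam * M) ^ 2 / (2 * lam)
        = r ^ 2 / (2 * lam) - 2 * M * r + 2 * lam * M ^ 2 := by
      field_simp; ring
    linarith [hexp ▸ hnn]
  have hfrac : (1 / (2 * lam)) * ‖u - xprev‖ ^ 2 = ‖u - xprev‖ ^ 2 / (2 * lam) := by ring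
  have hfrac2 : (1 / (2 * lam)) * ‖u - xplus‖ ^ 2 = c / (2 * lam) := by rw [hc]; ring
  rw [hfrac, hfrac2]
  linarith [step1, step2, step3]
end

section
/- Let f, h : ℝⁿ → ℝ ∪ {+∞} be proper lower semicontinuous convex with dom h ⊆ dom f, let f′ be a subgradient selection with ‖f′(x)‖ ≤ M on dom h, let λ > 0, x̂₀ ∈ dom h, d₀ > 0, and assume dom h ⊆ {x : ‖x − x̂₀‖ ≤ 4d₀}. Define the subgradient iterates: for k ≥ 1, s_k = f′(x̂_{k−1}) and x̂_k = argmin_u { ℓ_f(u; x̂_{k−1}) + h(u) + ‖u − x̂_{k−1}‖²/(2λ) }, and the averages x̄_k = (1/k)∑_{i=1}^k x̂_i, s̄_k = (1/k)∑_{i=1}^k s_i. Then for every k ≥ 1, f(x̄_k) + h(x̄_k) + f*(s̄_k) + h*(−s̄_k) ≤ 2λM² + 8d₀²/(λk). -/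
open RealInnerProductSpace

private lemma norm_combo_sq {E : Type*} [NormedAddCommGroup E] [InnerProductSpace ℝ E]
    (a b : E) (t : ℝ) :
    ‖(1-t)•a + t•b‖^2 = (1-t)*‖a‖^2 + t*‖b‖^2 - t*(1-t)*‖a-b‖^2 := by
  simp only [← real_inner_self_eq_norm_sq, inner_add_add_self, inner_sub_sub_self,
    real_inner_smul_left, real_inner_smul_right]
  ring

private lemma le_of_slack (A B : ℝ) (hB : 0 ≤ B)
    (h : ∀ t : ℝ, 0 < t → t < 1 → (1-t)*B ≤ A) : B ≤ A := by
  by_contra hn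
  push_neg at hn
  have h2 := h (1/2) (by norm_num) (by norm_num)
  have hA : 0 ≤ A := by linarith
  have hB0 : 0 < B := by linarith
  have ht0 : 0 < (B-A)/(2*B) := div_pos (by linarith) (by linarith)
  have ht1 : (B-A)/(2*B) < 1 := by rw [div_lt_one (by linarith)]; linarith
  have h3 := h _ ht0 ht1
  have htB : ((B-A)/(2*B)) * B = (B-A)/2 := by field_simp
  have hexp : (1 - (B-A)/(2*B)) * B = B - ((B-A)/(2*B)) * B := by ring
  rw [hexp, htB] at h3
  linarith

private lemma div_ineq {a b q r c : ℝ} (hc : 0 < c) (h : a + q / c ≤ b + r / c) :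
    a * c + q ≤ b * c + r := by
  have h2 := mul_le_mul_of_nonneg_right h hc.le
  rwa [add_mul, add_mul, div_mul_cancel₀ _ hc.ne', div_mul_cancel₀ _ hc.ne'] at h2

set_option maxHeartbeats 1000000 in
/-- primal-dual convergence of the proximal subgradient method:
`φ(x̄_k) + f*(s̄_k) + h*(-s̄_k) ≤ 2λM² + 8d₀²/(λk)`. -/
theorem stmt15 {n : ℕ} (f h : EuclideanSpace ℝ (Fin n) → ℝ)
    (domf domh : Set (EuclideanSpace ℝ (Fin n)))
    (hdom : domh ⊆ domf)
    (hfconv : ConvexOn ℝ domf f) (hflsc : LowerSemicontinuousOn f domf)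
    (hhconv : ConvexOn ℝ domh h) (hhlsc : LowerSemicontinuousOn h domh)
    (f' : EuclideanSpace ℝ (Fin n) → EuclideanSpace ℝ (Fin n)) (M : ℝ) (hM : 0 < M)
    (hsubgrad : ∀ x ∈ domh, ∀ y ∈ domf, f y ≥ f x + ⟪f' x, y - x⟫)
    (hMbound : ∀ x ∈ domh, ‖f' x‖ ≤ M)
    (lam d₀ : ℝ) (hlam : 0 < lam) (hd₀ : 0 < d₀)
    (xh s : ℕ → EuclideanSpace ℝ (Fin n))
    (hxh0 : xh 0 ∈ domh)
    (hball : domh ⊆ Metric.closedBall (xh 0) (4 * d₀))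
    (hs : ∀ k, 1 ≤ k → s k = f' (xh (k - 1)))
    (hxhmem : ∀ k, 1 ≤ k → xh k ∈ domh)
    (hxhmin : ∀ k, 1 ≤ k → ∀ u ∈ domh,
      (f (xh (k - 1)) + ⟪f' (xh (k - 1)), xh k - xh (k - 1)⟫) + h (xh k)
          + ‖xh k - xh (k - 1)‖ ^ 2 / (2 * lam)
        ≤ (f (xh (k - 1)) + ⟪f' (xh (k - 1)), u - xh (k - 1)⟫) + h u
          + ‖u - xh (k - 1)‖ ^ 2 / (2 * lam)) :
    ∀ k : ℕ, 1 ≤ k →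
      ((f ((k : ℝ)⁻¹ • ∑ i ∈ Finset.Icc 1 k, xh i)
          + h ((k : ℝ)⁻¹ • ∑ i ∈ Finset.Icc 1 k, xh i) : ℝ) : EReal)
          + fconj domf f ((k : ℝ)⁻¹ • ∑ i ∈ Finset.Icc 1 k, s i)
          + fconj domh h (-((k : ℝ)⁻¹ • ∑ i ∈ Finset.Icc 1 k, s i))
        ≤ ((2 * lam * M ^ 2 + 8 * d₀ ^ 2 / (lam * k) : ℝ) : EReal) := by
  intro k hk
  classical
  have hk0 : (0:ℝ) < (k:ℝ) := by exact_mod_cast hk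
  have hc0 : (0:ℝ) < 2*lam := by linarith
  have hmem : ∀ i : ℕ, xh i ∈ domh := by
    intro i
    rcases Nat.eq_zero_or_pos i with h0 | h0
    · rw [h0]; exact hxh0
    · exact hxhmem i h0
  -- Step A: three-point inequality from the prox minimization (cleared denominators)
  have stepA : ∀ i : ℕ, 1 ≤ i → ∀ v ∈ domh,
      (2*lam) * (⟪f' (xh (i-1)), xh i - v⟫ + h (xh i) - h v)
        ≤ ‖v - xh (i-1)‖^2 - ‖v - xh i‖^2 - ‖xh i - xh (i-1)‖^2 := by
    intro i hi v hv
    have hBnn : (0:ℝ) ≤ ‖xh i - v‖^2 := sq_nonneg _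
    have key : ∀ t : ℝ, 0 < t → t < 1 →
        (1-t) * ‖xh i - v‖^2 ≤
          (‖v - xh (i-1)‖^2 - ‖xh i - xh (i-1)‖^2)
            - (2*lam) * (⟪f' (xh (i-1)), xh i - v⟫ + h (xh i) - h v) := by
      intro t ht0 ht1
      have hut : (1-t)•(xh i) + t•v ∈ domh :=
        hhconv.1 (hmem i) hv (by linarith) (le_of_lt ht0) (by ring)
      have hmin := hxhmin i hi ((1-t)•(xh i) + t•v) hut
      have hconv := hhconv.2 (hmem i) hv (by linarith : (0:ℝ) ≤ 1-t) (le_of_lt ht0) (by ring)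
      simp only [smul_eq_mul] at hconv
      have hrw : (1-t)•(xh i) + t•v - xh (i-1)
          = (1-t)•(xh i - xh (i-1)) + t•(v - xh (i-1)) := by
        rw [smul_sub, smul_sub]
        module
      have hnorm : ‖(1-t)•(xh i) + t•v - xh (i-1)‖^2
          = (1-t)*‖xh i - xh (i-1)‖^2 + t*‖v - xh (i-1)‖^2 - t*(1-t)*‖xh i - v‖^2 := by
        rw [hrw, norm_combo_sq]
        have he : xh i - xh (i-1) - (v - xh (i-1)) = xh i - v := by abel
        rw [he]
      have hinner : ⟪f' (xh (i-1)), (1-t)•(xh i) + t•v - xh (i-1)⟫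
          = (1-t)*⟪f' (xh (i-1)), xh i - xh (i-1)⟫ + t*⟪f' (xh (i-1)), v - xh (i-1)⟫ := by
        rw [hrw, inner_add_right, real_inner_smul_right, real_inner_smul_right]
      rw [hnorm, hinner] at hmin
      have hmin3 := div_ineq hc0 hmin
      have hconv_c := mul_le_mul_of_nonneg_right hconv hc0.le
      have step : t * ((2*lam)*⟪f' (xh (i-1)), xh i - xh (i-1)⟫ + (2*lam)*(h (xh i))
            + ‖xh i - xh (i-1)‖^2 + (1-t)*‖xh i - v‖^2)
          ≤ t * ((2*lam)*⟪f' (xh (i-1)), v - xh (i-1)⟫ + (2*lam)*(h v)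
            + ‖v - xh (i-1)‖^2) := by
        nlinarith [hmin3, hconv_c]
      have hdiv := (mul_le_mul_iff_right₀ ht0).mp step
      have hgpv : ⟪f' (xh (i-1)), xh i - v⟫
          = ⟪f' (xh (i-1)), xh i - xh (i-1)⟫ - ⟪f' (xh (i-1)), v - xh (i-1)⟫ := by
        rw [← inner_sub_right]
        congr 1
        abel
      rw [hgpv]
      linarith
    have hfin := le_of_slack _ _ hBnn key
    have hrev : ‖xh i - v‖ = ‖v - xh i‖ := norm_sub_rev _ _
    rw [hrev] at hfin
    linarith
  -- Step B: per-iteration primal-dual bound (cleared denominators)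
  have stepB : ∀ i : ℕ, 1 ≤ i → ∀ u ∈ domf, ∀ v ∈ domh,
      (2*lam) * (f (xh i) + h (xh i) + (⟪s i, u⟫ - f u) + (⟪-(s i), v⟫ - h v))
        ≤ (2*lam)*(2*lam*M^2) + (‖v - xh (i-1)‖^2 - ‖v - xh i‖^2) := by
    intro i hi u hu v hv
    have hsk : s i = f' (xh (i-1)) := hs i hi
    have hxm : xh (i-1) ∈ domh := hmem _
    have hpm : xh i ∈ domh := hmem _
    have h1 := hsubgrad (xh i) hpm (xh (i-1)) (hdom hxm)
    have habs1 : |⟪f' (xh i), xh (i-1) - xh i⟫| ≤ M * ‖xh i - xh (i-1)‖ := by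
      calc |⟪f' (xh i), xh (i-1) - xh i⟫| ≤ ‖f' (xh i)‖ * ‖xh (i-1) - xh i‖ :=
            abs_real_inner_le_norm _ _
        _ ≤ M * ‖xh i - xh (i-1)‖ := by
            rw [norm_sub_rev (xh (i-1)) (xh i)]
            exact mul_le_mul_of_nonneg_right (hMbound _ hpm) (norm_nonneg _)
    have hfp : f (xh i) ≤ f (xh (i-1)) + M * ‖xh i - xh (i-1)‖ := by
      have := abs_le.mp habs1
      linarith
    have habs2 : |⟪f' (xh (i-1)), xh i - xh (i-1)⟫| ≤ M * ‖xh i - xh (i-1)‖ := by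
      calc |⟪f' (xh (i-1)), xh i - xh (i-1)⟫| ≤ ‖f' (xh (i-1))‖ * ‖xh i - xh (i-1)‖ :=
            abs_real_inner_le_norm _ _
        _ ≤ M * ‖xh i - xh (i-1)‖ :=
            mul_le_mul_of_nonneg_right (hMbound _ hxm) (norm_nonneg _)
    have hgpx : -(M * ‖xh i - xh (i-1)‖) ≤ ⟪f' (xh (i-1)), xh i - xh (i-1)⟫ :=
      (abs_le.mp habs2).1
    have hsub_u : f (xh (i-1)) + ⟪f' (xh (i-1)), u - xh (i-1)⟫ ≤ f u :=
      hsubgrad (xh (i-1)) hxm u hu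
    have hA := stepA i hi v hv
    have hquad : (2*lam)*(2*M*‖xh i - xh (i-1)‖)
        ≤ (2*lam)*(2*lam*M^2) + ‖xh i - xh (i-1)‖^2 := by
      nlinarith [sq_nonneg (‖xh i - xh (i-1)‖ - 2*lam*M), hlam]
    have hfp_c := mul_le_mul_of_nonneg_left hfp hc0.le
    have hgpx_c := mul_le_mul_of_nonneg_left hgpx hc0.le
    have hsub_c := mul_le_mul_of_nonneg_left hsub_u hc0.le
    rw [hsk]
    simp only [inner_sub_right, inner_neg_left] at hA hsub_c hgpx_c ⊢
    linarith [hA, hfp_c, hgpx_c, hsub_c, hquad]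
  -- Icc/range conversion
  have hIcc : ∀ (g : ℕ → ℝ), ∑ i ∈ Finset.Icc 1 k, g i = ∑ i ∈ Finset.range k, g (i+1) := by
    intro g
    rw [← Finset.Ico_add_one_right_eq_Icc, Finset.sum_Ico_eq_sum_range]
    simp [add_comm]
  have hcard : (Finset.Icc 1 k).card = k := by rw [Nat.card_Icc]; omega
  -- the master real inequality
  have master : ∀ u ∈ domf, ∀ v ∈ domh,
      (f ((k : ℝ)⁻¹ • ∑ i ∈ Finset.Icc 1 k, xh i)
        + h ((k : ℝ)⁻¹ • ∑ i ∈ Finset.Icc 1 k, xh i))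
        + (⟪(k : ℝ)⁻¹ • ∑ i ∈ Finset.Icc 1 k, s i, u⟫ - f u)
        + (⟪-((k : ℝ)⁻¹ • ∑ i ∈ Finset.Icc 1 k, s i), v⟫ - h v)
        ≤ 2 * lam * M ^ 2 + 8 * d₀ ^ 2 / (lam * k) := by
    intro u hu v hv
    -- summed per-step bound
    have hsum : (2*lam) * (∑ i ∈ Finset.range k,
          (f (xh (i+1)) + h (xh (i+1)) + (⟪s (i+1), u⟫ - f u) + (⟪-(s (i+1)), v⟫ - h v)))
        ≤ (k:ℝ)*((2*lam)*(2*lam*M^2)) + 16*d₀^2 := by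
      rw [Finset.mul_sum]
      have hstep : ∀ i ∈ Finset.range k,
          (2*lam) * (f (xh (i+1)) + h (xh (i+1)) + (⟪s (i+1), u⟫ - f u)
              + (⟪-(s (i+1)), v⟫ - h v))
            ≤ (2*lam)*(2*lam*M^2) + (‖v - xh i‖^2 - ‖v - xh (i+1)‖^2) := by
        intro i _
        have := stepB (i+1) (by omega) u hu v hv
        simpa using this
      calc ∑ i ∈ Finset.range k, (2*lam) * (f (xh (i+1)) + h (xh (i+1))
              + (⟪s (i+1), u⟫ - f u) + (⟪-(s (i+1)), v⟫ - h v))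
          ≤ ∑ i ∈ Finset.range k,
              ((2*lam)*(2*lam*M^2) + (‖v - xh i‖^2 - ‖v - xh (i+1)‖^2)) :=
            Finset.sum_le_sum hstep
        _ = (k:ℝ)*((2*lam)*(2*lam*M^2))
              + ∑ i ∈ Finset.range k, (‖v - xh i‖^2 - ‖v - xh (i+1)‖^2) := by
            rw [Finset.sum_add_distrib, Finset.sum_const, Finset.card_range, nsmul_eq_mul]
        _ = (k:ℝ)*((2*lam)*(2*lam*M^2)) + (‖v - xh 0‖^2 - ‖v - xh k‖^2) := by
            rw [Finset.sum_range_sub' (fun i => ‖v - xh i‖^2)]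
        _ ≤ (k:ℝ)*((2*lam)*(2*lam*M^2)) + 16*d₀^2 := by
            have hv0 : ‖v - xh 0‖ ≤ 4*d₀ := by
              have := hball hv
              rwa [Metric.mem_closedBall, dist_eq_norm] at this
            nlinarith [sq_nonneg (‖v - xh k‖), norm_nonneg (v - xh 0)]
    -- Jensen's inequality for f and h
    have hw0 : ∀ i ∈ Finset.Icc 1 k, (0:ℝ) ≤ (k:ℝ)⁻¹ := fun i _ => by positivity
    have hw1 : ∑ _i ∈ Finset.Icc 1 k, (k:ℝ)⁻¹ = 1 := by
      rw [Finset.sum_const, hcard, nsmul_eq_mul, mul_inv_cancel₀ hk0.ne']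
    have hxb : (k : ℝ)⁻¹ • ∑ i ∈ Finset.Icc 1 k, xh i
        = ∑ i ∈ Finset.Icc 1 k, (k:ℝ)⁻¹ • xh i := Finset.smul_sum
    have jf : f ((k : ℝ)⁻¹ • ∑ i ∈ Finset.Icc 1 k, xh i)
        ≤ ∑ i ∈ Finset.Icc 1 k, (k:ℝ)⁻¹ * f (xh i) := by
      rw [hxb]
      simpa [smul_eq_mul] using
        hfconv.map_sum_le hw0 hw1 (fun i _ => hdom (hmem i))
    have jh : h ((k : ℝ)⁻¹ • ∑ i ∈ Finset.Icc 1 k, xh i)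
        ≤ ∑ i ∈ Finset.Icc 1 k, (k:ℝ)⁻¹ * h (xh i) := by
      rw [hxb]
      simpa [smul_eq_mul] using
        hhconv.map_sum_le hw0 hw1 (fun i _ => hmem i)
    -- inner products of the averaged dual variable
    have e1 : ⟪(k : ℝ)⁻¹ • ∑ i ∈ Finset.Icc 1 k, s i, u⟫
        = (k:ℝ)⁻¹ * ∑ i ∈ Finset.Icc 1 k, ⟪s i, u⟫ := by
      rw [real_inner_smul_left, sum_inner]
    have e2 : ⟪-((k : ℝ)⁻¹ • ∑ i ∈ Finset.Icc 1 k, s i), v⟫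
        = (k:ℝ)⁻¹ * ∑ i ∈ Finset.Icc 1 k, (-⟪s i, v⟫) := by
      rw [inner_neg_left, real_inner_smul_left, sum_inner, Finset.sum_neg_distrib]
      ring
    -- pull everything together, multiplied by k
    have hsplit : ∑ i ∈ Finset.range k,
        (f (xh (i+1)) + h (xh (i+1)) + (⟪s (i+1), u⟫ - f u) + (⟪-(s (i+1)), v⟫ - h v))
        = (∑ i ∈ Finset.Icc 1 k, f (xh i)) + (∑ i ∈ Finset.Icc 1 k, h (xh i))
          + ((∑ i ∈ Finset.Icc 1 k, ⟪s i, u⟫) - (k:ℝ) * f u)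
          + ((∑ i ∈ Finset.Icc 1 k, (-⟪s i, v⟫)) - (k:ℝ) * h v) := by
      have hIf : ∑ i ∈ Finset.Icc 1 k, f (xh i) = ∑ i ∈ Finset.range k, f (xh (i+1)) := hIcc _
      have hIh : ∑ i ∈ Finset.Icc 1 k, h (xh i) = ∑ i ∈ Finset.range k, h (xh (i+1)) := hIcc _
      have hIs : ∑ i ∈ Finset.Icc 1 k, ⟪s i, u⟫ = ∑ i ∈ Finset.range k, ⟪s (i+1), u⟫ := hIcc _
      have hIsv : ∑ i ∈ Finset.Icc 1 k, (-⟪s i, v⟫)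
          = ∑ i ∈ Finset.range k, (-⟪s (i+1), v⟫) := hIcc _
      rw [hIf, hIh, hIs, hIsv]
      simp only [Finset.sum_add_distrib, Finset.sum_sub_distrib, Finset.sum_const,
        Finset.card_range, nsmul_eq_mul, inner_neg_left]
    have hL : (k:ℝ) * ((f ((k : ℝ)⁻¹ • ∑ i ∈ Finset.Icc 1 k, xh i)
          + h ((k : ℝ)⁻¹ • ∑ i ∈ Finset.Icc 1 k, xh i))
          + (⟪(k : ℝ)⁻¹ • ∑ i ∈ Finset.Icc 1 k, s i, u⟫ - f u)
          + (⟪-((k : ℝ)⁻¹ • ∑ i ∈ Finset.Icc 1 k, s i), v⟫ - h v))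
        ≤ ∑ i ∈ Finset.range k,
          (f (xh (i+1)) + h (xh (i+1)) + (⟪s (i+1), u⟫ - f u) + (⟪-(s (i+1)), v⟫ - h v)) := by
      rw [hsplit]
      have jf' : (k:ℝ) * f ((k : ℝ)⁻¹ • ∑ i ∈ Finset.Icc 1 k, xh i)
          ≤ ∑ i ∈ Finset.Icc 1 k, f (xh i) := by
        have h2 := mul_le_mul_of_nonneg_left jf hk0.le
        rwa [← Finset.mul_sum, ← mul_assoc, mul_inv_cancel₀ hk0.ne', one_mul] at h2
      have jh' : (k:ℝ) * h ((k : ℝ)⁻¹ • ∑ i ∈ Finset.Icc 1 k, xh i)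
          ≤ ∑ i ∈ Finset.Icc 1 k, h (xh i) := by
        have h2 := mul_le_mul_of_nonneg_left jh hk0.le
        rwa [← Finset.mul_sum, ← mul_assoc, mul_inv_cancel₀ hk0.ne', one_mul] at h2
      have e1' : (k:ℝ) * ⟪(k : ℝ)⁻¹ • ∑ i ∈ Finset.Icc 1 k, s i, u⟫
          = ∑ i ∈ Finset.Icc 1 k, ⟪s i, u⟫ := by
        rw [e1, ← mul_assoc, mul_inv_cancel₀ hk0.ne', one_mul]
      have e2' : (k:ℝ) * ⟪-((k : ℝ)⁻¹ • ∑ i ∈ Finset.Icc 1 k, s i), v⟫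
          = ∑ i ∈ Finset.Icc 1 k, (-⟪s i, v⟫) := by
        rw [e2, ← mul_assoc, mul_inv_cancel₀ hk0.ne', one_mul]
      linarith [jf', jh', e1', e2']
    -- combine and divide
    have hSig : ∑ i ∈ Finset.range k,
          (f (xh (i+1)) + h (xh (i+1)) + (⟪s (i+1), u⟫ - f u) + (⟪-(s (i+1)), v⟫ - h v))
        ≤ ((k:ℝ)*((2*lam)*(2*lam*M^2)) + 16*d₀^2) / (2*lam) := by
      rw [le_div_iff₀ hc0]
      linarith [hsum]
    have hfin : (f ((k : ℝ)⁻¹ • ∑ i ∈ Finset.Icc 1 k, xh i)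
          + h ((k : ℝ)⁻¹ • ∑ i ∈ Finset.Icc 1 k, xh i))
          + (⟪(k : ℝ)⁻¹ • ∑ i ∈ Finset.Icc 1 k, s i, u⟫ - f u)
          + (⟪-((k : ℝ)⁻¹ • ∑ i ∈ Finset.Icc 1 k, s i), v⟫ - h v)
        ≤ (((k:ℝ)*((2*lam)*(2*lam*M^2)) + 16*d₀^2) / (2*lam)) / (k:ℝ) := by
      rw [le_div_iff₀ hk0]
      calc ((f ((k : ℝ)⁻¹ • ∑ i ∈ Finset.Icc 1 k, xh i)
            + h ((k : ℝ)⁻¹ • ∑ i ∈ Finset.Icc 1 k, xh i))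
            + (⟪(k : ℝ)⁻¹ • ∑ i ∈ Finset.Icc 1 k, s i, u⟫ - f u)
            + (⟪-((k : ℝ)⁻¹ • ∑ i ∈ Finset.Icc 1 k, s i), v⟫ - h v)) * (k:ℝ)
          = (k:ℝ) * ((f ((k : ℝ)⁻¹ • ∑ i ∈ Finset.Icc 1 k, xh i)
            + h ((k : ℝ)⁻¹ • ∑ i ∈ Finset.Icc 1 k, xh i))
            + (⟪(k : ℝ)⁻¹ • ∑ i ∈ Finset.Icc 1 k, s i, u⟫ - f u)
            + (⟪-((k : ℝ)⁻¹ • ∑ i ∈ Finset.Icc 1 k, s i), v⟫ - h v)) := mul_comm _ _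
        _ ≤ _ := le_trans hL hSig
    have heq : (((k:ℝ)*((2*lam)*(2*lam*M^2)) + 16*d₀^2) / (2*lam)) / (k:ℝ)
        = 2 * lam * M ^ 2 + 8 * d₀ ^ 2 / (lam * k) := by
      field_simp
      ring
    linarith [hfin, heq.le, heq.ge]
  -- from the real master inequality to the EReal statement
  set a : ℝ := f ((k : ℝ)⁻¹ • ∑ i ∈ Finset.Icc 1 k, xh i)
      + h ((k : ℝ)⁻¹ • ∑ i ∈ Finset.Icc 1 k, xh i) with ha
  set C : ℝ := 2 * lam * M ^ 2 + 8 * d₀ ^ 2 / (lam * k) with hC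
  set sb := (k : ℝ)⁻¹ • ∑ i ∈ Finset.Icc 1 k, s i with hsb
  have hx0f : xh 0 ∈ domf := hdom hxh0
  set g₁ : EuclideanSpace ℝ (Fin n) → ℝ := fun u => ⟪sb, u⟫ - f u with hg₁
  set g₂ : EuclideanSpace ℝ (Fin n) → ℝ := fun v => ⟪-sb, v⟫ - h v with hg₂
  have hmaster : ∀ u ∈ domf, ∀ v ∈ domh, a + g₁ u + g₂ v ≤ C := by
    intro u hu v hv
    have := master u hu v hv
    simp only [hg₁, hg₂]
    linarith
  have hne1 : (g₁ '' domf).Nonempty := ⟨_, Set.mem_image_of_mem _ hx0f⟩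
  have hne2 : (g₂ '' domh).Nonempty := ⟨_, Set.mem_image_of_mem _ hxh0⟩
  have hbdd1 : BddAbove (g₁ '' domf) := by
    refine ⟨C - a - g₂ (xh 0), ?_⟩
    rintro _ ⟨u, hu, rfl⟩
    have := hmaster u hu (xh 0) hxh0
    linarith
  have hbdd2 : BddAbove (g₂ '' domh) := by
    refine ⟨C - a - g₁ (xh 0), ?_⟩
    rintro _ ⟨v, hv, rfl⟩
    have := hmaster (xh 0) hx0f v hv
    linarith
  have hS1 : fconj domf f sb ≤ ((sSup (g₁ '' domf) : ℝ) : EReal) := by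
    refine iSup₂_le fun u hu => ?_
    exact EReal.coe_le_coe_iff.mpr (le_csSup hbdd1 (Set.mem_image_of_mem _ hu))
  have hS2 : fconj domh h (-sb) ≤ ((sSup (g₂ '' domh) : ℝ) : EReal) := by
    refine iSup₂_le fun v hv => ?_
    exact EReal.coe_le_coe_iff.mpr (le_csSup hbdd2 (Set.mem_image_of_mem _ hv))
  have hr : a + sSup (g₁ '' domf) + sSup (g₂ '' domh) ≤ C := by
    have h1 : sSup (g₁ '' domf) ≤ C - a - sSup (g₂ '' domh) := by
      refine csSup_le hne1 ?_
      rintro _ ⟨u, hu, rfl⟩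
      have h2 : sSup (g₂ '' domh) ≤ C - a - g₁ u := by
        refine csSup_le hne2 ?_
        rintro _ ⟨v, hv, rfl⟩
        have := hmaster u hu v hv
        linarith
      linarith
    linarith
  calc ((a : ℝ) : EReal) + fconj domf f sb + fconj domh h (-sb)
      ≤ ((a : ℝ) : EReal) + ((sSup (g₁ '' domf) : ℝ) : EReal)
        + ((sSup (g₂ '' domh) : ℝ) : EReal) := add_le_add (add_le_add le_rfl hS1) hS2
    _ = ((a + sSup (g₁ '' domf) + sSup (g₂ '' domh) : ℝ) : EReal) := by
        rw [← EReal.coe_add, ← EReal.coe_add]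
    _ ≤ ((C : ℝ) : EReal) := EReal.coe_le_coe_iff.mpr hr
end

section
/- Let f, h : ℝⁿ → ℝ ∪ {+∞} be proper lower semicontinuous convex with dom h ⊆ dom f, f′ a subgradient selection with ‖f′(x)‖ ≤ M on dom h, x̂₀ ∈ dom h, d₀ > 0 with dom h ⊆ {x : ‖x − x̂₀‖ ≤ 4d₀}, and ε̄ > 0. Run the subgradient iteration with stepsize λ = ε̄/(16M²): s_k = f′(x̂_{k−1}), x̂_k = argmin_u { ℓ_f(u; x̂_{k−1}) + h(u) + ‖u − x̂_{k−1}‖²/(2λ) }, with averages x̄_k = (1/k)∑_{i=1}^k x̂_i and s̄_k = (1/k)∑_{i=1}^k s_i. Then for every k ≥ 256 M² d₀² / ε̄², f(x̄_k) + h(x̄_k) + f*(s̄_k) + h*(−s̄_k) ≤ ε̄; i.e., the method finds a primal-dual pair with gap at most ε̄ within 256 M² d₀² / ε̄² iterations. -/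
open RealInnerProductSpace

/-- Three point inequality for the prox step: if `z` minimizes
`u ↦ ⟪g,u⟫ + φ u + ‖u-x‖²/(2λ)` over a convex set `C`, then for all `v ∈ C` the value at `v`
dominates the value at `z` plus `‖v-z‖²/(2λ)`. -/
private lemma threePoint {n : ℕ} {C : Set (EuclideanSpace ℝ (Fin n))}
    {φ : EuclideanSpace ℝ (Fin n) → ℝ} (hφ : ConvexOn ℝ C φ)
    {lam : ℝ} (hlam : 0 < lam) (g x z : EuclideanSpace ℝ (Fin n)) (hz : z ∈ C)
    (hmin : ∀ u ∈ C, ⟪g, z⟫ + φ z + ‖z - x‖ ^ 2 / (2 * lam)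
        ≤ ⟪g, u⟫ + φ u + ‖u - x‖ ^ 2 / (2 * lam)) :
    ∀ v ∈ C, ⟪g, z⟫ + φ z + ‖z - x‖ ^ 2 / (2 * lam) + ‖v - z‖ ^ 2 / (2 * lam)
        ≤ ⟪g, v⟫ + φ v + ‖v - x‖ ^ 2 / (2 * lam) := by
  intro v hv
  apply le_of_forall_pos_le_add
  intro δ hδ
  have hL : (0:ℝ) < 2 * lam := by linarith
  set μ : ℝ := (2 * lam)⁻¹ with hμ
  have hμpos : 0 < μ := by positivity
  have hB0 : (0:ℝ) ≤ ‖v - z‖ ^ 2 * μ := by positivity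
  set t : ℝ := min (1/2) (δ / (‖v - z‖ ^ 2 * μ + 1)) with htdef
  have ht0 : 0 < t := lt_min (by norm_num) (by positivity)
  have ht1 : t ≤ 1/2 := min_le_left _ _
  have htδ : t * (‖v - z‖ ^ 2 * μ) ≤ δ := by
    have h1 : t ≤ δ / (‖v - z‖ ^ 2 * μ + 1) := min_le_right _ _
    have h2 : (0:ℝ) < ‖v - z‖ ^ 2 * μ + 1 := by linarith
    calc t * (‖v - z‖ ^ 2 * μ) ≤ (δ / (‖v - z‖ ^ 2 * μ + 1)) * (‖v - z‖ ^ 2 * μ) :=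
          mul_le_mul_of_nonneg_right h1 hB0
      _ ≤ δ := by rw [div_mul_eq_mul_div, div_le_iff₀ h2]; nlinarith
  have hmem : (1 - t) • z + t • v ∈ C := hφ.1 hz hv (by linarith) ht0.le (by ring)
  have hphi : φ ((1 - t) • z + t • v) ≤ (1 - t) * φ z + t * φ v := by
    have := hφ.2 hz hv (by linarith : (0:ℝ) ≤ 1 - t) ht0.le (by ring)
    simpa [smul_eq_mul] using this
  have idG : ⟪g, (1 - t) • z + t • v⟫ = (1 - t) * ⟪g, z⟫ + t * ⟪g, v⟫ := by
    rw [inner_add_right, real_inner_smul_right, real_inner_smul_right]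
  have e1 : ((1 - t) • z + t • v) - x = (z - x) + t • (v - z) := by module
  have idU : ‖((1 - t) • z + t • v) - x‖ ^ 2
      = ‖z - x‖ ^ 2 + 2 * t * ⟪z - x, v - z⟫ + t ^ 2 * ‖v - z‖ ^ 2 := by
    rw [e1, norm_add_sq_real, real_inner_smul_right, norm_smul, Real.norm_eq_abs, mul_pow, sq_abs]
    ring
  have e2 : v - x = (z - x) + (v - z) := by module
  have idV : ‖v - x‖ ^ 2 = ‖z - x‖ ^ 2 + 2 * ⟪z - x, v - z⟫ + ‖v - z‖ ^ 2 := by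
    rw [e2, norm_add_sq_real]
  have h1 := hmin _ hmem
  rw [idG, idU] at h1
  simp only [div_eq_mul_inv, ← hμ] at h1 ⊢
  have step1 : t * (⟪g, z⟫ + φ z)
      ≤ t * (⟪g, v⟫ + φ v + (2 * ⟪z - x, v - z⟫ + t * ‖v - z‖ ^ 2) * μ) := by
    nlinarith [h1, hphi]
  have step2 : ⟪g, z⟫ + φ z
      ≤ ⟪g, v⟫ + φ v + (2 * ⟪z - x, v - z⟫ + t * ‖v - z‖ ^ 2) * μ :=
    le_of_mul_le_mul_left step1 ht0
  have idV' : ‖v - x‖ ^ 2 * μ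
      = (‖z - x‖ ^ 2 + 2 * ⟪z - x, v - z⟫ + ‖v - z‖ ^ 2) * μ := by rw [idV]
  nlinarith [step2, htδ, idV']

set_option maxHeartbeats 2000000 in
/-- iteration-complexity of the proximal subgradient method with stepsize
`λ = ε̄/(16M²)`: for every `k ≥ 256 M² d₀²/ε̄²`, the primal-dual gap is at most `ε̄`. -/
theorem stmt16 {n : ℕ} (f h : EuclideanSpace ℝ (Fin n) → ℝ)
    (domf domh : Set (EuclideanSpace ℝ (Fin n)))
    (hdom : domh ⊆ domf)
    (hfconv : ConvexOn ℝ domf f) (hflsc : LowerSemicontinuousOn f domf)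
    (hhconv : ConvexOn ℝ domh h) (hhlsc : LowerSemicontinuousOn h domh)
    (f' : EuclideanSpace ℝ (Fin n) → EuclideanSpace ℝ (Fin n)) (M : ℝ) (hM : 0 < M)
    (hsubgrad : ∀ x ∈ domh, ∀ y ∈ domf, f y ≥ f x + ⟪f' x, y - x⟫)
    (hMbound : ∀ x ∈ domh, ‖f' x‖ ≤ M)
    (d₀ eps lam : ℝ) (hd₀ : 0 < d₀) (heps : 0 < eps)
    (hlamdef : lam = eps / (16 * M ^ 2))
    (xh s : ℕ → EuclideanSpace ℝ (Fin n))
    (hxh0 : xh 0 ∈ domh)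
    (hball : domh ⊆ Metric.closedBall (xh 0) (4 * d₀))
    (hs : ∀ k, 1 ≤ k → s k = f' (xh (k - 1)))
    (hxhmem : ∀ k, 1 ≤ k → xh k ∈ domh)
    (hxhmin : ∀ k, 1 ≤ k → ∀ u ∈ domh,
      (f (xh (k - 1)) + ⟪f' (xh (k - 1)), xh k - xh (k - 1)⟫) + h (xh k)
          + ‖xh k - xh (k - 1)‖ ^ 2 / (2 * lam)
        ≤ (f (xh (k - 1)) + ⟪f' (xh (k - 1)), u - xh (k - 1)⟫) + h u
          + ‖u - xh (k - 1)‖ ^ 2 / (2 * lam)) :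
    ∀ k : ℕ, 256 * M ^ 2 * d₀ ^ 2 / eps ^ 2 ≤ (k : ℝ) →
      ((f ((k : ℝ)⁻¹ • ∑ i ∈ Finset.Icc 1 k, xh i)
          + h ((k : ℝ)⁻¹ • ∑ i ∈ Finset.Icc 1 k, xh i) : ℝ) : EReal)
          + fconj domf f ((k : ℝ)⁻¹ • ∑ i ∈ Finset.Icc 1 k, s i)
          + fconj domh h (-((k : ℝ)⁻¹ • ∑ i ∈ Finset.Icc 1 k, s i))
        ≤ ((eps : ℝ) : EReal) := by
  intro k hk
  have hM2 : (0:ℝ) < M ^ 2 := by positivity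
  have hlam : 0 < lam := by rw [hlamdef]; positivity
  have hL : (0:ℝ) < 2 * lam := by linarith
  have hkpos : (0:ℝ) < (k:ℝ) := lt_of_lt_of_le (by positivity) hk
  have hk1 : 1 ≤ k := Nat.one_le_iff_ne_zero.mpr (by
    rintro rfl; simp at hkpos)
  have hkne : ((k:ℝ)) ≠ 0 := ne_of_gt hkpos
  have hcard : (Finset.Icc 1 k).card = k := by rw [Nat.card_Icc]; omega
  set xb := (k : ℝ)⁻¹ • ∑ i ∈ Finset.Icc 1 k, xh i with hxb
  set sb := (k : ℝ)⁻¹ • ∑ i ∈ Finset.Icc 1 k, s i with hsb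
  have hmem : ∀ i ∈ Finset.Icc 1 k, xh i ∈ domh :=
    fun i hi => hxhmem i (Finset.mem_Icc.mp hi).1
  have hprev : ∀ i, 1 ≤ i → xh (i - 1) ∈ domh := by
    intro i hi
    rcases Nat.lt_or_ge i 2 with h2 | h2
    · interval_cases i; simpa using hxh0
    · exact hxhmem (i - 1) (by omega)
  -- Jensen
  have hw : ∑ _i ∈ Finset.Icc 1 k, (k:ℝ)⁻¹ = 1 := by
    rw [Finset.sum_const, hcard, nsmul_eq_mul, mul_inv_cancel₀ hkne]
  have hfh : ConvexOn ℝ domh (fun u => f u + h u) := (hfconv.subset hdom hhconv.1).add hhconv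
  have jensen : f xb + h xb ≤ (k:ℝ)⁻¹ * ∑ i ∈ Finset.Icc 1 k, (f (xh i) + h (xh i)) := by
    have := hfh.map_sum_le (fun i _ => by positivity : ∀ i ∈ Finset.Icc 1 k, (0:ℝ) ≤ (k:ℝ)⁻¹)
      hw hmem
    rw [hxb, Finset.smul_sum]
    simpa [smul_eq_mul, Finset.mul_sum] using this
  -- average inner products
  have hinner : ∀ u, ⟪sb, u⟫ = (k:ℝ)⁻¹ * ∑ i ∈ Finset.Icc 1 k, ⟪s i, u⟫ := by
    intro u
    rw [hsb, real_inner_smul_left, sum_inner]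
  -- per-iteration inequality
  have key : ∀ i ∈ Finset.Icc 1 k, ∀ v ∈ domh,
      (f (xh i) + h (xh i)) + (⟪s i, xh (i - 1)⟫ - f (xh (i - 1))) - (⟪s i, v⟫ + h v)
        ≤ eps / 8 + (‖v - xh (i - 1)‖ ^ 2 - ‖v - xh i‖ ^ 2) / (2 * lam) := by
    intro i hi v hv
    obtain ⟨hi1, hik⟩ := Finset.mem_Icc.mp hi
    have hsi : s i = f' (xh (i - 1)) := hs i hi1
    have hprev_i := hprev i hi1
    have hxi := hxhmem i hi1
    have hmin : ∀ u ∈ domh, ⟪s i, xh i⟫ + h (xh i) + ‖xh i - xh (i - 1)‖ ^ 2 / (2 * lam)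
        ≤ ⟪s i, u⟫ + h u + ‖u - xh (i - 1)‖ ^ 2 / (2 * lam) := by
      intro u hu
      have hmm := hxhmin i hi1 u hu
      rw [← hsi] at hmm
      simp only [inner_sub_right] at hmm
      linarith
    have h3 := threePoint hhconv hlam (s i) (xh (i - 1)) (xh i) hxi hmin v hv
    have hA : f (xh i) - f (xh (i - 1)) - ⟪s i, xh i - xh (i - 1)⟫
        ≤ 2 * M * ‖xh i - xh (i - 1)‖ := by
      have h1 := hsubgrad (xh i) hxi (xh (i - 1)) (hdom hprev_i)
      have h2 : |⟪f' (xh i), xh (i - 1) - xh i⟫| ≤ M * ‖xh i - xh (i - 1)‖ := by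
        calc |⟪f' (xh i), xh (i - 1) - xh i⟫| ≤ ‖f' (xh i)‖ * ‖xh (i - 1) - xh i‖ :=
              abs_real_inner_le_norm _ _
          _ ≤ M * ‖xh i - xh (i - 1)‖ := by
              rw [norm_sub_rev]
              exact mul_le_mul_of_nonneg_right (hMbound _ hxi) (norm_nonneg _)
      have h4 : |⟪s i, xh i - xh (i - 1)⟫| ≤ M * ‖xh i - xh (i - 1)‖ := by
        rw [hsi]
        calc |⟪f' (xh (i - 1)), xh i - xh (i - 1)⟫| ≤ ‖f' (xh (i - 1))‖ * ‖xh i - xh (i - 1)‖ :=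
              abs_real_inner_le_norm _ _
          _ ≤ M * ‖xh i - xh (i - 1)‖ :=
              mul_le_mul_of_nonneg_right (hMbound _ hprev_i) (norm_nonneg _)
      have h2' := abs_le.mp h2
      have h4' := abs_le.mp h4
      linarith [h1, h2'.1, h4'.1]
    have hquad : 2 * M * ‖xh i - xh (i - 1)‖ - ‖xh i - xh (i - 1)‖ ^ 2 / (2 * lam)
        ≤ eps / 8 := by
      have heq : 2 * lam * M ^ 2 = eps / 8 := by
        rw [hlamdef]; field_simp; ring
      have hdiv : 2 * M * ‖xh i - xh (i - 1)‖ - 2 * lam * M ^ 2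
          ≤ ‖xh i - xh (i - 1)‖ ^ 2 / (2 * lam) := by
        rw [le_div_iff₀ hL]
        nlinarith [sq_nonneg (‖xh i - xh (i - 1)‖ - 2 * lam * M)]
      linarith
    have hsplit : (‖v - xh (i - 1)‖ ^ 2 - ‖v - xh i‖ ^ 2) / (2 * lam)
        = ‖v - xh (i - 1)‖ ^ 2 / (2 * lam) - ‖v - xh i‖ ^ 2 / (2 * lam) := sub_div _ _ _
    simp only [inner_sub_right] at hA
    linarith [hA, hquad, h3, hsplit]
  -- telescoping
  have tel : ∀ v : EuclideanSpace ℝ (Fin n),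
      ∑ i ∈ Finset.Icc 1 k, (‖v - xh (i - 1)‖ ^ 2 - ‖v - xh i‖ ^ 2)
        = ‖v - xh 0‖ ^ 2 - ‖v - xh k‖ ^ 2 := by
    intro v
    rw [← Finset.Ico_add_one_right_eq_Icc, Finset.sum_Ico_eq_sum_range]
    rw [← Finset.sum_range_sub' (fun j => ‖v - xh j‖ ^ 2) k]
    apply Finset.sum_congr (by simp)
    intro i _
    have e1 : 1 + i - 1 = i := by omega
    have e2 : 1 + i = i + 1 := by omega
    rw [e1, e2]
  -- main real inequality for each v ∈ domh
  set B₁ := (k:ℝ)⁻¹ * ∑ i ∈ Finset.Icc 1 k, (⟪s i, xh (i - 1)⟫ - f (xh (i - 1))) with hB₁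
  have hstep : (k:ℝ)⁻¹ * (16 * d₀ ^ 2 / (2 * lam)) ≤ eps / 2 := by
    have hk' : 256 * M ^ 2 * d₀ ^ 2 ≤ (k:ℝ) * eps ^ 2 := by
      rw [div_le_iff₀ (by positivity : (0:ℝ) < eps ^ 2)] at hk
      linarith
    rw [hlamdef, inv_mul_le_iff₀ hkpos]
    have e : 16 * d₀ ^ 2 / (2 * (eps / (16 * M ^ 2))) = 128 * M ^ 2 * d₀ ^ 2 / eps := by
      field_simp; ring
    rw [e, div_le_iff₀ heps]
    nlinarith [hk']
  have main : ∀ v ∈ domh, (f xb + h xb) + B₁ + (⟪-sb, v⟫ - h v) ≤ eps := by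
    intro v hv
    have hsum := Finset.sum_le_sum (fun i hi => key i hi v hv)
    simp only [Finset.sum_add_distrib, Finset.sum_sub_distrib, Finset.sum_const, hcard,
      nsmul_eq_mul, ← Finset.sum_div, tel v] at hsum
    -- hsum : SP + SQ - (SS + k * h v) ≤ k * (eps/8) + (‖v-xh 0‖² - ‖v-xh k‖²)/(2λ)
    have hD : ‖v - xh 0‖ ^ 2 - ‖v - xh k‖ ^ 2 ≤ 16 * d₀ ^ 2 := by
      have hb : ‖v - xh 0‖ ≤ 4 * d₀ := by
        have := hball hv
        rw [Metric.mem_closedBall, dist_eq_norm] at this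
        exact this
      nlinarith [sq_nonneg (‖v - xh k‖), norm_nonneg (v - xh 0)]
    have hDdiv : (‖v - xh 0‖ ^ 2 - ‖v - xh k‖ ^ 2) / (2 * lam) ≤ 16 * d₀ ^ 2 / (2 * lam) :=
      (div_le_div_iff_of_pos_right hL).mpr hD
    have hsum2 : (k:ℝ)⁻¹ * ((∑ i ∈ Finset.Icc 1 k, f (xh i)) + (∑ i ∈ Finset.Icc 1 k, h (xh i))
          + ((∑ i ∈ Finset.Icc 1 k, ⟪s i, xh (i - 1)⟫) - (∑ i ∈ Finset.Icc 1 k, f (xh (i - 1))))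
          - ((∑ i ∈ Finset.Icc 1 k, ⟪s i, v⟫) + (k:ℝ) * h v))
        ≤ (k:ℝ)⁻¹ * ((k:ℝ) * (eps / 8) + 16 * d₀ ^ 2 / (2 * lam)) := by
      apply mul_le_mul_of_nonneg_left _ (by positivity)
      linarith [hsum, hDdiv]
    have e1 : (k:ℝ)⁻¹ * ((k:ℝ) * (eps / 8) + 16 * d₀ ^ 2 / (2 * lam))
        = eps / 8 + (k:ℝ)⁻¹ * (16 * d₀ ^ 2 / (2 * lam)) := by
      field_simp
    have e2 : (k:ℝ)⁻¹ * ((∑ i ∈ Finset.Icc 1 k, f (xh i)) + (∑ i ∈ Finset.Icc 1 k, h (xh i))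
          + ((∑ i ∈ Finset.Icc 1 k, ⟪s i, xh (i - 1)⟫) - (∑ i ∈ Finset.Icc 1 k, f (xh (i - 1))))
          - ((∑ i ∈ Finset.Icc 1 k, ⟪s i, v⟫) + (k:ℝ) * h v))
        = (k:ℝ)⁻¹ * (∑ i ∈ Finset.Icc 1 k, (f (xh i) + h (xh i))) + B₁
          - (k:ℝ)⁻¹ * (∑ i ∈ Finset.Icc 1 k, ⟪s i, v⟫) - h v := by
      rw [hB₁, Finset.sum_add_distrib, Finset.sum_sub_distrib]; field_simp; ring
    have hinv : ⟪-sb, v⟫ = -((k:ℝ)⁻¹ * ∑ i ∈ Finset.Icc 1 k, ⟪s i, v⟫) := by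
      rw [inner_neg_left, hinner v]
    rw [e2, e1] at hsum2
    rw [hinv]
    linarith [jensen, hsum2, hstep, heps]
  -- conjugate bounds
  have hconjf : fconj domf f sb ≤ ((B₁ : ℝ) : EReal) := by
    apply iSup₂_le
    intro u hu
    rw [EReal.coe_le_coe_iff]
    have each : ∀ i ∈ Finset.Icc 1 k,
        ⟪s i, u⟫ - f u ≤ ⟪s i, xh (i - 1)⟫ - f (xh (i - 1)) := by
      intro i hi
      have hi1 := (Finset.mem_Icc.mp hi).1
      have hsg := hsubgrad (xh (i - 1)) (hprev i hi1) u hu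
      rw [← hs i hi1] at hsg
      simp only [inner_sub_right] at hsg
      linarith
    have hsum := Finset.sum_le_sum each
    have e3 : ⟪sb, u⟫ - f u = (k:ℝ)⁻¹ * ∑ i ∈ Finset.Icc 1 k, (⟪s i, u⟫ - f u) := by
      rw [Finset.sum_sub_distrib, Finset.sum_const, hcard, nsmul_eq_mul, hinner u]
      field_simp
    rw [e3, hB₁]
    exact mul_le_mul_of_nonneg_left hsum (by positivity)
  have hconjh : fconj domh h (-sb) ≤ ((eps - (f xb + h xb) - B₁ : ℝ) : EReal) := by
    apply iSup₂_le
    intro v hv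
    rw [EReal.coe_le_coe_iff]
    linarith [main v hv]
  calc ((f xb + h xb : ℝ) : EReal) + fconj domf f sb + fconj domh h (-sb)
      ≤ ((f xb + h xb : ℝ) : EReal) + ((B₁ : ℝ) : EReal)
          + ((eps - (f xb + h xb) - B₁ : ℝ) : EReal) :=
        add_le_add (add_le_add le_rfl hconjf) hconjh
    _ = ((eps : ℝ) : EReal) := by
        rw [← EReal.coe_add, ← EReal.coe_add]
        norm_num
end
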